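/- arXiv:1509.05707 — 7 statements merged into one kernel-verified Lean document; each statement's English description precedes it below -/
import Mathlib

section
/- Let F be a finite field of characteristic p, let f ∈ F[x_1,…,x_d] be a reduced polynomial (every exponent occurring in f is less than |F|) with f(0) = 0, let α : F^d → F be its evaluation function, and let n ≥ 1. Then Δ^n α is a symmetric n-linear form (F-linear in each argument) if and only if every monomial of f has p-degree at most n and every monomial of f whose p-degree equals n is totally reduced (all of its exponents are less than p). -/
open MvPolynomial Finset Function

/-- The `n`-th defect of a function `α : V → F`:
`Δ^n α(u_1,…,u_n) = Σ_{∅ ≠ S ⊆ {1,…,n}} (−1)^{n−|S|} α(Σ_{i∈S} u_i)`. -/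
def fnDefect {F V : Type*} [Field F] [AddCommGroup V] (α : V → F) (n : ℕ)
    (u : Fin n → V) : F :=
  ∑ S ∈ Finset.univ.powerset.filter (fun S : Finset (Fin n) => S.Nonempty),
    (-1 : F) ^ (n - S.card) * α (∑ i ∈ S, u i)

/-- The `p`-weight of a natural number: the sum of its base-`p` digits. -/
def pWeight (p t : ℕ) : ℕ := if p = 0 then t else (Nat.digits p t).sum

namespace Defect6

/-! ### Number-theoretic lemmas about `pWeight` and multinomial coefficients -/

section NT

variable {p : ℕ}

lemma pWeight_def (hp : p.Prime) (t : ℕ) : pWeight p t = (Nat.digits p t).sum := by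
  rw [pWeight, if_neg hp.pos.ne']

@[simp] lemma pWeight_zero : pWeight p 0 = 0 := by
  rcases eq_or_ne p 0 with h | h
  · simp [pWeight, h]
  · simp [pWeight, h]

lemma pWeight_rec (hp : p.Prime) (t : ℕ) :
    pWeight p t = t % p + pWeight p (t / p) := by
  rcases eq_or_ne t 0 with rfl | ht
  · simp
  · rw [pWeight_def hp, pWeight_def hp, Nat.digits_def' hp.one_lt (Nat.pos_of_ne_zero ht),
      List.sum_cons]

lemma pWeight_eq_zero (hp : p.Prime) {t : ℕ} : pWeight p t = 0 ↔ t = 0 := by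
  constructor
  · intro h
    induction t using Nat.strong_induction_on with
    | _ t ih =>
      by_contra ht
      rw [pWeight_rec hp] at h
      have h1 : t % p = 0 := by omega
      have h2 : pWeight p (t / p) = 0 := by omega
      have hlt : t / p < t := Nat.div_lt_self (Nat.pos_of_ne_zero ht) hp.one_lt
      have h4 := Nat.mod_add_div t p
      rw [ih _ hlt h2, Nat.mul_zero] at h4
      omega
  · rintro rfl; simp

lemma pWeight_le_self (hp : p.Prime) (t : ℕ) : pWeight p t ≤ t := by
  induction t using Nat.strong_induction_on with
  | _ t ih =>
    rcases eq_or_ne t 0 with rfl | ht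
    · simp
    · rw [pWeight_rec hp]
      have hlt : t / p < t := Nat.div_lt_self (Nat.pos_of_ne_zero ht) hp.one_lt
      have h1 := ih _ hlt
      have h2 : t % p + p * (t / p) = t := Nat.mod_add_div t p
      have h3 : t / p ≤ p * (t / p) := Nat.le_mul_of_pos_left _ hp.pos
      omega

lemma pWeight_pow (hp : p.Prime) (a : ℕ) : pWeight p (p ^ a) = 1 := by
  induction a with
  | zero =>
    rw [pow_zero, pWeight_rec hp, Nat.mod_eq_of_lt hp.one_lt, Nat.div_eq_of_lt hp.one_lt]
    simp
  | succ a ih =>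
    rw [pWeight_rec hp, pow_succ, Nat.mul_mod_left, Nat.mul_div_cancel _ hp.pos]
    simpa using ih

lemma pWeight_eq_one (hp : p.Prime) {t : ℕ} (h : pWeight p t = 1) : ∃ a, t = p ^ a := by
  induction t using Nat.strong_induction_on with
  | _ t ih =>
    have ht : t ≠ 0 := by
      rintro rfl; simp at h
    rw [pWeight_rec hp t] at h
    rcases Nat.lt_or_ge (t % p) 1 with h1 | h1
    · have h2 : t % p = 0 := by omega
      have h3 : pWeight p (t / p) = 1 := by omega
      have hlt : t / p < t := Nat.div_lt_self (Nat.pos_of_ne_zero ht) hp.one_lt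
      obtain ⟨a, ha⟩ := ih _ hlt h3
      refine ⟨a + 1, ?_⟩
      have hmd := Nat.mod_add_div t p
      rw [h2, ha] at hmd
      rw [pow_succ, mul_comm]
      omega
    · have h2 : t % p = 1 := by omega
      have h3 : pWeight p (t / p) = 0 := by omega
      have h4 : t / p = 0 := (pWeight_eq_zero hp).mp h3
      refine ⟨0, ?_⟩
      have hmd := Nat.mod_add_div t p
      rw [h2, h4] at hmd
      rw [pow_zero]
      omega

lemma pWeight_lt_p (hp : p.Prime) {t : ℕ} (h : t < p) : pWeight p t = t := by
  rw [pWeight_rec hp, Nat.mod_eq_of_lt h, Nat.div_eq_of_lt h]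
  simp

/-- The key valuation identity for multinomial coefficients (Legendre). -/
lemma multinomial_key (hp : p.Prime) {ι : Type*} (s : Finset ι) (g : ι → ℕ) :
    (∑ i ∈ s, (pWeight p (g i) : ℤ))
      = (pWeight p (∑ i ∈ s, g i) : ℤ)
        + ((p : ℤ) - 1) * padicValNat p (Nat.multinomial s g) := by
  haveI := Fact.mk hp
  have hfac : ∀ n : ℕ, ((p : ℤ) - 1) * padicValNat p (Nat.factorial n)
      = (n : ℤ) - pWeight p n := by
    intro n
    have h1 := sub_one_mul_padicValNat_factorial (p := p) n
    have h2 : (Nat.digits p n).sum ≤ n := by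
      rw [← pWeight_def hp]; exact pWeight_le_self hp n
    have h3 : pWeight p n = (Nat.digits p n).sum := pWeight_def hp n
    have hp1 : 1 ≤ p := hp.pos
    have h4 := congrArg (fun x : ℕ => (x : ℤ)) h1
    simp only [Nat.cast_mul, Nat.cast_sub hp1, Nat.cast_sub h2, Nat.cast_one] at h4
    rw [h3]
    linarith [h4]
  have hprodne : ∀ i ∈ s, Nat.factorial (g i) ≠ 0 := fun i _ => (Nat.factorial_pos _).ne'
  have hPne : (∏ i ∈ s, Nat.factorial (g i)) ≠ 0 := Finset.prod_ne_zero_iff.mpr hprodne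
  have hMne : Nat.multinomial s g ≠ 0 := (Nat.multinomial_pos s g).ne'
  have hval : (∏ i ∈ s, Nat.factorial (g i)).factorization p
        + (Nat.multinomial s g).factorization p
      = (Nat.factorial (∑ i ∈ s, g i)).factorization p := by
    have h := congrArg (fun n : ℕ => n.factorization p) (Nat.multinomial_spec s g)
    simpa [Nat.factorization_mul hPne hMne] using h
  have hprodval : (∏ i ∈ s, Nat.factorial (g i)).factorization p
      = ∑ i ∈ s, (Nat.factorial (g i)).factorization p := by
    rw [Nat.factorization_prod hprodne]
    simp [Finset.sum_apply']
  have hZ : (∑ i ∈ s, (padicValNat p (Nat.factorial (g i)) : ℤ))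
        + (padicValNat p (Nat.multinomial s g) : ℤ)
      = (padicValNat p (Nat.factorial (∑ i ∈ s, g i)) : ℤ) := by
    have h := hval
    rw [hprodval] at h
    have h' := congrArg (fun x : ℕ => (x : ℤ)) h
    push_cast at h'
    simpa [Nat.factorization_def _ hp] using h'
  have hmul := congrArg (fun x : ℤ => ((p : ℤ) - 1) * x) hZ
  simp only [mul_add, Finset.mul_sum] at hmul
  rw [hfac] at hmul
  have hmul2 : (∑ i ∈ s, ((g i : ℤ) - pWeight p (g i)))
      + ((p : ℤ) - 1) * padicValNat p (Nat.multinomial s g)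
      = ((∑ i ∈ s, g i : ℕ) : ℤ) - pWeight p (∑ i ∈ s, g i) := by
    rw [← hmul]
    congr 1
    exact Finset.sum_congr rfl fun i _ => (hfac (g i)).symm
  rw [Finset.sum_sub_distrib] at hmul2
  have hcast : ((∑ i ∈ s, g i : ℕ) : ℤ) = ∑ i ∈ s, (g i : ℤ) := by push_cast; ring
  rw [hcast] at hmul2
  linarith [hmul2]

lemma pWeight_sum_le (hp : p.Prime) {ι : Type*} (s : Finset ι) (g : ι → ℕ) :
    pWeight p (∑ i ∈ s, g i) ≤ ∑ i ∈ s, pWeight p (g i) := by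
  have hk := multinomial_key hp s g
  have h0 : (0 : ℤ) ≤ ((p : ℤ) - 1) * padicValNat p (Nat.multinomial s g) := by
    have h1 : (1 : ℤ) ≤ p := by exact_mod_cast hp.pos
    have h2 : (0 : ℤ) ≤ padicValNat p (Nat.multinomial s g) := by positivity
    nlinarith
  have h : (pWeight p (∑ i ∈ s, g i) : ℤ) ≤ ((∑ i ∈ s, pWeight p (g i) : ℕ) : ℤ) := by
    rw [Nat.cast_sum]
    linarith [hk]
  exact_mod_cast h

section Cast
variable {F : Type*} [Field F] [CharP F p]

lemma multinomial_cast_ne_zero (hp : p.Prime) {ι : Type*} (s : Finset ι) (g : ι → ℕ)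
    (h : ∑ i ∈ s, pWeight p (g i) = pWeight p (∑ i ∈ s, g i)) :
    (Nat.multinomial s g : F) ≠ 0 := by
  rw [Ne, CharP.cast_eq_zero_iff F p]
  intro hdvd
  rw [hp.dvd_iff_one_le_factorization (Nat.multinomial_pos s g).ne',
    Nat.factorization_def _ hp] at hdvd
  have hk := multinomial_key hp s g
  have hh : (∑ i ∈ s, (pWeight p (g i) : ℤ)) = (pWeight p (∑ i ∈ s, g i) : ℤ) := by
    rw [← Nat.cast_sum, h]
  rw [hh] at hk
  have h2 : (2 : ℤ) ≤ p := by exact_mod_cast hp.two_le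
  have h3 : (1 : ℤ) ≤ padicValNat p (Nat.multinomial s g) := by exact_mod_cast hdvd
  nlinarith

lemma multinomial_cast_eq_zero (hp : p.Prime) {ι : Type*} (s : Finset ι) (g : ι → ℕ)
    (h : ∑ i ∈ s, pWeight p (g i) ≠ pWeight p (∑ i ∈ s, g i)) :
    (Nat.multinomial s g : F) = 0 := by
  rw [CharP.cast_eq_zero_iff F p]
  rw [hp.dvd_iff_one_le_factorization (Nat.multinomial_pos s g).ne',
    Nat.factorization_def _ hp]
  have hk := multinomial_key hp s g
  have hle := pWeight_sum_le hp s g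
  have hlt : pWeight p (∑ i ∈ s, g i) < ∑ i ∈ s, pWeight p (g i) := lt_of_le_of_ne hle (by omega)
  have h2 : (2 : ℤ) ≤ p := by exact_mod_cast hp.two_le
  by_contra hv
  have hv0 : padicValNat p (Nat.multinomial s g) = 0 := by omega
  rw [hv0] at hk
  have hcast : (∑ i ∈ s, (pWeight p (g i) : ℤ)) = ((∑ i ∈ s, pWeight p (g i) : ℕ) : ℤ) := by
    rw [Nat.cast_sum]
  rw [hcast] at hk
  simp only [Nat.cast_zero, mul_zero, add_zero] at hk
  have : (∑ i ∈ s, pWeight p (g i)) = pWeight p (∑ i ∈ s, g i) := by exact_mod_cast hk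
  omega

end Cast

/-! ### Atoms: peeling off a power of `p` -/

lemma exists_atom (hp : p.Prime) : ∀ t : ℕ, t ≠ 0 →
    ∃ a t', t = p ^ a + t' ∧ pWeight p t = pWeight p t' + 1 := by
  intro t
  induction t using Nat.strong_induction_on with
  | _ t ih =>
    intro ht
    rcases eq_or_ne (t % p) 0 with h0 | h0
    · have hmd := Nat.mod_add_div t p
      have hsne : t / p ≠ 0 := by
        intro hc
        rw [hc, Nat.mul_zero] at hmd
        omega
      have hlt : t / p < t := Nat.div_lt_self (Nat.pos_of_ne_zero ht) hp.one_lt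
      obtain ⟨a, s', hs', hw⟩ := ih _ hlt hsne
      have hts : t = p * (t / p) := by omega
      refine ⟨a + 1, p * s', ?_, ?_⟩
      · rw [hts, hs', pow_succ, mul_comm (p ^ a) p]
        ring
      · have e1 : pWeight p t = pWeight p (t / p) := by
          rw [pWeight_rec hp t, h0]
          simp
        have e2 : pWeight p (p * s') = pWeight p s' := by
          rw [pWeight_rec hp, Nat.mul_mod_right, Nat.mul_div_cancel_left _ hp.pos]
          simp
        rw [e1, e2, hw]
    · have hp0 : p ^ 0 = 1 := pow_zero p
      refine ⟨0, t - 1, by omega, ?_⟩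
      have h1 : 1 ≤ t % p := Nat.pos_of_ne_zero h0
      have hmp : t % p < p := Nat.mod_lt t hp.pos
      have hmd := Nat.mod_add_div t p
      have hrep : t - 1 = p * (t / p) + (t % p - 1) := by omega
      have e1 : (t - 1) % p = t % p - 1 := by
        rw [hrep, Nat.mul_add_mod]
        exact Nat.mod_eq_of_lt (by omega)
      have e2 : (t - 1) / p = t / p := by
        rw [hrep, Nat.mul_add_div hp.pos]
        have : (t % p - 1) / p = 0 := Nat.div_eq_of_lt (by omega)
        omega
      rw [pWeight_rec hp t, pWeight_rec hp (t - 1), e1, e2]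
      omega

lemma exists_high_atom (hp : p.Prime) {t : ℕ} (ht : p ≤ t) :
    ∃ a t', 1 ≤ a ∧ t = p ^ a + t' ∧ pWeight p t = pWeight p t' + 1 := by
  have hq : t / p ≠ 0 := by
    have := Nat.div_pos ht hp.pos
    omega
  obtain ⟨b, s', hs', hw⟩ := exists_atom hp (t / p) hq
  have hmd := Nat.mod_add_div t p
  have hmp : t % p < p := Nat.mod_lt t hp.pos
  refine ⟨b + 1, p * s' + t % p, by omega, ?_, ?_⟩
  · have : p * (t / p) = p * p ^ b + p * s' := by rw [hs']; ring
    rw [pow_succ, mul_comm (p ^ b) p]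
    omega
  · have e1 : pWeight p t = t % p + pWeight p (t / p) := pWeight_rec hp t
    have hmod : (p * s' + t % p) % p = t % p := by
      rw [Nat.mul_add_mod]
      exact Nat.mod_eq_of_lt hmp
    have hdiv : (p * s' + t % p) / p = s' := by
      rw [Nat.mul_add_div hp.pos]
      have : t % p / p = 0 := Nat.div_eq_of_lt hmp
      omega
    have e2 : pWeight p (p * s' + t % p) = t % p + pWeight p s' := by
      rw [pWeight_rec hp, hmod, hdiv]
    omega

/-! ### Summation helpers -/

lemma sum_update_apply {d : ℕ} (h : ℕ → ℕ) (m : Fin d → ℕ) (j₁ : Fin d) (b : ℕ) :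
    (∑ j, h (Function.update m j₁ b j)) + h (m j₁) = (∑ j, h (m j)) + h b := by
  have e : ∀ j, h (Function.update m j₁ b j)
      = Function.update (fun j' => h (m j')) j₁ (h b) j := by
    intro j
    by_cases hj : j = j₁
    · subst hj; simp
    · simp [Function.update_of_ne hj]
  rw [Finset.sum_congr rfl fun j _ => e j,
    Finset.sum_update_of_mem (Finset.mem_univ j₁),
    ← Finset.add_sum_erase Finset.univ (fun j' => h (m j')) (Finset.mem_univ j₁),
    Finset.sdiff_singleton_eq_erase]
  ring

lemma sum_cons_apply {r d : ℕ} (h : ℕ → ℕ) (x : Fin d → ℕ) (k' : Fin r → Fin d → ℕ) (j : Fin d) :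
    (∑ i : Fin (r + 1), h ((Fin.cons x k' : Fin (r + 1) → Fin d → ℕ) i j))
      = h (x j) + ∑ i : Fin r, h (k' i j) := by
  calc (∑ i : Fin (r + 1), h ((Fin.cons x k' : Fin (r + 1) → Fin d → ℕ) i j))
      = ∑ i : Fin (r + 1),
          (Fin.cons (h (x j)) (fun i : Fin r => h (k' i j)) : Fin (r + 1) → ℕ) i :=
        Finset.sum_congr rfl fun i _ => by
          refine Fin.cases ?_ ?_ i
          · simp
          · intro i'; simp
    _ = h (x j) + ∑ i : Fin r, h (k' i j) := Fin.sum_cons _ _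

lemma sum_cons_apply_id {r d : ℕ} (x : Fin d → ℕ) (k' : Fin r → Fin d → ℕ) (j : Fin d) :
    (∑ i : Fin (r + 1), (Fin.cons x k' : Fin (r + 1) → Fin d → ℕ) i j)
      = x j + ∑ i : Fin r, k' i j :=
  sum_cons_apply (fun t => t) x k' j

/-! ### Matrix witnesses -/

lemma exists_matrix_exact (hp : p.Prime) {d : ℕ} :
    ∀ (r : ℕ) (m : Fin d → ℕ), (∑ j, pWeight p (m j)) = r →
    ∃ k : Fin r → Fin d → ℕ, (∀ j, ∑ i, k i j = m j) ∧ (∀ i, k i ≠ 0) ∧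
      (∀ j, ∑ i, pWeight p (k i j) = pWeight p (m j)) := by
  intro r
  induction r with
  | zero =>
    intro m hm
    have hz : ∀ j, m j = 0 := by
      intro j
      have := Finset.sum_eq_zero_iff.mp hm j (Finset.mem_univ j)
      exact (pWeight_eq_zero hp).mp this
    exact ⟨Fin.elim0, fun j => by simp [hz j], fun i => i.elim0, fun j => by simp [hz j]⟩
  | succ r ih =>
    intro m hm
    have hex : ∃ j, m j ≠ 0 := by
      by_contra h
      push_neg at h
      simp [h] at hm
    obtain ⟨j₁, hj₁⟩ := hex
    obtain ⟨a, t', ht', hw⟩ := exists_atom hp (m j₁) hj₁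
    have hupd := sum_update_apply (pWeight p) m j₁ t'
    have hsum' : (∑ j, pWeight p (Function.update m j₁ t' j)) = r := by omega
    obtain ⟨k', hk1, hk2, hk3⟩ := ih (Function.update m j₁ t') hsum'
    refine ⟨(Fin.cons (fun j => if j = j₁ then p ^ a else 0) k' :
        Fin (r + 1) → Fin d → ℕ), ?_, ?_, ?_⟩
    · intro j
      rw [sum_cons_apply_id]
      by_cases hj : j = j₁
      · subst hj
        rw [if_pos rfl, hk1 j, Function.update_self]
        omega
      · rw [if_neg hj, hk1 j, Function.update_of_ne hj]
        omega
    · intro i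
      refine Fin.cases ?_ ?_ i
      · rw [Fin.cons_zero]
        intro hc
        have h5 : (if j₁ = j₁ then p ^ a else 0) = 0 := congrFun hc j₁
        rw [if_pos rfl] at h5
        exact (pow_pos hp.pos a).ne' h5
      · intro i'
        rw [Fin.cons_succ]
        exact hk2 i'
    · intro j
      rw [sum_cons_apply (pWeight p)]
      by_cases hj : j = j₁
      · subst hj
        rw [if_pos rfl, hk3 j, Function.update_self, pWeight_pow hp]
        omega
      · rw [if_neg hj, hk3 j, Function.update_of_ne hj]
        simp

lemma exists_matrix_le (hp : p.Prime) {d : ℕ} :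
    ∀ (r : ℕ), 1 ≤ r → ∀ (m : Fin d → ℕ), r ≤ ∑ j, pWeight p (m j) →
    ∃ k : Fin r → Fin d → ℕ, (∀ j, ∑ i, k i j = m j) ∧ (∀ i, k i ≠ 0) ∧
      (∀ j, ∑ i, pWeight p (k i j) = pWeight p (m j)) := by
  intro r
  induction r with
  | zero => omega
  | succ r ih =>
    intro _ m hm
    rcases Nat.eq_zero_or_pos r with rfl | hr
    · have hex : ∃ j, pWeight p (m j) ≠ 0 := by
        by_contra h
        push_neg at h
        simp [h] at hm
      obtain ⟨j₁, hj₁⟩ := hex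
      refine ⟨fun _ => m, fun j => by simp, fun i => ?_, fun j => by simp⟩
      intro hc
      have h5 : m j₁ = 0 := congrFun hc j₁
      exact hj₁ (by rw [h5]; simp)
    · have hex : ∃ j, m j ≠ 0 := by
        by_contra h
        push_neg at h
        have hz : ∀ j, pWeight p (m j) = 0 := fun j => by rw [h j]; simp
        rw [Finset.sum_congr rfl fun j _ => hz j] at hm
        exact absurd hm (by simp)
      obtain ⟨j₁, hj₁⟩ := hex
      obtain ⟨a, t', ht', hw⟩ := exists_atom hp (m j₁) hj₁
      have hupd := sum_update_apply (pWeight p) m j₁ t'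
      have hsum' : r ≤ ∑ j, pWeight p (Function.update m j₁ t' j) := by omega
      obtain ⟨k', hk1, hk2, hk3⟩ := ih hr (Function.update m j₁ t') hsum'
      refine ⟨(Fin.cons (fun j => if j = j₁ then p ^ a else 0) k' :
          Fin (r + 1) → Fin d → ℕ), ?_, ?_, ?_⟩
      · intro j
        rw [sum_cons_apply_id]
        by_cases hj : j = j₁
        · subst hj
          rw [if_pos rfl, hk1 j, Function.update_self]
          omega
        · rw [if_neg hj, hk1 j, Function.update_of_ne hj]
          omega
      · intro i
        refine Fin.cases ?_ ?_ i
        · rw [Fin.cons_zero]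
          intro hc
          have h5 : (if j₁ = j₁ then p ^ a else 0) = 0 := congrFun hc j₁
          rw [if_pos rfl] at h5
          exact (pow_pos hp.pos a).ne' h5
        · intro i'
          rw [Fin.cons_succ]
          exact hk2 i'
      · intro j
        rw [sum_cons_apply (pWeight p)]
        by_cases hj : j = j₁
        · subst hj
          rw [if_pos rfl, hk3 j, Function.update_self, pWeight_pow hp]
          omega
        · rw [if_neg hj, hk3 j, Function.update_of_ne hj]
          simp

lemma exists_matrix_high (hp : p.Prime) {d n' : ℕ} (m : Fin d → ℕ) (j₀ : Fin d)
    (hm : ∑ j, pWeight p (m j) = n' + 1) (hpj : p ≤ m j₀) :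
    ∃ (k : Fin (n' + 1) → Fin d → ℕ) (a : ℕ), 1 ≤ a ∧
      (∀ j, ∑ i, k i j = m j) ∧ (∀ i, k i ≠ 0) ∧
      (∀ j, ∑ i, pWeight p (k i j) = pWeight p (m j)) ∧
      (∀ j, k 0 j = if j = j₀ then p ^ a else 0) := by
  obtain ⟨a, t', ha, ht', hw⟩ := exists_high_atom hp hpj
  have hupd := sum_update_apply (pWeight p) m j₀ t'
  have hsum' : (∑ j, pWeight p (Function.update m j₀ t' j)) = n' := by omega
  obtain ⟨k', hk1, hk2, hk3⟩ := exists_matrix_exact hp n' (Function.update m j₀ t') hsum'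
  refine ⟨(Fin.cons (fun j => if j = j₀ then p ^ a else 0) k' :
      Fin (n' + 1) → Fin d → ℕ), a, ha, ?_, ?_, ?_, ?_⟩
  · intro j
    rw [sum_cons_apply_id]
    by_cases hj : j = j₀
    · subst hj
      rw [if_pos rfl, hk1 j, Function.update_self]
      omega
    · rw [if_neg hj, hk1 j, Function.update_of_ne hj]
      omega
  · intro i
    refine Fin.cases ?_ ?_ i
    · rw [Fin.cons_zero]
      intro hc
      have h5 : (if j₀ = j₀ then p ^ a else 0) = 0 := congrFun hc j₀
      rw [if_pos rfl] at h5
      exact (pow_pos hp.pos a).ne' h5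
    · intro i'
      rw [Fin.cons_succ]
      exact hk2 i'
  · intro j
    rw [sum_cons_apply (pWeight p)]
    by_cases hj : j = j₀
    · subst hj
      rw [if_pos rfl, hk3 j, Function.update_self, pWeight_pow hp]
      omega
    · rw [if_neg hj, hk3 j, Function.update_of_ne hj]
      simp
  · intro j
    rfl

end NT

/-! ### The combinatorial sets `Kfull`, `Kred` and the master formula -/

section Master

variable {F : Type*} [Field F] {p : ℕ}

/-- All matrices with prescribed column sums and nonzero rows. -/
def Kfull (n d : ℕ) (m : Fin d → ℕ) : Finset (Fin n → Fin d → ℕ) :=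
  (Fintype.piFinset fun _ : Fin n => Fintype.piFinset fun j : Fin d =>
    Finset.range (m j + 1)).filter
    fun k => (∀ j, ∑ i, k i j = m j) ∧ ∀ i, k i ≠ 0

/-- Additionally impose that each column is a carry-free decomposition. -/
def Kred (p n d : ℕ) (m : Fin d → ℕ) : Finset (Fin n → Fin d → ℕ) :=
  (Kfull n d m).filter fun k => ∀ j, ∑ i, pWeight p (k i j) = pWeight p (m j)

/-- The coefficient attached to a matrix `k`. -/
def Ck (n d : ℕ) (k : Fin n → Fin d → ℕ) : ℕ :=
  ∏ j, Nat.multinomial Finset.univ fun i => k i j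

/-- The monomial function attached to a matrix `k`. -/
def tau (n d : ℕ) (k : Fin n → Fin d → ℕ) (u : Fin n → Fin d → F) : F :=
  ∏ i, ∏ j, u i j ^ k i j

lemma mem_Kfull {n d : ℕ} {m : Fin d → ℕ} {k : Fin n → Fin d → ℕ} :
    k ∈ Kfull n d m ↔ (∀ j, ∑ i, k i j = m j) ∧ ∀ i, k i ≠ 0 := by
  unfold Kfull
  rw [Finset.mem_filter]
  simp only [Fintype.mem_piFinset, Finset.mem_range]
  constructor
  · exact fun h => h.2
  · intro h
    refine ⟨fun i j => ?_, h⟩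
    have hle : k i j ≤ ∑ i', k i' j :=
      Finset.single_le_sum (f := fun i' => k i' j) (fun _ _ => Nat.zero_le _) (Finset.mem_univ i)
    have := h.1 j
    omega

lemma mem_Kred {n d : ℕ} {m : Fin d → ℕ} {k : Fin n → Fin d → ℕ} :
    k ∈ Kred p n d m ↔ (∀ j, ∑ i, k i j = m j) ∧ (∀ i, k i ≠ 0) ∧
      ∀ j, ∑ i, pWeight p (k i j) = pWeight p (m j) := by
  unfold Kred
  rw [Finset.mem_filter, mem_Kfull]
  tauto

lemma multinomial_extend {n : ℕ} (S : Finset (Fin n)) (c : Fin n → ℕ)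
    (hc : ∀ i, c i ≠ 0 → i ∈ S) :
    Nat.multinomial S c = Nat.multinomial Finset.univ c := by
  unfold Nat.multinomial
  rw [Finset.sum_subset (Finset.subset_univ S) (fun i _ hi => by
      by_contra hne
      exact hi (hc i hne)),
    Finset.prod_subset (Finset.subset_univ S) (fun i _ hi => by
      have hz : c i = 0 := by
        by_contra hne
        exact hi (hc i hne)
      rw [hz, Nat.factorial_zero])]

lemma neg_one_pow_sub {a t : ℕ} (ht : t ≤ a) : (-1 : F) ^ (a - t) = (-1) ^ a * (-1) ^ t := by
  have h1 : ((-1 : F) ^ t) * ((-1 : F) ^ t) = 1 := by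
    rw [← pow_add, ← two_mul, pow_mul]
    norm_num
  calc (-1 : F) ^ (a - t) = (-1 : F) ^ (a - t) * (((-1 : F) ^ t) * ((-1 : F) ^ t)) := by
        rw [h1, mul_one]
    _ = ((-1 : F) ^ (a - t) * (-1 : F) ^ t) * (-1 : F) ^ t := by ring
    _ = (-1 : F) ^ a * (-1 : F) ^ t := by rw [← pow_add, Nat.sub_add_cancel ht]

lemma sum_powerset_neg_one_pow_card_field {n : ℕ} (x : Finset (Fin n)) :
    (∑ T ∈ x.powerset, (-1 : F) ^ T.card) = if x = ∅ then 1 else 0 := by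
  have h := Finset.sum_powerset_neg_one_pow_card (α := Fin n) (x := x)
  have h2 := congrArg (fun z : ℤ => (z : F)) h
  push_cast at h2
  rw [h2]

lemma signsum {n : ℕ} (R : Finset (Fin n)) :
    (∑ S ∈ (Finset.univ : Finset (Fin n)).powerset,
        if R ⊆ S then (-1 : F) ^ (n - S.card) else 0)
      = if R = Finset.univ then 1 else 0 := by
  classical
  rw [← Finset.sum_filter]
  have hbij : ∑ S ∈ (Finset.univ : Finset (Fin n)).powerset.filter (fun S => R ⊆ S),
      (-1 : F) ^ (n - S.card)
      = ∑ T ∈ Rᶜ.powerset, (-1 : F) ^ (n - (R ∪ T).card) := by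
    refine Finset.sum_nbij' (fun S => S \ R) (fun T => R ∪ T) ?_ ?_ ?_ ?_ ?_
    · intro S hS
      rw [Finset.mem_filter] at hS
      rw [Finset.mem_powerset]
      intro x hx
      rw [Finset.mem_sdiff] at hx
      rw [Finset.mem_compl]
      exact hx.2
    · intro T _
      rw [Finset.mem_filter, Finset.mem_powerset]
      exact ⟨Finset.subset_univ _, Finset.subset_union_left⟩
    · intro S hS
      rw [Finset.mem_filter] at hS
      exact Finset.union_sdiff_of_subset hS.2
    · intro T hT
      rw [Finset.mem_powerset] at hT
      refine Finset.union_sdiff_cancel_left ?_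
      rw [Finset.disjoint_left]
      intro x hxR hxT
      have hmem := hT hxT
      rw [Finset.mem_compl] at hmem
      exact hmem hxR
    · intro S hS
      rw [Finset.mem_filter] at hS
      rw [Finset.union_sdiff_of_subset hS.2]
  rw [hbij]
  have hdisj : ∀ T ∈ Rᶜ.powerset, (R ∪ T).card = R.card + T.card := by
    intro T hT
    rw [Finset.mem_powerset] at hT
    refine Finset.card_union_of_disjoint ?_
    rw [Finset.disjoint_left]
    intro x hxR hxT
    have hmem := hT hxT
    rw [Finset.mem_compl] at hmem
    exact hmem hxR
  have hcompl : Rᶜ.card = n - R.card := by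
    rw [Finset.card_compl, Fintype.card_fin]
  have hRle : R.card ≤ n := by
    simpa using Finset.card_le_univ R
  have hterm : ∀ T ∈ Rᶜ.powerset, (-1 : F) ^ (n - (R ∪ T).card)
      = (-1 : F) ^ (Rᶜ.card) * (-1 : F) ^ T.card := by
    intro T hT
    rw [hdisj T hT]
    have hTle : T.card ≤ Rᶜ.card := by
      rw [Finset.mem_powerset] at hT
      exact Finset.card_le_card hT
    have heq : n - (R.card + T.card) = Rᶜ.card - T.card := by omega
    rw [heq, neg_one_pow_sub (by omega)]
  rw [Finset.sum_congr rfl hterm, ← Finset.mul_sum, sum_powerset_neg_one_pow_card_field]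
  by_cases hR : R = Finset.univ
  · rw [if_pos hR]
    have hcempty : Rᶜ = ∅ := by rw [hR, Finset.compl_univ]
    rw [if_pos hcempty, hcempty]
    simp
  · rw [if_neg hR]
    have hcne : Rᶜ ≠ ∅ := by
      intro hc
      apply hR
      have := congrArg (fun s : Finset (Fin n) => sᶜ) hc
      simpa using this
    rw [if_neg hcne, mul_zero]

/-- The master formula for a single monomial. -/
lemma defect_monomial {n d : ℕ} (m : Fin d → ℕ) (hm : ∃ j, m j ≠ 0)
    (u : Fin n → Fin d → F) :
    fnDefect (fun a => ∏ j, a j ^ m j) n u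
      = ∑ k ∈ Kfull n d m, (Ck n d k : F) * tau n d k u := by
  classical
  obtain ⟨j₁, hj₁⟩ := hm
  have hA : fnDefect (fun a => ∏ j, a j ^ m j) n u
      = ∑ S ∈ (Finset.univ : Finset (Fin n)).powerset,
          (-1 : F) ^ (n - S.card) * ∏ j, (∑ i ∈ S, u i j) ^ m j := by
    rw [fnDefect, Finset.sum_filter]
    refine Finset.sum_congr rfl fun S _ => ?_
    have harg : (∑ i ∈ S, u i) = fun j => ∑ i ∈ S, u i j := by
      funext j; exact Finset.sum_apply j S u
    by_cases hS : S.Nonempty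
    · rw [if_pos hS, harg]
    · rw [if_neg hS]
      rw [Finset.not_nonempty_iff_eq_empty] at hS
      subst hS
      have hzero : ∏ j, (∑ i ∈ (∅ : Finset (Fin n)), u i j) ^ m j = 0 := by
        refine Finset.prod_eq_zero (Finset.mem_univ j₁) ?_
        rw [Finset.sum_empty]
        exact zero_pow hj₁
      rw [hzero, mul_zero]
  set Φ : Finset (Fin d → Fin n → ℕ) :=
    Fintype.piFinset (fun j : Fin d => Finset.piAntidiag (Finset.univ : Finset (Fin n)) (m j))
    with hΦ
  have hpiS : ∀ S : Finset (Fin n),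
      Fintype.piFinset (fun j : Fin d => Finset.piAntidiag S (m j))
        = Φ.filter (fun φ => ∀ j i, φ j i ≠ 0 → i ∈ S) := by
    intro S
    ext φ
    rw [Finset.mem_filter, hΦ]
    simp only [Fintype.mem_piFinset, Finset.mem_piAntidiag]
    constructor
    · intro h
      refine ⟨fun j => ⟨?_, fun i _ => Finset.mem_univ i⟩, fun j i hne => (h j).2 i hne⟩
      rw [← Finset.sum_subset (Finset.subset_univ S) (fun i _ hi => ?_)]
      · exact (h j).1
      · by_contra hc
        exact hi ((h j).2 i hc)
    · rintro ⟨h1, h2⟩ j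
      refine ⟨?_, fun i hne => h2 j i hne⟩
      rw [Finset.sum_subset (Finset.subset_univ S) (fun i _ hi => ?_)]
      · exact (h1 j).1
      · by_contra hc
        exact hi (h2 j i hc)
  have hB : ∀ S : Finset (Fin n),
      (∏ j, (∑ i ∈ S, u i j) ^ m j)
        = ∑ φ ∈ Φ, (if (∀ j i, φ j i ≠ 0 → i ∈ S) then
            (∏ j, (Nat.multinomial Finset.univ (φ j) : F)) * ∏ j, ∏ i, u i j ^ φ j i
          else 0) := by
    intro S
    calc (∏ j, (∑ i ∈ S, u i j) ^ m j)
        = ∏ j, ∑ c ∈ Finset.piAntidiag S (m j),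
            (Nat.multinomial S c : F) * ∏ i ∈ S, u i j ^ c i :=
          Finset.prod_congr rfl fun j _ =>
            Finset.sum_pow_eq_sum_piAntidiag S (fun i => u i j) (m j)
      _ = ∑ φ ∈ Fintype.piFinset (fun j : Fin d => Finset.piAntidiag S (m j)),
            ∏ j, ((Nat.multinomial S (φ j) : F) * ∏ i ∈ S, u i j ^ φ j i) :=
          Finset.prod_univ_sum _ _
      _ = ∑ φ ∈ Φ, (if (∀ j i, φ j i ≠ 0 → i ∈ S) then
            ∏ j, ((Nat.multinomial S (φ j) : F) * ∏ i ∈ S, u i j ^ φ j i) else 0) := by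
          rw [hpiS S, Finset.sum_filter]
      _ = _ := by
          refine Finset.sum_congr rfl fun φ _ => ?_
          by_cases hc : ∀ j i, φ j i ≠ 0 → i ∈ S
          · rw [if_pos hc, if_pos hc, ← Finset.prod_mul_distrib]
            refine Finset.prod_congr rfl fun j _ => ?_
            rw [multinomial_extend S (φ j) (fun i => hc j i),
              Finset.prod_subset (Finset.subset_univ S) (fun i _ hi => ?_)]
            have hz : φ j i = 0 := by
              by_contra hne
              exact hi (hc j i hne)
            rw [hz, pow_zero]
          · rw [if_neg hc, if_neg hc]
  have hcond : ∀ (φ : Fin d → Fin n → ℕ) (S : Finset (Fin n)),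
      (∀ j i, φ j i ≠ 0 → i ∈ S)
        ↔ (Finset.univ.filter (fun i => ∃ j, φ j i ≠ 0)) ⊆ S := by
    intro φ S
    constructor
    · intro h i hi
      rw [Finset.mem_filter] at hi
      obtain ⟨j, hj⟩ := hi.2
      exact h j i hj
    · intro h j i hne
      exact h (Finset.mem_filter.mpr ⟨Finset.mem_univ i, ⟨j, hne⟩⟩)
  have hRuniv : ∀ φ : Fin d → Fin n → ℕ,
      ((Finset.univ.filter (fun i => ∃ j, φ j i ≠ 0)) = Finset.univ)
        ↔ (∀ i : Fin n, ∃ j, φ j i ≠ 0) := by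
    intro φ
    rw [Finset.filter_eq_self]
    constructor
    · intro h i
      exact h i (Finset.mem_univ i)
    · intro h i _
      exact h i
  have step0 : ∀ S : Finset (Fin n), (-1 : F) ^ (n - S.card) * ∏ j, (∑ i ∈ S, u i j) ^ m j
      = ∑ φ ∈ Φ, (if (∀ j i, φ j i ≠ 0 → i ∈ S) then (-1 : F) ^ (n - S.card) else 0)
          * ((∏ j, (Nat.multinomial Finset.univ (φ j) : F)) * ∏ j, ∏ i, u i j ^ φ j i) := by
    intro S
    rw [hB S, Finset.mul_sum]
    refine Finset.sum_congr rfl fun φ _ => ?_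
    rw [mul_ite, mul_zero, ite_mul, zero_mul]
  have step1 : fnDefect (fun a => ∏ j, a j ^ m j) n u
      = ∑ φ ∈ Φ, (∑ S ∈ (Finset.univ : Finset (Fin n)).powerset,
          if (∀ j i, φ j i ≠ 0 → i ∈ S) then (-1 : F) ^ (n - S.card) else 0)
          * ((∏ j, (Nat.multinomial Finset.univ (φ j) : F)) * ∏ j, ∏ i, u i j ^ φ j i) := by
    rw [hA, Finset.sum_congr rfl fun S _ => step0 S, Finset.sum_comm]
    refine Finset.sum_congr rfl fun φ _ => ?_
    rw [Finset.sum_mul]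
  have step2 : ∀ φ : Fin d → Fin n → ℕ,
      (∑ S ∈ (Finset.univ : Finset (Fin n)).powerset,
        if (∀ j i, φ j i ≠ 0 → i ∈ S) then (-1 : F) ^ (n - S.card) else 0)
      = if (∀ i : Fin n, ∃ j, φ j i ≠ 0) then 1 else 0 := by
    intro φ
    rw [Finset.sum_congr rfl fun S _ => if_congr (hcond φ S) rfl rfl, signsum,
      if_congr (hRuniv φ) rfl rfl]
  rw [step1, Finset.sum_congr rfl fun φ _ => by rw [step2 φ]]
  rw [show (∑ φ ∈ Φ, (if (∀ i : Fin n, ∃ j, φ j i ≠ 0) then (1 : F) else 0)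
        * ((∏ j, (Nat.multinomial Finset.univ (φ j) : F)) * ∏ j, ∏ i, u i j ^ φ j i))
      = ∑ φ ∈ Φ.filter (fun φ => ∀ i : Fin n, ∃ j, φ j i ≠ 0),
          ((∏ j, (Nat.multinomial Finset.univ (φ j) : F)) * ∏ j, ∏ i, u i j ^ φ j i) from by
    rw [Finset.sum_filter]
    refine Finset.sum_congr rfl fun φ _ => ?_
    by_cases h : ∀ i : Fin n, ∃ j, φ j i ≠ 0
    · rw [if_pos h, if_pos h, one_mul]
    · rw [if_neg h, if_neg h, zero_mul]]
  refine Finset.sum_nbij' (fun φ => fun i j => φ j i) (fun k => fun j i => k i j) ?_ ?_ ?_ ?_ ?_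
  · intro φ hφ
    rw [Finset.mem_filter, hΦ, Fintype.mem_piFinset] at hφ
    obtain ⟨hφ1, hφ2⟩ := hφ
    rw [mem_Kfull]
    refine ⟨fun j => (Finset.mem_piAntidiag.mp (hφ1 j)).1, fun i => ?_⟩
    obtain ⟨j, hj⟩ := hφ2 i
    intro hc
    exact hj (by simpa using congrFun hc j)
  · intro k hk
    rw [mem_Kfull] at hk
    rw [Finset.mem_filter, hΦ, Fintype.mem_piFinset]
    refine ⟨fun j => Finset.mem_piAntidiag.mpr ⟨hk.1 j, fun i _ => Finset.mem_univ i⟩,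
      fun i => ?_⟩
    obtain ⟨j, hj⟩ := Function.ne_iff.mp (hk.2 i)
    exact ⟨j, by simpa using hj⟩
  · intro φ _
    rfl
  · intro k _
    rfl
  · intro φ _
    unfold Ck tau
    rw [Nat.cast_prod]
    congr 1
    exact Finset.prod_comm

lemma sum_Kfull_eq_Kred [CharP F p] (hp : p.Prime) {n d : ℕ} (m : Fin d → ℕ)
    (u : Fin n → Fin d → F) :
    ∑ k ∈ Kfull n d m, (Ck n d k : F) * tau n d k u
      = ∑ k ∈ Kred p n d m, (Ck n d k : F) * tau n d k u := by
  unfold Kred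
  rw [Finset.sum_filter]
  refine Finset.sum_congr rfl fun k hk => ?_
  by_cases hc : ∀ j, ∑ i, pWeight p (k i j) = pWeight p (m j)
  · rw [if_pos hc]
  · rw [if_neg hc]
    push_neg at hc
    obtain ⟨j₀, hj₀⟩ := hc
    have hcol : (∑ i, k i j₀) = m j₀ := (mem_Kfull.mp hk).1 j₀
    have hzero : (Nat.multinomial Finset.univ (fun i => k i j₀) : F) = 0 :=
      multinomial_cast_eq_zero hp _ _ (by rw [hcol]; exact hj₀)
    have hCk : (Ck n d k : F) = 0 := by
      unfold Ck
      rw [Nat.cast_prod]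
      exact Finset.prod_eq_zero (Finset.mem_univ j₀) hzero
    rw [hCk, zero_mul]

lemma fnDefect_sum {V : Type*} [AddCommGroup V] {A : Type*} (s : Finset A) (g : A → V → F)
    (n : ℕ) (u : Fin n → V) :
    fnDefect (fun v => ∑ a ∈ s, g a v) n u = ∑ a ∈ s, fnDefect (g a) n u := by
  unfold fnDefect
  rw [Finset.sum_comm]
  exact Finset.sum_congr rfl fun S _ => by rw [Finset.mul_sum]

lemma fnDefect_smul {V : Type*} [AddCommGroup V] (c : F) (g : V → F) (n : ℕ) (u : Fin n → V) :
    fnDefect (fun v => c * g v) n u = c * fnDefect g n u := by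
  unfold fnDefect
  rw [Finset.mul_sum]
  exact Finset.sum_congr rfl fun S _ => by ring

/-- The master formula for the defect of a polynomial evaluation map. -/
lemma defect_eval [CharP F p] (hp : p.Prime) {d : ℕ} (f : MvPolynomial (Fin d) F)
    (h0 : MvPolynomial.constantCoeff f = 0) (n : ℕ) (u : Fin n → Fin d → F) :
    fnDefect (fun a => MvPolynomial.eval a f) n u
      = ∑ m ∈ f.support, f.coeff m *
          ∑ k ∈ Kred p n d (fun j => m j), (Ck n d k : F) * tau n d k u := by
  have hev : (fun a : Fin d → F => MvPolynomial.eval a f)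
      = fun a => ∑ m ∈ f.support, f.coeff m * ∏ j, a j ^ m j :=
    funext fun a => MvPolynomial.eval_eq' a f
  rw [hev, fnDefect_sum]
  refine Finset.sum_congr rfl fun m hm => ?_
  rw [fnDefect_smul]
  congr 1
  rw [defect_monomial (fun j => m j) ?_ u, sum_Kfull_eq_Kred hp]
  by_contra h
  push_neg at h
  have hm0 : m = 0 := Finsupp.ext fun j => h j
  rw [MvPolynomial.mem_support_iff] at hm
  apply hm
  rw [hm0]
  have := MvPolynomial.constantCoeff_eq (R := F) (σ := Fin d)
  rw [← congrFun this f]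
  exact h0

/-! ### Structure of `Kred` in low weight -/

lemma Kred_row_weights (hp : p.Prime) {n d : ℕ} {m : Fin d → ℕ} {k : Fin n → Fin d → ℕ}
    (hk : k ∈ Kred p n d m) :
    (∀ i, 1 ≤ ∑ j, pWeight p (k i j)) ∧
      (∑ i, ∑ j, pWeight p (k i j)) = ∑ j, pWeight p (m j) := by
  obtain ⟨h1, h2, h3⟩ := mem_Kred.mp hk
  constructor
  · intro i
    obtain ⟨j, hj⟩ := Function.ne_iff.mp (h2 i)
    have hj' : k i j ≠ 0 := by simpa using hj
    have hwne : pWeight p (k i j) ≠ 0 := fun hc => hj' ((pWeight_eq_zero hp).mp hc)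
    have hle : pWeight p (k i j) ≤ ∑ j', pWeight p (k i j') :=
      Finset.single_le_sum (f := fun j' => pWeight p (k i j'))
        (fun _ _ => Nat.zero_le _) (Finset.mem_univ j)
    omega
  · rw [Finset.sum_comm]
    exact Finset.sum_congr rfl fun j _ => h3 j

lemma Kred_empty (hp : p.Prime) {n d : ℕ} {m : Fin d → ℕ}
    (hlt : ∑ j, pWeight p (m j) < n) : Kred p n d m = ∅ := by
  rw [Finset.eq_empty_iff_forall_notMem]
  intro k hk
  obtain ⟨h1, h2⟩ := Kred_row_weights hp hk
  have hge : n ≤ ∑ i, ∑ j, pWeight p (k i j) := by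
    have := Finset.card_nsmul_le_sum Finset.univ
      (fun i : Fin n => ∑ j, pWeight p (k i j)) 1 (fun i _ => h1 i)
    simpa using this
  omega

lemma Kred_rows_single (hp : p.Prime) {n d : ℕ} {m : Fin d → ℕ} {k : Fin n → Fin d → ℕ}
    (hw : ∑ j, pWeight p (m j) ≤ n) (hk : k ∈ Kred p n d m) (i : Fin n) :
    ∃ j₀ a, p ^ a ≤ m j₀ ∧ ∀ j, k i j = if j = j₀ then p ^ a else 0 := by
  obtain ⟨h1low, htot⟩ := Kred_row_weights hp hk
  have hrow : ∑ j, pWeight p (k i j) = 1 := by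
    by_contra hne
    have h2 : 2 ≤ ∑ j, pWeight p (k i j) := by
      have := h1low i
      omega
    have hlt : (∑ _i' : Fin n, 1) < ∑ i', ∑ j, pWeight p (k i' j) :=
      Finset.sum_lt_sum (fun i' _ => h1low i') ⟨i, Finset.mem_univ i, by omega⟩
    simp only [Finset.sum_const, Finset.card_univ, Fintype.card_fin, smul_eq_mul, mul_one] at hlt
    omega
  have hex : ∃ j₀, pWeight p (k i j₀) ≠ 0 := by
    by_contra hno
    push_neg at hno
    simp [hno] at hrow
  obtain ⟨j₀, hj₀⟩ := hex
  have hle : pWeight p (k i j₀) ≤ ∑ j, pWeight p (k i j) :=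
    Finset.single_le_sum (f := fun j => pWeight p (k i j))
      (fun _ _ => Nat.zero_le _) (Finset.mem_univ j₀)
  have h1 : pWeight p (k i j₀) = 1 := by omega
  have hrest : ∀ j, j ≠ j₀ → pWeight p (k i j) = 0 := by
    intro j hj
    have hsplit : ∑ j', pWeight p (k i j')
        = pWeight p (k i j₀) + ∑ j' ∈ Finset.univ.erase j₀, pWeight p (k i j') :=
      (Finset.add_sum_erase _ _ (Finset.mem_univ j₀)).symm
    have hz : ∑ j' ∈ Finset.univ.erase j₀, pWeight p (k i j') = 0 := by omega
    exact Finset.sum_eq_zero_iff.mp hz j (Finset.mem_erase.mpr ⟨hj, Finset.mem_univ j⟩)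
  obtain ⟨a, ha⟩ := pWeight_eq_one hp h1
  refine ⟨j₀, a, ?_, fun j => ?_⟩
  · rw [← ha]
    have hcol := (mem_Kred.mp hk).1 j₀
    have hle2 : k i j₀ ≤ ∑ i', k i' j₀ :=
      Finset.single_le_sum (f := fun i' => k i' j₀)
        (fun _ _ => Nat.zero_le _) (Finset.mem_univ i)
    omega
  · by_cases h : j = j₀
    · rw [if_pos h, h, ← ha]
    · rw [if_neg h]
      exact (pWeight_eq_zero hp).mp (hrest j h)

/-! ### `tau` under updates -/

lemma tau_update {n d : ℕ} (k : Fin n → Fin d → ℕ) (u : Fin n → Fin d → F) (i : Fin n)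
    (z : Fin d → F) :
    tau n d k (Function.update u i z)
      = (∏ j, z j ^ k i j) * ∏ i' ∈ Finset.univ.erase i, ∏ j, u i' j ^ k i' j := by
  unfold tau
  rw [← Finset.mul_prod_erase Finset.univ _ (Finset.mem_univ i)]
  congr 1
  · rw [Function.update_self]
  · exact Finset.prod_congr rfl fun i' hi' => by
      rw [Function.update_of_ne (Finset.mem_erase.mp hi').1]

lemma tau_split {n d : ℕ} (k : Fin n → Fin d → ℕ) (u : Fin n → Fin d → F) (i : Fin n) :
    tau n d k u = (∏ j, u i j ^ k i j) * ∏ i' ∈ Finset.univ.erase i, ∏ j, u i' j ^ k i' j :=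
  (Finset.mul_prod_erase Finset.univ _ (Finset.mem_univ i)).symm

lemma tau_update_single {n d : ℕ} {k : Fin n → Fin d → ℕ} {i : Fin n} {j₀ : Fin d}
    (hk : ∀ j, k i j = if j = j₀ then 1 else 0) (u : Fin n → Fin d → F) (z : Fin d → F) :
    tau n d k (Function.update u i z)
      = z j₀ * ∏ i' ∈ Finset.univ.erase i, ∏ j, u i' j ^ k i' j := by
  rw [tau_update]
  congr 1
  calc ∏ j, z j ^ k i j = ∏ j, (if j = j₀ then z j else 1) :=
      Finset.prod_congr rfl fun j _ => by
        rw [hk j]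
        by_cases h : j = j₀ <;> simp [h]
    _ = z j₀ := by rw [Finset.prod_ite_eq' Finset.univ j₀ z, if_pos (Finset.mem_univ j₀)]

lemma tau_update_smul {n d : ℕ} (k : Fin n → Fin d → ℕ) (u : Fin n → Fin d → F) (i : Fin n)
    (c : F) :
    tau n d k (Function.update u i (c • u i)) = c ^ (∑ j, k i j) * tau n d k u := by
  rw [tau_update, tau_split k u i]
  have h : (∏ j, (c • u i) j ^ k i j) = c ^ (∑ j, k i j) * ∏ j, u i j ^ k i j := by
    rw [← Finset.prod_pow_eq_pow_sum, ← Finset.prod_mul_distrib]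
    exact Finset.prod_congr rfl fun j _ => by rw [Pi.smul_apply, smul_eq_mul, mul_pow]
  rw [h, mul_assoc]

end Master

/-! ### Permutation symmetry and the recursion for defects -/

section Defect

variable {F : Type*} [Field F] {V : Type*} [AddCommGroup V]

lemma fnDefect_perm (α : V → F) (n : ℕ) (w : Fin n → V) (σ : Equiv.Perm (Fin n)) :
    fnDefect α n (w ∘ σ) = fnDefect α n w := by
  unfold fnDefect
  refine Finset.sum_nbij' (fun S => S.image σ) (fun S => S.image σ.symm) ?_ ?_ ?_ ?_ ?_
  · intro S hS
    rw [Finset.mem_filter] at hS ⊢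
    exact ⟨Finset.mem_powerset.mpr (Finset.subset_univ _), hS.2.image σ⟩
  · intro S hS
    rw [Finset.mem_filter] at hS ⊢
    exact ⟨Finset.mem_powerset.mpr (Finset.subset_univ _), hS.2.image σ.symm⟩
  · intro S _
    show Finset.image (⇑σ.symm) (Finset.image (⇑σ) S) = S
    rw [Finset.image_image]
    simp
  · intro S _
    show Finset.image (⇑σ) (Finset.image (⇑σ.symm) S) = S
    rw [Finset.image_image]
    simp
  · intro S _
    rw [Finset.card_image_of_injective S σ.injective]
    congr 1
    rw [Finset.sum_image (fun x _ y _ h => σ.injective h)]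
    rfl

lemma fnDefect_succ (α : V → F) {n : ℕ} (i₀ : Fin n) (v : Fin n → V) (y : V) :
    fnDefect α (n + 1) (Fin.snoc v y)
      = fnDefect α n (Function.update v i₀ (v i₀ + y)) - fnDefect α n v
          - fnDefect α n (Function.update v i₀ y) := by
  classical
  have hcard : ∀ S' : Finset (Fin n), S'.card ≤ n := fun S' => by
    simpa using Finset.card_le_univ S'
  have hpre_map : ∀ S' : Finset (Fin n),
      (S'.map Fin.castSuccEmb).preimage Fin.castSucc (Fin.castSucc_injective n).injOn = S' := by
    intro S'
    ext a
    rw [Finset.mem_preimage, Finset.mem_map]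
    constructor
    · rintro ⟨b, hb, hba⟩
      have hba' : Fin.castSucc b = Fin.castSucc a := hba
      rwa [← Fin.castSucc_injective n hba']
    · intro ha
      exact ⟨a, ha, rfl⟩
  have hmap_pre : ∀ S : Finset (Fin (n + 1)), Fin.last n ∉ S →
      (S.preimage Fin.castSucc (Fin.castSucc_injective n).injOn).map Fin.castSuccEmb = S := by
    intro S hS
    ext x
    rw [Finset.mem_map]
    constructor
    · rintro ⟨b, hb, hbx⟩
      rw [Finset.mem_preimage] at hb
      have hbx' : Fin.castSucc b = x := hbx
      rwa [← hbx']
    · intro hx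
      have hne : x ≠ Fin.last n := fun h => hS (by rw [← h]; exact hx)
      obtain ⟨b, rfl⟩ := Fin.exists_castSucc_eq.mpr hne
      exact ⟨b, Finset.mem_preimage.mpr hx, rfl⟩
  have hlast_not : ∀ S' : Finset (Fin n), Fin.last n ∉ S'.map Fin.castSuccEmb := by
    intro S' h
    rw [Finset.mem_map] at h
    obtain ⟨b, _, hb⟩ := h
    have hb' : Fin.castSucc b = Fin.last n := hb
    exact (Fin.castSucc_lt_last b).ne hb'
  have hsummap : ∀ S' : Finset (Fin n),
      (∑ i ∈ S'.map Fin.castSuccEmb, (Fin.snoc v y : Fin (n + 1) → V) i) = ∑ i ∈ S', v i := by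
    intro S'
    rw [Finset.sum_map]
    refine Finset.sum_congr rfl fun i _ => ?_
    show (Fin.snoc v y : Fin (n + 1) → V) i.castSucc = v i
    rw [Fin.snoc_castSucc]
  have hsplit := Finset.sum_filter_add_sum_filter_not
    ((Finset.univ : Finset (Fin (n + 1))).powerset.filter (fun S => S.Nonempty))
    (fun S => Fin.last n ∈ S)
    (fun S => (-1 : F) ^ (n + 1 - S.card) * α (∑ i ∈ S, (Fin.snoc v y : Fin (n + 1) → V) i))
  have hA : ∑ S ∈ ((Finset.univ : Finset (Fin (n + 1))).powerset.filter
        (fun S => S.Nonempty)).filter (fun S => ¬ Fin.last n ∈ S),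
        (-1 : F) ^ (n + 1 - S.card) * α (∑ i ∈ S, (Fin.snoc v y : Fin (n + 1) → V) i)
      = - fnDefect α n v := by
    rw [fnDefect, ← Finset.sum_neg_distrib]
    refine (Finset.sum_nbij' (fun S' => S'.map Fin.castSuccEmb)
      (fun S => S.preimage Fin.castSucc (Fin.castSucc_injective n).injOn)
      ?_ ?_ ?_ ?_ ?_).symm
    · intro S' hS'
      rw [Finset.mem_filter] at hS'
      rw [Finset.mem_filter, Finset.mem_filter]
      refine ⟨⟨Finset.mem_powerset.mpr (Finset.subset_univ _), ?_⟩, hlast_not S'⟩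
      obtain ⟨x, hx⟩ := hS'.2
      exact ⟨Fin.castSuccEmb x, Finset.mem_map_of_mem _ hx⟩
    · intro S hS
      rw [Finset.mem_filter, Finset.mem_filter] at hS
      rw [Finset.mem_filter]
      refine ⟨Finset.mem_powerset.mpr (Finset.subset_univ _), ?_⟩
      obtain ⟨x, hx⟩ := hS.1.2
      have hne : x ≠ Fin.last n := fun h => hS.2 (by rw [← h]; exact hx)
      obtain ⟨b, rfl⟩ := Fin.exists_castSucc_eq.mpr hne
      exact ⟨b, Finset.mem_preimage.mpr hx⟩
    · intro S' _
      exact hpre_map S'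
    · intro S hS
      rw [Finset.mem_filter, Finset.mem_filter] at hS
      exact hmap_pre S hS.2
    · intro S' hS'
      rw [Finset.card_map, hsummap S']
      have hpow : (-1 : F) ^ (n + 1 - S'.card) = -(-1 : F) ^ (n - S'.card) := by
        have h1 : n + 1 - S'.card = (n - S'.card) + 1 := by
          have := hcard S'
          omega
        rw [h1, pow_succ]
        ring
      rw [hpow]
      ring
  have hB : ∑ S ∈ ((Finset.univ : Finset (Fin (n + 1))).powerset.filter
        (fun S => S.Nonempty)).filter (fun S => Fin.last n ∈ S),
        (-1 : F) ^ (n + 1 - S.card) * α (∑ i ∈ S, (Fin.snoc v y : Fin (n + 1) → V) i)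
      = ∑ S' ∈ (Finset.univ : Finset (Fin n)).powerset,
          (-1 : F) ^ (n - S'.card) * α (y + ∑ i ∈ S', v i) := by
    refine (Finset.sum_nbij' (fun S' => insert (Fin.last n) (S'.map Fin.castSuccEmb))
      (fun S => (S.erase (Fin.last n)).preimage Fin.castSucc (Fin.castSucc_injective n).injOn)
      ?_ ?_ ?_ ?_ ?_).symm
    · intro S' _
      rw [Finset.mem_filter, Finset.mem_filter]
      exact ⟨⟨Finset.mem_powerset.mpr (Finset.subset_univ _),
        ⟨Fin.last n, Finset.mem_insert_self _ _⟩⟩, Finset.mem_insert_self _ _⟩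
    · intro S _
      exact Finset.mem_powerset.mpr (Finset.subset_univ _)
    · intro S' _
      show ((insert (Fin.last n) (S'.map Fin.castSuccEmb)).erase (Fin.last n)).preimage
          Fin.castSucc (Fin.castSucc_injective n).injOn = S'
      rw [Finset.erase_insert (hlast_not S'), hpre_map S']
    · intro S hS
      rw [Finset.mem_filter, Finset.mem_filter] at hS
      show insert (Fin.last n) (((S.erase (Fin.last n)).preimage Fin.castSucc
          (Fin.castSucc_injective n).injOn).map Fin.castSuccEmb) = S
      rw [hmap_pre _ (Finset.notMem_erase _ _), Finset.insert_erase hS.2]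
    · intro S' _
      rw [Finset.card_insert_of_notMem (hlast_not S'), Finset.card_map,
        Finset.sum_insert (hlast_not S'), hsummap S']
      have hla : (Fin.snoc v y : Fin (n + 1) → V) (Fin.last n) = y := by simp
      rw [hla, Nat.succ_sub_succ]
  have hE : (∑ S' ∈ (Finset.univ : Finset (Fin n)).powerset,
        (-1 : F) ^ (n - S'.card) * α (y + ∑ i ∈ S', v i))
      = fnDefect α n (Function.update v i₀ (v i₀ + y))
          - fnDefect α n (Function.update v i₀ y) := by
    rw [fnDefect, fnDefect, ← Finset.sum_sub_distrib]
    have hzero : ∀ S ∈ (Finset.univ : Finset (Fin n)).powerset.filter (fun S => S.Nonempty),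
        ((-1 : F) ^ (n - S.card) * α (∑ i ∈ S, Function.update v i₀ (v i₀ + y) i)
          - (-1 : F) ^ (n - S.card) * α (∑ i ∈ S, Function.update v i₀ y i)) ≠ 0
          → i₀ ∈ S := by
      intro S _ hne
      by_contra hi₀
      apply hne
      have he : ∀ z : V, (∑ i ∈ S, Function.update v i₀ z i) = ∑ i ∈ S, v i := by
        intro z
        exact Finset.sum_congr rfl fun i hi =>
          Function.update_of_ne (fun h => hi₀ (by rw [← h]; exact hi)) _ _
      rw [he, he, sub_self]
    rw [← Finset.sum_filter_of_ne hzero]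
    have hPn : (((Finset.univ : Finset (Fin n)).powerset.filter
          (fun S => S.Nonempty)).filter (fun S => i₀ ∈ S))
        = (Finset.univ : Finset (Fin n)).powerset.filter (fun S => i₀ ∈ S) := by
      ext S
      simp only [Finset.mem_filter, Finset.mem_powerset]
      constructor
      · rintro ⟨⟨h1, _⟩, h3⟩
        exact ⟨h1, h3⟩
      · rintro ⟨h1, h3⟩
        exact ⟨⟨h1, ⟨i₀, h3⟩⟩, h3⟩
    rw [hPn]
    rw [← Finset.sum_filter_add_sum_filter_not ((Finset.univ : Finset (Fin n)).powerset)
      (fun S => i₀ ∈ S) (fun S => (-1 : F) ^ (n - S.card) * α (y + ∑ i ∈ S, v i))]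
    have hswap : (∑ S ∈ (Finset.univ : Finset (Fin n)).powerset.filter (fun S => ¬ i₀ ∈ S),
          (-1 : F) ^ (n - S.card) * α (y + ∑ i ∈ S, v i))
        = ∑ S ∈ (Finset.univ : Finset (Fin n)).powerset.filter (fun S => i₀ ∈ S),
            -((-1 : F) ^ (n - S.card) * α (y + ∑ i ∈ S.erase i₀, v i)) := by
      refine Finset.sum_nbij' (fun S => insert i₀ S) (fun S => S.erase i₀) ?_ ?_ ?_ ?_ ?_
      · intro S hS
        rw [Finset.mem_filter] at hS ⊢
        exact ⟨Finset.mem_powerset.mpr (Finset.subset_univ _), Finset.mem_insert_self _ _⟩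
      · intro S hS
        rw [Finset.mem_filter] at hS ⊢
        exact ⟨Finset.mem_powerset.mpr (Finset.subset_univ _), Finset.notMem_erase _ _⟩
      · intro S hS
        rw [Finset.mem_filter] at hS
        show (insert i₀ S).erase i₀ = S
        exact Finset.erase_insert hS.2
      · intro S hS
        rw [Finset.mem_filter] at hS
        show insert i₀ (S.erase i₀) = S
        exact Finset.insert_erase hS.2
      · intro S hS
        rw [Finset.mem_filter] at hS
        have hci : (insert i₀ S).card = S.card + 1 := Finset.card_insert_of_notMem hS.2
        have h1 : S.card + 1 ≤ n := by
          have h2 := hcard (insert i₀ S)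
          omega
        have hpow : (-1 : F) ^ (n - S.card) = -((-1 : F) ^ (n - (S.card + 1))) := by
          have h2 : n - S.card = (n - (S.card + 1)) + 1 := by omega
          rw [h2, pow_succ]
          ring
        rw [hci, Finset.erase_insert hS.2, hpow]
        ring
    rw [hswap, ← Finset.sum_add_distrib]
    refine Finset.sum_congr rfl fun S hS => ?_
    rw [Finset.mem_filter] at hS
    have hupd1 : (∑ i ∈ S, Function.update v i₀ (v i₀ + y) i) = y + ∑ i ∈ S, v i := by
      rw [Finset.sum_update_of_mem hS.2, Finset.sdiff_singleton_eq_erase,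
        ← Finset.add_sum_erase S v hS.2]
      abel
    have hupd2 : (∑ i ∈ S, Function.update v i₀ y i) = y + ∑ i ∈ S.erase i₀, v i := by
      rw [Finset.sum_update_of_mem hS.2, Finset.sdiff_singleton_eq_erase]
    rw [hupd1, hupd2]
    ring
  calc fnDefect α (n + 1) (Fin.snoc v y)
      = (∑ S ∈ ((Finset.univ : Finset (Fin (n + 1))).powerset.filter
            (fun S => S.Nonempty)).filter (fun S => Fin.last n ∈ S),
            (-1 : F) ^ (n + 1 - S.card) * α (∑ i ∈ S, (Fin.snoc v y : Fin (n + 1) → V) i))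
        + ∑ S ∈ ((Finset.univ : Finset (Fin (n + 1))).powerset.filter
            (fun S => S.Nonempty)).filter (fun S => ¬ Fin.last n ∈ S),
            (-1 : F) ^ (n + 1 - S.card) * α (∑ i ∈ S, (Fin.snoc v y : Fin (n + 1) → V) i) := by
        rw [fnDefect]
        exact hsplit.symm
    _ = (fnDefect α n (Function.update v i₀ (v i₀ + y))
          - fnDefect α n (Function.update v i₀ y)) + - fnDefect α n v := by
        rw [hA, hB, hE]
    _ = fnDefect α n (Function.update v i₀ (v i₀ + y)) - fnDefect α n v
          - fnDefect α n (Function.update v i₀ y) := by ring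

lemma fnDefect_vanish_succ (α : V → F) {n : ℕ} (hn : 1 ≤ n)
    (hadd : ∀ (w : Fin n → V) (i : Fin n) (x y : V),
      fnDefect α n (Function.update w i (x + y))
        = fnDefect α n (Function.update w i x) + fnDefect α n (Function.update w i y))
    (u : Fin (n + 1) → V) :
    fnDefect α (n + 1) u = 0 := by
  have h := fnDefect_succ α (⟨0, hn⟩ : Fin n) (Fin.init u) (u (Fin.last n))
  rw [Fin.snoc_init_self] at h
  rw [h, hadd (Fin.init u) ⟨0, hn⟩ (Fin.init u ⟨0, hn⟩) (u (Fin.last n)),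
    Function.update_eq_self]
  ring

end Defect

/-! ### Coefficient extraction for reduced polynomials -/

section Coeff

universe uF

lemma sum_coeff_eq_zero {F : Type uF} [Field F] [Fintype F] {ι : Type} {A : Type*} [Fintype ι]
    [DecidableEq ι] (s : Finset A) (l : A → ι → ℕ) (co : A → F)
    (hl : ∀ a ∈ s, ∀ i, l a i < Fintype.card F)
    (h0 : ∀ x : ι → F, (∑ a ∈ s, co a * ∏ i, x i ^ l a i) = 0) (t : ι → ℕ) :
    ∑ a ∈ s.filter (fun a => l a = t), co a = 0 := by
  classical
  haveI : Fintype (ULift.{uF} ι) := Fintype.ofEquiv ι Equiv.ulift.symm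
  set P : MvPolynomial (ULift.{uF} ι) F :=
    ∑ a ∈ s, MvPolynomial.monomial
      (Finsupp.equivFunOnFinite.symm (fun i : ULift.{uF} ι => l a i.down)) (co a) with hP
  have hprod : ∀ (x : ULift.{uF} ι → F) (g : ι → ℕ),
      (∏ i : ULift.{uF} ι, x i ^ g i.down) = ∏ i : ι, x (ULift.up i) ^ g i :=
    fun x g => Fintype.prod_equiv Equiv.ulift _ _ (fun i => rfl)
  have hev : ∀ x : ULift.{uF} ι → F,
      MvPolynomial.eval x P = ∑ a ∈ s, co a * ∏ i : ι, x (ULift.up i) ^ l a i := by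
    intro x
    rw [hP, map_sum]
    refine Finset.sum_congr rfl fun a _ => ?_
    rw [MvPolynomial.eval_monomial]
    congr 1
    rw [Finsupp.prod_fintype _ _ (fun i => pow_zero (x i))]
    calc (∏ i : ULift.{uF} ι,
          x i ^ ((Finsupp.equivFunOnFinite.symm (fun i : ULift.{uF} ι => l a i.down)) i))
        = ∏ i : ULift.{uF} ι, x i ^ (l a i.down) := Finset.prod_congr rfl fun i _ => rfl
      _ = ∏ i : ι, x (ULift.up i) ^ l a i := hprod x (l a)
  have hzero : P = 0 := by
    apply MvPolynomial.eq_zero_of_eval_eq_zero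
    · intro v
      rw [hev v]
      exact h0 (fun i => v (ULift.up i))
    · rw [MvPolynomial.mem_restrictDegree]
      intro sm hsm i
      rw [hP] at hsm
      have hmem := MvPolynomial.support_sum hsm
      rw [Finset.mem_biUnion] at hmem
      obtain ⟨b, hb, hmem⟩ := hmem
      rw [MvPolynomial.support_monomial] at hmem
      by_cases hco : co b = 0
      · rw [if_pos hco] at hmem
        exact absurd hmem (Finset.notMem_empty _)
      · rw [if_neg hco] at hmem
        rw [Finset.mem_singleton] at hmem
        subst hmem
        have hlt := hl b hb i.down
        have hpos : 0 < Fintype.card F := Fintype.card_pos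
        have hcoe : (Finsupp.equivFunOnFinite.symm (fun i : ULift.{uF} ι => l b i.down)) i
            = l b i.down := rfl
        rw [hcoe]
        omega
  have hfin : (∑ a ∈ s, (if l a = t then co a else 0))
      = MvPolynomial.coeff
          (Finsupp.equivFunOnFinite.symm (fun i : ULift.{uF} ι => t i.down)) P := by
    rw [hP, MvPolynomial.coeff_sum]
    refine Finset.sum_congr rfl fun b _ => ?_
    rw [MvPolynomial.coeff_monomial]
    by_cases h : l b = t
    · rw [if_pos h, if_pos (by rw [h])]
    · have hne : ¬ (Finsupp.equivFunOnFinite.symm (fun i : ULift.{uF} ι => l b i.down)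
          = Finsupp.equivFunOnFinite.symm (fun i : ULift.{uF} ι => t i.down)) := by
        intro hc
        apply h
        have h2 := congrArg (⇑Finsupp.equivFunOnFinite) hc
        simp only [Equiv.apply_symm_apply] at h2
        funext i
        exact congrFun h2 (ULift.up i)
      rw [if_neg h, if_neg hne]
  rw [Finset.sum_filter, hfin, hzero, MvPolynomial.coeff_zero]

end Coeff


end Defect6

/-- let `F` be a finite field of characteristic `p`, `f` a reduced
polynomial (all exponents `< |F|`) with `f(0) = 0`, `α` its evaluation function, and
`n ≥ 1`. Then `Δ^n α` is a symmetric `n`-linear form if and only if every monomial of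
`f` has `p`-degree at most `n` and every monomial of `f` of `p`-degree exactly `n` is
totally reduced (all exponents `< p`). -/
theorem defect_nlinear_iff_totally_reduced
    {F : Type*} [Field F] [Fintype F] {p : ℕ} [CharP F p] (hp : p.Prime)
    {d : ℕ} (f : MvPolynomial (Fin d) F)
    (hred : ∀ m ∈ f.support, ∀ j, m j < Fintype.card F)
    (h0 : MvPolynomial.constantCoeff f = 0)
    (α : (Fin d → F) → F) (hα : ∀ a, α a = MvPolynomial.eval a f)
    (n : ℕ) (hn : 1 ≤ n) :
    ((∀ (w : Fin n → (Fin d → F)) (σ : Equiv.Perm (Fin n)),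
        fnDefect α n (w ∘ σ) = fnDefect α n w) ∧
     (∀ (w : Fin n → (Fin d → F)) (i : Fin n) (x y : Fin d → F),
        fnDefect α n (Function.update w i (x + y)) =
          fnDefect α n (Function.update w i x) + fnDefect α n (Function.update w i y)) ∧
     (∀ (w : Fin n → (Fin d → F)) (i : Fin n) (c : F) (x : Fin d → F),
        fnDefect α n (Function.update w i (c • x)) =
          c * fnDefect α n (Function.update w i x))) ↔
    ((∀ m ∈ f.support, (∑ j, pWeight p (m j)) ≤ n) ∧
     (∀ m ∈ f.support, (∑ j, pWeight p (m j)) = n → ∀ j, m j < p)) := by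
  classical
  have hα' : α = fun a => MvPolynomial.eval a f := funext hα
  subst hα'
  constructor
  · rintro ⟨hsym, hadd, hhom⟩
    have h1 : ∀ m ∈ f.support, (∑ j, pWeight p (m j)) ≤ n := by
      intro m₀ hm₀
      by_contra hbad
      push_neg at hbad
      have hzero : ∀ u : Fin (n + 1) → (Fin d → F),
          fnDefect (fun a => MvPolynomial.eval a f) (n + 1) u = 0 :=
        Defect6.fnDefect_vanish_succ _ hn hadd
      obtain ⟨k₀, hc1, hc2, hc3⟩ :=
        Defect6.exists_matrix_le hp (n + 1) (by omega) (fun j => m₀ j) hbad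
      have hk₀ : k₀ ∈ Defect6.Kred p (n + 1) d (fun j => m₀ j) :=
        Defect6.mem_Kred.mpr ⟨hc1, hc2, hc3⟩
      set s : Finset ((_ : Fin d →₀ ℕ) × (Fin (n + 1) → Fin d → ℕ)) :=
        f.support.sigma (fun m => Defect6.Kred p (n + 1) d (fun j => m j)) with hs
      have hfilter := Defect6.sum_coeff_eq_zero (ι := Fin (n + 1) × Fin d) s
        (fun a q => a.2 q.1 q.2)
        (fun a => f.coeff a.1 * (Defect6.Ck (n + 1) d a.2 : F))
        (by
          intro a ha q
          rw [hs, Finset.mem_sigma] at ha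
          have hcol := (Defect6.mem_Kred.mp ha.2).1 q.2
          have hle : a.2 q.1 q.2 ≤ a.1 q.2 := by
            rw [← hcol]
            exact Finset.single_le_sum (f := fun i => a.2 i q.2)
              (fun _ _ => Nat.zero_le _) (Finset.mem_univ q.1)
          exact lt_of_le_of_lt hle (hred a.1 ha.1 q.2))
        (by
          intro x
          calc ∑ a ∈ s, (f.coeff a.1 * (Defect6.Ck (n + 1) d a.2 : F))
                * ∏ q : Fin (n + 1) × Fin d, x q ^ a.2 q.1 q.2
              = ∑ m ∈ f.support, f.coeff m *
                  ∑ k ∈ Defect6.Kred p (n + 1) d (fun j => m j),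
                    (Defect6.Ck (n + 1) d k : F)
                      * Defect6.tau (n + 1) d k (fun i j => x (i, j)) := by
                rw [hs, Finset.sum_sigma]
                refine Finset.sum_congr rfl fun m _ => ?_
                rw [Finset.mul_sum]
                refine Finset.sum_congr rfl fun k _ => ?_
                rw [Fintype.prod_prod_type]
                unfold Defect6.tau
                ring
            _ = fnDefect (fun a => MvPolynomial.eval a f) (n + 1) (fun i j => x (i, j)) :=
                (Defect6.defect_eval hp f h0 (n + 1) _).symm
            _ = 0 := hzero _)
        (fun q => k₀ q.1 q.2)
      have hsingle : s.filter (fun a => (fun q : Fin (n + 1) × Fin d => a.2 q.1 q.2)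
            = fun q => k₀ q.1 q.2) = {⟨m₀, k₀⟩} := by
        ext a
        rw [Finset.mem_filter, Finset.mem_singleton, hs, Finset.mem_sigma]
        constructor
        · rintro ⟨⟨ha1, ha2⟩, hla⟩
          obtain ⟨a1, a2⟩ := a
          have hk : a2 = k₀ := by
            funext i j
            exact congrFun hla (i, j)
          subst hk
          have hm : a1 = m₀ := by
            apply Finsupp.ext
            intro j
            have e1 := (Defect6.mem_Kred.mp ha2).1 j
            have e2 := hc1 j
            rw [← e1, e2]
          subst hm
          rfl
        · rintro rfl
          exact ⟨⟨hm₀, hk₀⟩, rfl⟩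
      rw [hsingle, Finset.sum_singleton] at hfilter
      have hCkne : (Defect6.Ck (n + 1) d k₀ : F) ≠ 0 := by
        unfold Defect6.Ck
        rw [Nat.cast_prod, Finset.prod_ne_zero_iff]
        intro j _
        refine Defect6.multinomial_cast_ne_zero hp _ _ ?_
        rw [hc1 j]
        exact hc3 j
      rcases mul_eq_zero.mp hfilter with hcase | hcase
      · exact (MvPolynomial.mem_support_iff.mp hm₀) hcase
      · exact hCkne hcase
    refine ⟨h1, ?_⟩
    intro m₀ hm₀ hdeg j₀
    by_contra hge
    push_neg at hge
    obtain ⟨n', rfl⟩ : ∃ n', n = n' + 1 := ⟨n - 1, by omega⟩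
    obtain ⟨k₀, a, ha, hc1, hc2, hc3, hrow⟩ :=
      Defect6.exists_matrix_high hp (fun j => m₀ j) j₀ hdeg hge
    have hk₀ : k₀ ∈ Defect6.Kred p (n' + 1) d (fun j => m₀ j) :=
      Defect6.mem_Kred.mpr ⟨hc1, hc2, hc3⟩
    have hrowsum : (∑ j, k₀ 0 j) = p ^ a := by
      rw [Finset.sum_congr rfl fun j _ => hrow j,
        Finset.sum_ite_eq' Finset.univ j₀ (fun _ => p ^ a), if_pos (Finset.mem_univ j₀)]
    have hfun : ∀ (c : F) (u : Fin (n' + 1) → Fin d → F),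
        ∑ m ∈ f.support, ∑ k ∈ Defect6.Kred p (n' + 1) d (fun j => m j),
          (f.coeff m * (Defect6.Ck (n' + 1) d k : F)
              * (c ^ (∑ j, k 0 j) * Defect6.tau (n' + 1) d k u)
            - f.coeff m * (Defect6.Ck (n' + 1) d k : F)
              * (c ^ 1 * Defect6.tau (n' + 1) d k u)) = 0 := by
      intro c u
      have hLHS : fnDefect (fun a => MvPolynomial.eval a f) (n' + 1)
            (Function.update u 0 (c • u 0))
          = ∑ m ∈ f.support, ∑ k ∈ Defect6.Kred p (n' + 1) d (fun j => m j),
            f.coeff m * (Defect6.Ck (n' + 1) d k : F)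
              * (c ^ (∑ j, k 0 j) * Defect6.tau (n' + 1) d k u) := by
        rw [Defect6.defect_eval hp f h0 (n' + 1)]
        refine Finset.sum_congr rfl fun m _ => ?_
        rw [Finset.mul_sum]
        refine Finset.sum_congr rfl fun k _ => ?_
        rw [Defect6.tau_update_smul]
        ring
      have hRHS : c * fnDefect (fun a => MvPolynomial.eval a f) (n' + 1) u
          = ∑ m ∈ f.support, ∑ k ∈ Defect6.Kred p (n' + 1) d (fun j => m j),
            f.coeff m * (Defect6.Ck (n' + 1) d k : F)
              * (c ^ 1 * Defect6.tau (n' + 1) d k u) := by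
        rw [Defect6.defect_eval hp f h0 (n' + 1), Finset.mul_sum]
        refine Finset.sum_congr rfl fun m _ => ?_
        rw [Finset.mul_sum, Finset.mul_sum]
        refine Finset.sum_congr rfl fun k _ => ?_
        ring
      have hh := hhom u 0 c (u 0)
      rw [Function.update_eq_self] at hh
      have hAB : (∑ m ∈ f.support, ∑ k ∈ Defect6.Kred p (n' + 1) d (fun j => m j),
            f.coeff m * (Defect6.Ck (n' + 1) d k : F)
              * (c ^ (∑ j, k 0 j) * Defect6.tau (n' + 1) d k u))
          = ∑ m ∈ f.support, ∑ k ∈ Defect6.Kred p (n' + 1) d (fun j => m j),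
            f.coeff m * (Defect6.Ck (n' + 1) d k : F)
              * (c ^ 1 * Defect6.tau (n' + 1) d k u) :=
        hLHS.symm.trans (hh.trans hRHS)
      simp only [Finset.sum_sub_distrib]
      rw [hAB, sub_self]
    set s2 : Finset (((_ : Fin d →₀ ℕ) × (Fin (n' + 1) → Fin d → ℕ)) × Bool) :=
      (f.support.sigma (fun m => Defect6.Kred p (n' + 1) d (fun j => m j))) ×ˢ
        (Finset.univ : Finset Bool) with hs2
    have hfilter := Defect6.sum_coeff_eq_zero (ι := Option (Fin (n' + 1) × Fin d)) s2
      (fun b (o : Option (Fin (n' + 1) × Fin d)) =>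
        o.elim (if b.2 then ∑ j, b.1.2 0 j else 1) (fun q => b.1.2 q.1 q.2))
      (fun b => if b.2 then f.coeff b.1.1 * (Defect6.Ck (n' + 1) d b.1.2 : F)
        else -(f.coeff b.1.1 * (Defect6.Ck (n' + 1) d b.1.2 : F)))
      (by
        intro b hb o
        rw [hs2, Finset.mem_product, Finset.mem_sigma] at hb
        obtain ⟨⟨hbm, hbk⟩, -⟩ := hb
        rcases o with _ | q
        · show (if b.2 then ∑ j, b.1.2 0 j else 1) < Fintype.card F
          rcases b.2 with _ | _
          · simpa using Fintype.one_lt_card (α := F)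
          · simp only [if_true]
            obtain ⟨j', e, hle, hrowk⟩ :=
              Defect6.Kred_rows_single hp (h1 b.1.1 hbm) hbk 0
            have hsum : (∑ j, b.1.2 0 j) = p ^ e := by
              rw [Finset.sum_congr rfl fun j _ => hrowk j,
                Finset.sum_ite_eq' Finset.univ j' (fun _ => p ^ e),
                if_pos (Finset.mem_univ j')]
            rw [hsum]
            exact lt_of_le_of_lt hle (hred b.1.1 hbm j')
        · show b.1.2 q.1 q.2 < Fintype.card F
          have hcol := (Defect6.mem_Kred.mp hbk).1 q.2
          have hle : b.1.2 q.1 q.2 ≤ b.1.1 q.2 := by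
            rw [← hcol]
            exact Finset.single_le_sum (f := fun i => b.1.2 i q.2)
              (fun _ _ => Nat.zero_le _) (Finset.mem_univ q.1)
          exact lt_of_le_of_lt hle (hred b.1.1 hbm q.2))
      (by
        intro x
        rw [hs2, Finset.sum_product]
        have hterm : ∀ (σa : (_ : Fin d →₀ ℕ) × (Fin (n' + 1) → Fin d → ℕ)) (e : ℕ),
            (∏ o : Option (Fin (n' + 1) × Fin d),
              x o ^ (Option.elim o e (fun q => σa.2 q.1 q.2)))
            = x none ^ e * Defect6.tau (n' + 1) d σa.2 (fun i j => x (some (i, j))) := by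
          intro σa e
          rw [Fintype.prod_option, Fintype.prod_prod_type]
          rfl
        have hbool : ∀ σa ∈ f.support.sigma
              (fun m => Defect6.Kred p (n' + 1) d (fun j => m j)),
            (∑ bb ∈ (Finset.univ : Finset Bool),
              (if bb then f.coeff σa.1 * (Defect6.Ck (n' + 1) d σa.2 : F)
                else -(f.coeff σa.1 * (Defect6.Ck (n' + 1) d σa.2 : F)))
              * ∏ o : Option (Fin (n' + 1) × Fin d),
                  x o ^ (Option.elim o (if bb then ∑ j, σa.2 0 j else 1)
                    (fun q => σa.2 q.1 q.2)))
            = (f.coeff σa.1 * (Defect6.Ck (n' + 1) d σa.2 : F)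
                * (x none ^ (∑ j, σa.2 0 j)
                  * Defect6.tau (n' + 1) d σa.2 (fun i j => x (some (i, j))))
              - f.coeff σa.1 * (Defect6.Ck (n' + 1) d σa.2 : F)
                * (x none ^ 1
                  * Defect6.tau (n' + 1) d σa.2 (fun i j => x (some (i, j))))) := by
          intro σa _
          rw [Fintype.sum_bool, if_pos rfl, if_pos rfl,
            if_neg (by simp), if_neg (by simp), hterm σa (∑ j, σa.2 0 j), hterm σa 1]
          ring
        calc (∑ σa ∈ f.support.sigma (fun m => Defect6.Kred p (n' + 1) d (fun j => m j)),
              ∑ bb ∈ (Finset.univ : Finset Bool),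
              (if bb then f.coeff σa.1 * (Defect6.Ck (n' + 1) d σa.2 : F)
                else -(f.coeff σa.1 * (Defect6.Ck (n' + 1) d σa.2 : F)))
              * ∏ o : Option (Fin (n' + 1) × Fin d),
                  x o ^ (Option.elim o (if bb then ∑ j, σa.2 0 j else 1)
                    (fun q => σa.2 q.1 q.2)))
            = ∑ σa ∈ f.support.sigma (fun m => Defect6.Kred p (n' + 1) d (fun j => m j)),
              (f.coeff σa.1 * (Defect6.Ck (n' + 1) d σa.2 : F)
                * ((x none) ^ (∑ j, σa.2 0 j)
                  * Defect6.tau (n' + 1) d σa.2 (fun i j => x (some (i, j))))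
              - f.coeff σa.1 * (Defect6.Ck (n' + 1) d σa.2 : F)
                * ((x none) ^ 1
                  * Defect6.tau (n' + 1) d σa.2 (fun i j => x (some (i, j))))) :=
              Finset.sum_congr rfl hbool
          _ = 0 := by
              rw [Finset.sum_sigma]
              exact hfun (x none) (fun i j => x (some (i, j))))
      (fun o => o.elim (p ^ a) (fun q => k₀ q.1 q.2))
    have hsingle : s2.filter (fun b => (fun o : Option (Fin (n' + 1) × Fin d) =>
          o.elim (if b.2 then ∑ j, b.1.2 0 j else 1) (fun q => b.1.2 q.1 q.2))
        = fun o => o.elim (p ^ a) (fun q => k₀ q.1 q.2)) = {(⟨m₀, k₀⟩, true)} := by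
      ext b
      rw [Finset.mem_filter, Finset.mem_singleton, hs2, Finset.mem_product, Finset.mem_sigma]
      constructor
      · rintro ⟨⟨⟨hbm, hbk⟩, -⟩, hlb⟩
        obtain ⟨⟨b1, b2⟩, bb⟩ := b
        have hk : b2 = k₀ := by
          funext i j
          exact congrFun hlb (some (i, j))
        subst hk
        have hnone := congrFun hlb none
        simp only [Option.elim] at hnone
        rcases bb with _ | _
        · exfalso
          rw [if_neg (by simp)] at hnone
          have h2 := hp.two_le
          have h3 : p ≤ p ^ a := Nat.le_self_pow (by omega) p
          omega
        · have hm : b1 = m₀ := by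
            apply Finsupp.ext
            intro j
            have e1 := (Defect6.mem_Kred.mp hbk).1 j
            have e2 := hc1 j
            rw [← e1, e2]
          subst hm
          rfl
      · rintro rfl
        refine ⟨⟨⟨hm₀, hk₀⟩, Finset.mem_univ _⟩, ?_⟩
        funext o
        rcases o with _ | q
        · show (if true = true then ∑ j, k₀ 0 j else 1) = p ^ a
          rw [if_pos rfl, hrowsum]
        · rfl
    rw [hsingle, Finset.sum_singleton, if_pos rfl] at hfilter
    have hCkne : (Defect6.Ck (n' + 1) d k₀ : F) ≠ 0 := by
      unfold Defect6.Ck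
      rw [Nat.cast_prod, Finset.prod_ne_zero_iff]
      intro j _
      refine Defect6.multinomial_cast_ne_zero hp _ _ ?_
      rw [hc1 j]
      exact hc3 j
    rcases mul_eq_zero.mp hfilter with hcase | hcase
    · exact (MvPolynomial.mem_support_iff.mp hm₀) hcase
    · exact hCkne hcase
  · rintro ⟨hle, hlt⟩
    have hkey : ∀ m ∈ f.support, ∀ k ∈ Defect6.Kred p n d (fun j => (m : Fin d →₀ ℕ) j),
        ∀ i : Fin n, ∃ j₀ : Fin d, ∀ j, k i j = if j = j₀ then 1 else 0 := by
      intro m hm k hk i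
      rcases lt_or_eq_of_le (hle m hm) with hlt2 | heq
      · rw [Defect6.Kred_empty hp hlt2] at hk
        exact absurd hk (Finset.notMem_empty k)
      · obtain ⟨j₀, b, hble, hrowk⟩ := Defect6.Kred_rows_single hp (le_of_eq heq) hk i
        have hmp := hlt m hm heq j₀
        have hb0 : b = 0 := by
          by_contra hb
          have := Nat.le_self_pow hb p
          omega
        exact ⟨j₀, fun j => by rw [hrowk j, hb0, pow_zero]⟩
    refine ⟨fun w σ => Defect6.fnDefect_perm _ n w σ, ?_, ?_⟩
    · intro w i x y
      rw [Defect6.defect_eval hp f h0 n, Defect6.defect_eval hp f h0 n,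
        Defect6.defect_eval hp f h0 n, ← Finset.sum_add_distrib]
      refine Finset.sum_congr rfl fun m hm => ?_
      rw [← mul_add]
      congr 1
      rw [← Finset.sum_add_distrib]
      refine Finset.sum_congr rfl fun k hk => ?_
      rw [← mul_add]
      congr 1
      obtain ⟨j₀, hrowk⟩ := hkey m hm k hk i
      rw [Defect6.tau_update_single hrowk, Defect6.tau_update_single hrowk,
        Defect6.tau_update_single hrowk, Pi.add_apply, add_mul]
    · intro w i c x
      rw [Defect6.defect_eval hp f h0 n, Defect6.defect_eval hp f h0 n, Finset.mul_sum]
      refine Finset.sum_congr rfl fun m hm => ?_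
      simp only [Finset.mul_sum]
      refine Finset.sum_congr rfl fun k hk => ?_
      obtain ⟨j₀, hrowk⟩ := hkey m hm k hk i
      rw [Defect6.tau_update_single hrowk, Defect6.tau_update_single hrowk,
        Pi.smul_apply, smul_eq_mul]
      ring
end

section
/- Let F be a finite field of characteristic p with q = |F| elements and let 1 ≤ n < 5. Let f ∈ F[x_1,…,x_d] be a reduced polynomial with f(0) = 0 such that: every monomial of f has p-degree at most n, every monomial of f with p-degree equal to n is totally reduced, and every monomial of f has positive total degree congruent to n modulo q − 1. Then every monomial of f has total degree at most n; consequently the evaluation function of f is realized by a (not necessarily reduced) homogeneous polynomial of degree n. -/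
open MvPolynomial Finset

lemma pWeight_eq_sum {p : ℕ} (hp : 2 ≤ p) (t : ℕ) : pWeight p t = (Nat.digits p t).sum := by
  simp [pWeight]; omega

lemma pWeight_rec {p : ℕ} (hp : 2 ≤ p) (t : ℕ) :
    pWeight p t = t % p + pWeight p (t / p) := by
  rcases Nat.eq_zero_or_pos t with h | h
  · simp [h, pWeight]
  · rw [pWeight_eq_sum hp, pWeight_eq_sum hp, Nat.digits_def' hp h, List.sum_cons]

lemma pWeight_eq_self {p t : ℕ} (hp : 2 ≤ p) (ht : t < p) : pWeight p t = t := by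
  rw [pWeight_rec hp, Nat.mod_eq_of_lt ht, Nat.div_eq_of_lt ht]
  simp [pWeight]

lemma pWeight_eq_zero {p t : ℕ} (hp : 2 ≤ p) (h : pWeight p t = 0) : t = 0 := by
  rw [pWeight_eq_sum hp] at h
  by_contra ht
  have h1 : Nat.digits p t ≠ [] := Nat.digits_ne_nil_iff_ne_zero.mpr ht
  have h2 := Nat.getLast_digit_ne_zero p ht
  have h3 := List.getLast_mem h1
  have h4 := (List.sum_eq_zero_iff.mp h) _ h3
  exact h2 h4

lemma le_pWeight_mul {p : ℕ} (hp : 2 ≤ p) : ∀ (e t : ℕ), t < p ^ (e + 1) →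
    t ≤ pWeight p t * p ^ e := by
  intro e
  induction e with
  | zero => intro t ht; simpa [pWeight_eq_self hp (by simpa using ht)] using Nat.le_refl t
  | succ e ih =>
    intro t ht
    have hd : t / p < p ^ (e + 1) := by
      rw [Nat.div_lt_iff_lt_mul (by omega)]
      calc t < p ^ (e + 2) := ht
      _ = p ^ (e+1) * p := by ring
    have h1 := ih (t / p) hd
    have h2 : t = p * (t / p) + t % p := (Nat.div_add_mod t p).symm.trans (by ring_nf)
    rw [pWeight_rec hp t]
    have h3 : p * (t / p) ≤ pWeight p (t/p) * p ^ (e+1) := by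
      calc p * (t/p) ≤ p * (pWeight p (t/p) * p ^ e) := Nat.mul_le_mul_left _ h1
      _ = pWeight p (t/p) * p ^ (e+1) := by ring
    have h4 : t % p ≤ t % p * p ^ (e+1) := Nat.le_mul_of_pos_right _ (by positivity)
    calc t = p * (t/p) + t % p := h2
    _ ≤ pWeight p (t/p) * p^(e+1) + t % p * p^(e+1) := by omega
    _ = (t % p + pWeight p (t / p)) * p ^ (e+1) := by ring

lemma core {p e n d : ℕ} (hp : p.Prime) (he : 1 ≤ e) (hn1 : 1 ≤ n) (hn5 : n < 5)
    (m : Fin d → ℕ) (hm : ∀ j, m j < p ^ e)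
    (hW : ∑ j, pWeight p (m j) ≤ n)
    (hWn : ∑ j, pWeight p (m j) = n → ∀ j, m j < p)
    (hD0 : 0 < ∑ j, m j) (hDn : (∑ j, m j) ≡ n [MOD p ^ e - 1]) :
    ∑ j, m j ≤ n := by
  have hp2 : 2 ≤ p := hp.two_le
  set W := ∑ j, pWeight p (m j) with hWdef
  set D := ∑ j, m j with hDdef
  by_contra hcon
  push_neg at hcon
  have hq2 : 2 ≤ p ^ e := by
    calc 2 ≤ p := hp2
    _ = p ^ 1 := (pow_one p).symm
    _ ≤ p ^ e := Nat.pow_le_pow_right (by omega) he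
  have hdvd : p ^ e - 1 ∣ D - n := (Nat.modEq_iff_dvd' hcon.le).mp hDn.symm
  have hDbig : n + (p ^ e - 1) ≤ D := by
    have := Nat.le_of_dvd (by omega) hdvd
    omega
  have hW0 : W ≠ 0 := by
    intro h
    have hz := Finset.sum_eq_zero_iff.mp (hWdef ▸ h)
    have : ∀ j, m j = 0 := fun j => pWeight_eq_zero hp2 (hz j (Finset.mem_univ j))
    simp [hDdef, this] at hD0
  rcases eq_or_lt_of_le hW with hWeq | hWlt
  · have hsm : ∀ j, m j < p := hWn hWeq
    have : D = W := Finset.sum_congr rfl fun j _ => (pWeight_eq_self hp2 (hsm j)).symm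
    omega
  obtain ⟨e', rfl⟩ : ∃ e', e = e' + 1 := ⟨e - 1, by omega⟩
  have hDle : D ≤ W * p ^ e' := by
    calc D ≤ ∑ j, pWeight p (m j) * p ^ e' :=
      Finset.sum_le_sum fun j _ => le_pWeight_mul hp2 e' (m j) (hm j)
    _ = W * p ^ e' := by rw [hWdef, Finset.sum_mul]
  by_cases hsp : p = 2 ∧ n = 4
  · obtain ⟨rfl, rfl⟩ := hsp
    have hW3 : W ≤ 3 := by omega
    rcases Nat.eq_zero_or_pos e' with rfl | he'
    · have hws : ∀ j ∈ Finset.univ, m j = pWeight 2 (m j) := fun j _ =>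
        (pWeight_eq_self hp2 (by simpa using hm j)).symm
      have : D = W := Finset.sum_congr rfl hws
      simp [pow_succ] at hDbig
      omega
    obtain ⟨e'', rfl⟩ : ∃ e'', e' = e'' + 1 := ⟨e' - 1, by omega⟩
    set P := 2 ^ e'' with hP
    have hP1 : 1 ≤ P := Nat.one_le_two_pow
    have hpow1 : 2 ^ (e'' + 1) = 2 * P := by rw [hP, pow_succ]; ring
    have hpow2 : 2 ^ (e'' + 1 + 1) = 4 * P := by rw [hP]; ring
    have hd6 : D ≤ 6 * P := by
      calc D ≤ W * (2 * P) := hpow1 ▸ hDle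
      _ ≤ 3 * (2 * P) := Nat.mul_le_mul_right _ hW3
      _ = 6 * P := by ring
    have hDbig' : 4 * P + 3 ≤ D := by rw [hpow2] at hDbig; omega
    have hDeq : D = 4 * P + 3 := by
      obtain ⟨k, hk⟩ := hdvd
      rw [hpow2] at hk
      match k with
      | 0 => omega
      | 1 => omega
      | (k + 2) =>
        have : (4 * P - 1) * 2 ≤ (4 * P - 1) * (k + 2) := Nat.mul_le_mul_left _ (by omega)
        omega
    set B := ∑ j, m j % 2 with hB
    set A := ∑ j, m j / 2 with hA
    have hDAB : D = 2 * A + B := by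
      rw [hDdef, hA, hB, Finset.mul_sum, ← Finset.sum_add_distrib]
      exact Finset.sum_congr rfl fun j _ => (Nat.div_add_mod' (m j) 2).symm ▸ by omega
    set S := ∑ j, pWeight 2 (m j / 2) with hS
    have hWBS : W = B + S := by
      rw [hWdef, hB, hS, ← Finset.sum_add_distrib]
      exact Finset.sum_congr rfl fun j _ => pWeight_rec hp2 (m j)
    have hAle : A ≤ S * P := by
      calc A ≤ ∑ j, pWeight 2 (m j / 2) * P := by
            apply Finset.sum_le_sum
            intro j _
            apply le_pWeight_mul hp2 e''
            have h1 := hm j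
            rw [hpow2] at h1
            rw [hpow1]
            omega
      _ = S * P := by rw [hS, Finset.sum_mul]
    rcases (by omega : B = 1 ∨ B = 3) with hBv | hBv
    · have : S * P ≤ 2 * P := Nat.mul_le_mul_right _ (by omega)
      omega
    · have hS0 : S = 0 := by omega
      rw [hS0] at hAle
      omega
  · have hnp : n - 1 ≤ p := by
      rcases eq_or_ne n 4 with rfl | h4
      · have : p ≠ 2 := fun h => hsp ⟨h, rfl⟩
        omega
      · omega
    have hn2 : 2 ≤ n := by
      by_contra h
      have h1 : n = 1 := by omega
      omega
    have hfin : D ≤ p ^ (e' + 1) := by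
      calc D ≤ W * p ^ e' := hDle
      _ ≤ (n - 1) * p ^ e' := Nat.mul_le_mul_right _ (by omega)
      _ ≤ p * p ^ e' := Nat.mul_le_mul_right _ hnp
      _ = p ^ (e' + 1) := by ring
    omega

open MvPolynomial Finset

lemma fsum_eq {d : ℕ} (m : Fin d →₀ ℕ) : (m.sum fun _ e => e) = ∑ j, m j :=
  Finsupp.sum_fintype _ _ (fun _ => rfl)

lemma fdeg_eq {d : ℕ} (m : Fin d →₀ ℕ) : Finsupp.degree m = ∑ j, m j :=
  Finset.sum_subset (Finset.subset_univ _)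
    (fun j _ hj => Finsupp.notMem_support_iff.mp hj)

/-- let `F` be a finite field of characteristic `p` with `q` elements and
`1 ≤ n < 5`. If `f` is reduced with `f(0) = 0`, every monomial of `f` has `p`-degree at
most `n`, every monomial of `p`-degree exactly `n` is totally reduced, and every monomial
has positive total degree congruent to `n` modulo `q − 1`, then every monomial of `f` has
total degree at most `n`; consequently the evaluation function of `f` is realized by a
(not necessarily reduced) homogeneous polynomial of degree `n`. -/
theorem small_n_applications_are_homogeneous
    {F : Type*} [Field F] [Fintype F] {p : ℕ} [CharP F p] (hp : p.Prime)
    {d : ℕ} (f : MvPolynomial (Fin d) F)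
    (n : ℕ) (hn1 : 1 ≤ n) (hn5 : n < 5)
    (hred : ∀ m ∈ f.support, ∀ j, m j < Fintype.card F)
    (h0 : MvPolynomial.constantCoeff f = 0)
    (hT1 : ∀ m ∈ f.support, (∑ j, pWeight p (m j)) ≤ n)
    (hT2 : ∀ m ∈ f.support, (∑ j, pWeight p (m j)) = n → ∀ j, m j < p)
    (hD : ∀ m ∈ f.support, 0 < (m.sum fun _ e => e) ∧
      (m.sum fun _ e => e) ≡ n [MOD Fintype.card F - 1]) :
    (∀ m ∈ f.support, (m.sum fun _ e => e) ≤ n) ∧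
    (∃ g : MvPolynomial (Fin d) F, g.IsHomogeneous n ∧
      ∀ a : Fin d → F, MvPolynomial.eval a g = MvPolynomial.eval a f) := by
  classical
  obtain ⟨e, hpp, hcard⟩ := FiniteField.card F p
  have part1 : ∀ m ∈ f.support, (m.sum fun _ e => e) ≤ n := by
    intro m hm
    rw [fsum_eq]
    refine core hp e.one_le hn1 hn5 m (fun j => hcard ▸ hred m hm j)
      (hT1 m hm) (hT2 m hm) ?_ ?_
    · rw [← fsum_eq]; exact (hD m hm).1
    · rw [← fsum_eq]; exact hcard ▸ (hD m hm).2
  refine ⟨part1, ?_⟩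
  -- the adjusted exponent
  set adj : (Fin d →₀ ℕ) → (Fin d →₀ ℕ) := fun m =>
    if h : m.support.Nonempty then
      m + Finsupp.single h.choose (n - (m.sum fun _ e => e)) else m with hadj
  refine ⟨∑ m ∈ f.support, monomial (adj m) (coeff m f), ?_, ?_⟩
  · apply MvPolynomial.IsHomogeneous.sum
    intro m hm
    apply isHomogeneous_monomial
    have hpos := (hD m hm).1
    have hne : m ≠ 0 := by
      intro h; rw [h] at hpos; simp [Finsupp.sum_zero_index] at hpos
    have hsn : m.support.Nonempty := Finsupp.support_nonempty_iff.mpr hne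
    rw [hadj]
    simp only [dif_pos hsn]
    rw [fdeg_eq]
    have h1 : ∀ j, (m + Finsupp.single hsn.choose (n - (m.sum fun _ e => e))) j
        = m j + Finsupp.single hsn.choose (n - (m.sum fun _ e => e)) j := fun j => rfl
    rw [Finset.sum_congr rfl (fun j _ => h1 j), Finset.sum_add_distrib]
    have h2 : ∑ x : Fin d, (Finsupp.single hsn.choose (n - (m.sum fun _ e => e))) x
        = n - (m.sum fun _ e => e) := by
      refine (Finset.sum_eq_single_of_mem
          (f := fun x => (Finsupp.single hsn.choose (n - (m.sum fun _ e => e))) x)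
          hsn.choose (Finset.mem_univ _) ?_).trans (Finsupp.single_eq_same)
      intro j _ hj; simp [Finsupp.single_apply, Ne.symm hj]
    rw [h2]
    have h3 := part1 m hm
    rw [fsum_eq] at h3 ⊢
    omega
  · intro a
    conv_rhs => rw [← support_sum_monomial_coeff f]
    rw [map_sum, map_sum]
    apply Finset.sum_congr rfl
    intro m hm
    rw [eval_monomial, eval_monomial]
    congr 1
    have hpos := (hD m hm).1
    have hne : m ≠ 0 := by
      intro h; rw [h] at hpos; simp [Finsupp.sum_zero_index] at hpos
    have hsn : m.support.Nonempty := Finsupp.support_nonempty_iff.mpr hne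
    set j0 := hsn.choose with hj0
    have hj0mem : j0 ∈ m.support := hsn.choose_spec
    have hmj0 : m j0 ≠ 0 := Finsupp.mem_support_iff.mp hj0mem
    set s := n - (m.sum fun _ e => e) with hs
    rw [hadj]
    simp only [dif_pos hsn]
    rw [Finsupp.prod_fintype _ _ (fun j => pow_zero (a j)),
        Finsupp.prod_fintype _ _ (fun j => pow_zero (a j))]
    have hsplit : ∀ j, a j ^ ((m + Finsupp.single j0 s) j)
        = a j ^ (m j) * a j ^ ((Finsupp.single j0 s) j) := by
      intro j
      rw [Finsupp.add_apply, pow_add]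
    rw [Finset.prod_congr rfl (fun j _ => hsplit j), Finset.prod_mul_distrib]
    have hprod1 : ∏ j, a j ^ ((Finsupp.single j0 s) j) = a j0 ^ s := by
      refine (Finset.prod_eq_single_of_mem
          (f := fun j => a j ^ ((Finsupp.single j0 s) j))
          j0 (Finset.mem_univ _) ?_).trans (by rw [Finsupp.single_eq_same])
      intro j _ hj
      simp [Finsupp.single_apply, Ne.symm hj]
    rw [hprod1]
    by_cases ha : a j0 = 0
    · have : a j0 ^ (m j0) = 0 := by
        rw [ha, zero_pow hmj0]
      rw [Finset.prod_eq_zero (Finset.mem_univ j0) this, zero_mul]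
    · have hdvds : Fintype.card F - 1 ∣ s := by
        rw [hs]
        exact (Nat.modEq_iff_dvd' (part1 m hm)).mp (hD m hm).2
      obtain ⟨k, hk⟩ := hdvds
      rw [hk, pow_mul, FiniteField.pow_card_sub_one_eq_one (a j0) ha, one_pow, mul_one]
end

section
/- Let F be a finite field with q = p^e elements where e ≥ 2, and let n ≥ max{5, q} and d ≥ n. Then there exists a polynomial n-application α : F^d → F (i.e., α(a·u) = a^n·α(u) for all a ∈ F, u ∈ F^d, and Δ^n α is a symmetric n-linear form) whose reduced polynomial representative has total degree strictly greater than n; in particular α is not the evaluation function of any homogeneous polynomial of total degree n. -/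
open MvPolynomial Finset Function

section AuxLemmas

variable {F : Type*} [Field F]

private lemma aux_inner_zero {n : ℕ} (R : Finset (Fin n)) (hR : R.Nonempty)
    (hRn : R.card < n) :
    ∑ S ∈ Finset.univ.powerset.filter (fun S : Finset (Fin n) => S.Nonempty),
      (if R ⊆ S then (-1 : F) ^ (n - S.card) else 0) = 0 := by
  classical
  have h1 : ∑ S ∈ Finset.univ.powerset.filter (fun S : Finset (Fin n) => S.Nonempty),
      (if R ⊆ S then (-1 : F) ^ (n - S.card) else 0)
      = ∑ S ∈ (Finset.univ.powerset : Finset (Finset (Fin n))),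
      (if R ⊆ S then (-1 : F) ^ (n - S.card) else 0) := by
    refine Finset.sum_subset (Finset.filter_subset _ _) ?_
    intro S hS hS'
    have hSe : S = ∅ := by
      by_contra h
      exact hS' (Finset.mem_filter.2 ⟨hS, Finset.nonempty_iff_ne_empty.2 h⟩)
    subst hSe
    rw [if_neg]
    intro h
    exact hR.ne_empty (Finset.subset_empty.1 h)
  rw [h1, ← Finset.sum_filter]
  have h2 : ∑ S ∈ (Finset.univ.powerset.filter fun S : Finset (Fin n) => R ⊆ S),
      (-1 : F) ^ (n - S.card)
      = ∑ T ∈ Rᶜ.powerset, (-1 : F) ^ (n - (R.card + T.card)) := by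
    refine Finset.sum_nbij' (fun S => S \ R) (fun T => R ∪ T) ?_ ?_ ?_ ?_ ?_
    · intro S hS
      rw [Finset.mem_powerset]
      intro x hx
      rw [Finset.mem_compl]
      exact fun hxR => (Finset.mem_sdiff.1 hx).2 hxR
    · intro T hT
      refine Finset.mem_filter.2 ⟨Finset.mem_powerset.2 (Finset.subset_univ _),
        Finset.subset_union_left⟩
    · intro S hS
      exact Finset.union_sdiff_of_subset (Finset.mem_filter.1 hS).2
    · intro T hT
      have hdisj : Disjoint R T := by
        rw [Finset.mem_powerset] at hT
        exact Finset.disjoint_left.2 fun x hxR hxT => (Finset.mem_compl.1 (hT hxT)) hxR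
      exact Finset.union_sdiff_cancel_left hdisj
    · intro S hS
      have hsub := (Finset.mem_filter.1 hS).2
      have hdisj : Disjoint R (S \ R) := Finset.disjoint_sdiff
      have hcard : S.card = R.card + (S \ R).card := by
        rw [← Finset.card_union_of_disjoint hdisj, Finset.union_sdiff_of_subset hsub]
      rw [hcard]
  rw [h2]
  have hcompl : Rᶜ.card = n - R.card := by
    rw [Finset.card_compl]
    simp
  have key : ∑ T ∈ Rᶜ.powerset, (-1 : F) ^ T.card = 0 := by
    have h0 := Finset.prod_add (fun _ : Fin n => (-1 : F)) (fun _ => 1) Rᶜ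
    simp only [neg_add_cancel, Finset.prod_const, Finset.prod_const_one, one_pow,
      mul_one] at h0
    rw [← h0, zero_pow]
    omega
  calc ∑ T ∈ Rᶜ.powerset, (-1 : F) ^ (n - (R.card + T.card))
      = ∑ T ∈ Rᶜ.powerset, (-1 : F) ^ (n - R.card) * (-1 : F) ^ T.card := by
        refine Finset.sum_congr rfl fun T hT => ?_
        have hTle : T.card ≤ n - R.card := by
          have := Finset.card_le_card (Finset.mem_powerset.1 hT)
          omega
        have e1 : n - (R.card + T.card) + T.card = n - R.card := by omega
        calc (-1 : F) ^ (n - (R.card + T.card))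
            = (-1 : F) ^ (n - (R.card + T.card)) * ((-1 : F) ^ T.card * (-1 : F) ^ T.card) := by
              rw [← mul_pow]
              norm_num
          _ = ((-1 : F) ^ (n - (R.card + T.card)) * (-1 : F) ^ T.card) * (-1 : F) ^ T.card := by
              ring
          _ = (-1 : F) ^ (n - R.card) * (-1 : F) ^ T.card := by
              rw [← pow_add, e1]
    _ = 0 := by rw [← Finset.mul_sum, key, mul_zero]

private lemma fnDefect_prod_eq_zero {V : Type*} [AddCommGroup V]
    {ι : Type*} [Fintype ι] [Nonempty ι] (L : ι → V → F)
    (hL : ∀ j (x y : V), L j (x + y) = L j x + L j y)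
    {n : ℕ} (hn : Fintype.card ι < n) (u : Fin n → V) :
    fnDefect (fun v => ∏ j, L j v) n u = 0 := by
  classical
  unfold fnDefect
  have hexp : ∀ S : Finset (Fin n), (∏ j : ι, L j (∑ i ∈ S, u i))
      = ∑ g ∈ Fintype.piFinset (fun _ : ι => S), ∏ j, L j (u (g j)) := by
    intro S
    have h1 : (∏ j : ι, L j (∑ i ∈ S, u i)) = ∏ j : ι, ∑ i ∈ S, L j (u i) :=
      Finset.prod_congr rfl fun j _ => map_sum (AddMonoidHom.mk' (L j) (hL j)) _ _
    rw [h1, Finset.prod_univ_sum]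
  have hpi : ∀ S : Finset (Fin n), Fintype.piFinset (fun _ : ι => S)
      = Finset.univ.filter (fun g : ι → Fin n => ∀ j, g j ∈ S) := by
    intro S
    ext g
    simp [Fintype.mem_piFinset]
  calc ∑ S ∈ Finset.univ.powerset.filter (fun S : Finset (Fin n) => S.Nonempty),
        (-1 : F) ^ (n - S.card) * (fun v => ∏ j, L j v) (∑ i ∈ S, u i)
      = ∑ S ∈ Finset.univ.powerset.filter (fun S : Finset (Fin n) => S.Nonempty),
        ∑ g : ι → Fin n, (if ∀ j, g j ∈ S then
          (-1 : F) ^ (n - S.card) * ∏ j, L j (u (g j)) else 0) := by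
        refine Finset.sum_congr rfl fun S _ => ?_
        simp only
        rw [hexp S, Finset.mul_sum, hpi S, Finset.sum_filter]
    _ = ∑ g : ι → Fin n, ∑ S ∈ Finset.univ.powerset.filter
          (fun S : Finset (Fin n) => S.Nonempty),
        (if ∀ j, g j ∈ S then (-1 : F) ^ (n - S.card) * ∏ j, L j (u (g j)) else 0) :=
        Finset.sum_comm
    _ = 0 := by
        refine Finset.sum_eq_zero fun g _ => ?_
        have himg : ∀ S : Finset (Fin n), (∀ j, g j ∈ S) ↔ Finset.univ.image g ⊆ S := by
          intro S
          rw [Finset.image_subset_iff]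
          simp
        calc (∑ S ∈ Finset.univ.powerset.filter (fun S : Finset (Fin n) => S.Nonempty),
              if ∀ j, g j ∈ S then (-1 : F) ^ (n - S.card) * ∏ j, L j (u (g j)) else 0)
            = (∑ S ∈ Finset.univ.powerset.filter (fun S : Finset (Fin n) => S.Nonempty),
                if Finset.univ.image g ⊆ S then (-1 : F) ^ (n - S.card) else 0)
                * ∏ j, L j (u (g j)) := by
              rw [Finset.sum_mul]
              refine Finset.sum_congr rfl fun S _ => ?_
              by_cases h : Finset.univ.image g ⊆ S
              · rw [if_pos h, if_pos ((himg S).2 h)]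
              · rw [if_neg h, if_neg (fun hc => h ((himg S).1 hc)), zero_mul]
          _ = 0 := by
              rw [aux_inner_zero (Finset.univ.image g)
                (Finset.univ_nonempty.image g)
                (lt_of_le_of_lt (le_trans Finset.card_image_le (le_of_eq (Finset.card_univ))) hn),
                zero_mul]

end AuxLemmas

universe uF in
/-- Nonzero evaluation transfer: a reduced polynomial vanishing as a function is zero. -/
lemma reduced_eq_zero_of_eval_eq_zero {d : ℕ} {F : Type uF} [Field F] [Fintype F]
    (h : MvPolynomial (Fin d) F)
    (hred : ∀ s ∈ h.support, ∀ i, s i ≤ Fintype.card F - 1)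
    (hev : ∀ v : Fin d → F, MvPolynomial.eval v h = 0) : h = 0 := by
  classical
  let e : Fin d ≃ ULift.{uF} (Fin d) := Equiv.ulift.symm
  have hinj : Function.Injective (MvPolynomial.rename (R := F) e) :=
    MvPolynomial.rename_injective _ e.injective
  have hzero : MvPolynomial.rename e h = 0 := by
    apply MvPolynomial.eq_zero_of_eval_eq_zero (ULift.{uF} (Fin d)) F
    · intro v
      rw [MvPolynomial.eval_rename]
      exact hev _
    · rw [MvPolynomial.mem_restrictDegree]
      intro s hs i
      have hcoeff : MvPolynomial.coeff s (MvPolynomial.rename e h) ≠ 0 :=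
        (MvPolynomial.mem_support_iff).1 hs
      obtain ⟨u, hu, hcu⟩ := MvPolynomial.coeff_rename_ne_zero _ _ _ hcoeff
      have hsi : s i = u (e.symm i) := by
        rw [← hu, Finsupp.mapDomain_equiv_apply]
      rw [hsi]
      exact hred u (MvPolynomial.mem_support_iff.2 hcu) _
  have : MvPolynomial.rename e h = MvPolynomial.rename e 0 := by
    rw [hzero, map_zero]
  exact hinj this

/-- Exponent reduction: `redExp q k` is the canonical exponent in `[1, q-1]`
(or `0` if `k = 0`) congruent to `k` modulo `q - 1`. -/
def redExp (q k : ℕ) : ℕ := if k = 0 then 0 else (k - 1) % (q - 1) + 1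

lemma redExp_zero (q : ℕ) : redExp q 0 = 0 := by simp [redExp]

lemma redExp_le (q k : ℕ) : redExp q k ≤ k := by
  rcases eq_or_ne k 0 with rfl | hk
  · simp [redExp]
  · have := Nat.mod_le (k - 1) (q - 1)
    simp only [redExp, if_neg hk]
    omega

lemma redExp_lt {q : ℕ} (hq : 2 ≤ q) (k : ℕ) : redExp q k < q := by
  rcases eq_or_ne k 0 with rfl | hk
  · simp [redExp]; omega
  · have : (k - 1) % (q - 1) < q - 1 := Nat.mod_lt _ (by omega)
    simp only [redExp, if_neg hk]
    omega

lemma pow_redExp {F : Type*} [Field F] [Fintype F] (x : F) (k : ℕ) :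
    x ^ redExp (Fintype.card F) k = x ^ k := by
  rcases eq_or_ne k 0 with rfl | hk
  · simp [redExp]
  rcases eq_or_ne x 0 with rfl | hx
  · rw [zero_pow hk, zero_pow]
    simp only [redExp, if_neg hk]
    omega
  · have hq1 : x ^ (Fintype.card F - 1) = 1 := FiniteField.pow_card_sub_one_eq_one x hx
    have hdm := Nat.div_add_mod (k - 1) (Fintype.card F - 1)
    have hd : k = (Fintype.card F - 1) * ((k - 1) / (Fintype.card F - 1))
        + ((k - 1) % (Fintype.card F - 1) + 1) := by omega
    calc x ^ redExp (Fintype.card F) k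
        = x ^ ((k - 1) % (Fintype.card F - 1) + 1) := by rw [redExp, if_neg hk]
      _ = (x ^ (Fintype.card F - 1)) ^ ((k - 1) / (Fintype.card F - 1))
            * x ^ ((k - 1) % (Fintype.card F - 1) + 1) := by rw [hq1, one_pow, one_mul]
      _ = x ^ k := by rw [← pow_mul, ← pow_add, ← hd]

/-- Reduction of a multivariate polynomial over a finite field: every exponent is
reduced modulo `q - 1` into `[1, q-1]` (or `0`), preserving the evaluation function. -/
noncomputable def reducePoly {d : ℕ} {F : Type*} [Field F] [Fintype F]
    (f : MvPolynomial (Fin d) F) : MvPolynomial (Fin d) F :=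
  ∑ m ∈ f.support,
    monomial (Finsupp.mapRange (redExp (Fintype.card F)) (redExp_zero _) m) (f.coeff m)

lemma eval_reducePoly {d : ℕ} {F : Type*} [Field F] [Fintype F]
    (f : MvPolynomial (Fin d) F) (a : Fin d → F) :
    eval a (reducePoly f) = eval a f := by
  conv_rhs => rw [← support_sum_monomial_coeff f]
  rw [reducePoly, map_sum, map_sum]
  refine Finset.sum_congr rfl fun m _ => ?_
  rw [eval_monomial, eval_monomial]
  congr 1
  rw [Finsupp.prod_fintype _ _ (fun j => pow_zero _),
    Finsupp.prod_fintype _ _ (fun j => pow_zero _)]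
  exact Finset.prod_congr rfl fun j _ => by rw [Finsupp.mapRange_apply, pow_redExp]

lemma reducePoly_support_lt {d : ℕ} {F : Type*} [Field F] [Fintype F]
    (f : MvPolynomial (Fin d) F) :
    ∀ m ∈ (reducePoly f).support, ∀ j, m j < Fintype.card F := by
  classical
  intro m hm j
  have hmem := MvPolynomial.support_sum hm
  obtain ⟨m', _, hm'⟩ := Finset.mem_biUnion.1 hmem
  rcases eq_or_ne (f.coeff m') 0 with h0 | h0
  · rw [h0, map_zero] at hm'
    simp at hm'
  · rw [MvPolynomial.support_monomial, if_neg h0] at hm'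
    rw [Finset.mem_singleton] at hm'
    subst hm'
    rw [Finsupp.mapRange_apply]
    exact redExp_lt Fintype.one_lt_card _

lemma totalDegree_reducePoly {d : ℕ} {F : Type*} [Field F] [Fintype F]
    (f : MvPolynomial (Fin d) F) :
    (reducePoly f).totalDegree ≤ f.totalDegree := by
  refine (MvPolynomial.totalDegree_finset_sum _ _).trans ?_
  refine Finset.sup_le fun m hm => ?_
  refine (MvPolynomial.totalDegree_monomial_le _ _).trans ?_
  have h1 : ((Finsupp.mapRange (redExp (Fintype.card F)) (redExp_zero _) m).sum
      fun _ e => e) ≤ m.sum fun _ e => e := by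
    rw [Finsupp.sum_fintype _ _ (fun _ => rfl), Finsupp.sum_fintype _ _ (fun _ => rfl)]
    exact Finset.sum_le_sum fun j _ => by rw [Finsupp.mapRange_apply]; exact redExp_le _ _
  exact h1.trans (MvPolynomial.le_totalDegree hm)

set_option maxHeartbeats 1000000 in
/-- let `F` be a finite field with `q = p^e` elements, `e ≥ 2`, and let
`n ≥ max{5, q}` and `d ≥ n`. Then there is a polynomial `n`-application
`α : F^d → F` whose reduced polynomial representative has total degree `> n`; in
particular `α` is not the evaluation function of any homogeneous polynomial of total
degree `n`. -/
theorem napplication_not_homogeneous_exists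
    {F : Type*} [Field F] [Fintype F] {p e : ℕ} [CharP F p] (hp : p.Prime)
    (he : 2 ≤ e) (hq : Fintype.card F = p ^ e)
    (n d : ℕ) (hn5 : 5 ≤ n) (hnq : Fintype.card F ≤ n) (hd : n ≤ d) :
    ∃ α : (Fin d → F) → F,
      -- `α` is an `n`-application:
      (∀ (a : F) (u : Fin d → F), α (a • u) = a ^ n * α u) ∧
      (∀ (w : Fin n → (Fin d → F)) (σ : Equiv.Perm (Fin n)),
        fnDefect α n (w ∘ σ) = fnDefect α n w) ∧
      (∀ (w : Fin n → (Fin d → F)) (i : Fin n) (x y : Fin d → F),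
        fnDefect α n (Function.update w i (x + y)) =
          fnDefect α n (Function.update w i x) +
            fnDefect α n (Function.update w i y)) ∧
      (∀ (w : Fin n → (Fin d → F)) (i : Fin n) (c : F) (x : Fin d → F),
        fnDefect α n (Function.update w i (c • x)) =
          c * fnDefect α n (Function.update w i x)) ∧
      -- its reduced polynomial representative has total degree `> n`:
      (∀ f : MvPolynomial (Fin d) F,
        (∀ m ∈ f.support, ∀ j, m j < Fintype.card F) →
        (∀ a, MvPolynomial.eval a f = α a) → n < f.totalDegree) ∧
      -- in particular, `α` is not given by any homogeneous polynomial of degree `n`: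
      ¬ ∃ g : MvPolynomial (Fin d) F, g.IsHomogeneous n ∧
          ∀ a, MvPolynomial.eval a g = α a := by
  classical
  haveI : Fact p.Prime := ⟨hp⟩
  have hp2 : 2 ≤ p := hp.two_le
  have hq2 : 2 ≤ Fintype.card F := Fintype.one_lt_card
  set q := Fintype.card F with hqdef
  set P := p ^ (e - 1) with hPdef
  have hPq : p * P = q := by
    rw [hPdef, hq, ← pow_succ']
    congr 1
    omega
  have hP2 : 2 ≤ P := le_trans hp2 (Nat.le_self_pow (by omega) p)
  have hPltq : P < q := by
    have := Nat.mul_le_mul_right P hp2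
    omega
  set A := if e = 2 then p + 2 else p + 1 with hA
  have hA1 : p + 1 ≤ A := by rw [hA]; split <;> omega
  have hkey : A * P ≤ n + q - 1 ∧ q + A ≤ A * P := by
    rcases eq_or_ne e 2 with h2 | h2
    · have hPp : P = p := by rw [hPdef, h2, pow_one]
      have hqp : q = p * p := by rw [← hPq, hPp]
      have hA2 : A = p + 2 := by rw [hA, if_pos h2]
      have h2p : 2 * p + 1 ≤ n := by
        rcases eq_or_ne p 2 with rfl | hp3
        · omega
        · have h3 : 3 ≤ p := by omega
          have hpp : 3 * p ≤ p * p := Nat.mul_le_mul_right p h3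
          omega
      have hexp : (p + 2) * p = p * p + 2 * p := by ring
      constructor
      · rw [hA2, hPp]; omega
      · rw [hA2, hPp]; omega
    · have he3 : 3 ≤ e := by
        rcases Nat.lt_or_ge e 3 with h | h
        · omega
        · exact h
      have hA2 : A = p + 1 := by rw [hA, if_neg h2]
      have hPp2 : p * p ≤ P := by
        rw [hPdef]
        calc p * p = p ^ 2 := (sq p).symm
          _ ≤ p ^ (e - 1) := Nat.pow_le_pow_right (by omega) (by omega)
      have hApP : A * P = q + P := by rw [hA2, add_mul, one_mul, hPq]
      constructor
      · rw [hApP]; omega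
      · rw [hApP]
        have := Nat.mul_le_mul_right p hp2
        omega
  obtain ⟨key1, key2⟩ := hkey
  set B := n + q - 1 - A * P with hB
  have hBsum : A * P + B = n + (q - 1) := by omega
  have hABn : A + B + 1 ≤ n := by omega
  have hd0 : 0 < d := by omega
  set Mf : Fin d → ℕ :=
    fun j => if (j : ℕ) < A then P else if (j : ℕ) < A + B then 1 else 0 with hMf
  have hMf0 : ∀ j : Fin d, Mf j ≠ 0 → (j : ℕ) < A + B := by
    intro j h
    by_contra hc
    push_neg at hc
    refine h ?_
    simp only [hMf]
    rw [if_neg (by omega), if_neg (by omega)]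
  have hMfP : ∀ j : Fin d, (j : ℕ) < A → Mf j = P := by
    intro j hj
    simp only [hMf]
    rw [if_pos hj]
  have hMfle : ∀ j : Fin d, Mf j ≤ q - 1 := by
    intro j
    simp only [hMf]
    split
    · omega
    · split <;> omega
  -- the sum of all exponents
  have hsum : ∑ j : Fin d, Mf j = A * P + B := by
    have hg : ∀ j : Fin d, Mf j
        = (fun i : ℕ => if i < A then P else if i < A + B then 1 else 0) ((j : ℕ)) := by
      intro j; rfl
    calc ∑ j : Fin d, Mf j
        = ∑ i ∈ Finset.range d, (if i < A then P else if i < A + B then 1 else 0) := by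
          rw [funext hg]
          exact Fin.sum_univ_eq_sum_range _ d
      _ = ∑ i ∈ Finset.range (A + B), (if i < A then P else if i < A + B then 1 else 0) := by
          refine (Finset.sum_subset (Finset.range_subset_range.2 (by omega)) ?_).symm
          intro i _ hi
          rw [Finset.mem_range] at hi
          push_neg at hi
          rw [if_neg (by omega), if_neg (by omega)]
      _ = (∑ i ∈ Finset.Ico 0 A, (if i < A then P else if i < A + B then 1 else 0))
          + ∑ i ∈ Finset.Ico A (A + B), (if i < A then P else if i < A + B then 1 else 0) := by
          rw [Finset.sum_Ico_consecutive _ (Nat.zero_le A) (Nat.le_add_right A B),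
            ← Finset.range_eq_Ico]
      _ = A * P + B := by
          congr 1
          · rw [← Finset.range_eq_Ico]
            rw [Finset.sum_congr rfl (fun i hi => if_pos (Finset.mem_range.1 hi))]
            rw [Finset.sum_const, Finset.card_range, smul_eq_mul]
          · rw [Finset.sum_congr rfl (fun i hi => ?_), Finset.sum_const, Nat.card_Ico,
              smul_eq_mul, Nat.add_sub_cancel_left, mul_one]
            have := Finset.mem_Ico.1 hi
            rw [if_neg (by omega), if_pos (by omega)]
  -- the function α
  set α : (Fin d → F) → F := fun u => ∏ j : Fin d, (u j) ^ (Mf j) with hα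
  -- α as product of additive functions
  set L : {j : Fin d // Mf j ≠ 0} → (Fin d → F) → F :=
    fun j v => (v (j : Fin d)) ^ (Mf (j : Fin d)) with hLdef
  have hLadd : ∀ j (x y : Fin d → F), L j (x + y) = L j x + L j y := by
    intro j x y
    simp only [hLdef, Pi.add_apply]
    rcases Nat.lt_or_ge ((j : Fin d) : ℕ) A with hj | hj
    · rw [hMfP _ hj, hPdef]
      exact add_pow_char_pow (x ↑j) (y ↑j) p (e - 1)
    · have hj2 : ((j : Fin d) : ℕ) < A + B := hMf0 _ j.2
      have h1 : Mf (j : Fin d) = 1 := by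
        simp only [hMf]
        rw [if_neg (by omega), if_pos hj2]
      rw [h1, pow_one, pow_one, pow_one]
  haveI hne : Nonempty {j : Fin d // Mf j ≠ 0} := by
    refine ⟨⟨⟨0, hd0⟩, ?_⟩⟩
    rw [hMfP ⟨0, hd0⟩ (by simp; omega)]
    omega
  have hcard : Fintype.card {j : Fin d // Mf j ≠ 0} < n := by
    rw [Fintype.card_subtype]
    have hle : (Finset.univ.filter fun j : Fin d => Mf j ≠ 0).card
        ≤ (Finset.range (A + B)).card := by
      refine Finset.card_le_card_of_injOn (fun j : Fin d => (j : ℕ)) ?_ ?_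
      · intro j hj
        rw [Finset.mem_coe] at hj ⊢
        rw [Finset.mem_range]
        exact hMf0 j (Finset.mem_filter.1 hj).2
      · intro j _ j' _ h
        exact Fin.val_injective h
    rw [Finset.card_range] at hle
    omega
  have hαprod : α = fun v => ∏ j : {j : Fin d // Mf j ≠ 0}, L j v := by
    funext v
    rw [hα]
    calc ∏ j : Fin d, (v j) ^ (Mf j)
        = ∏ j ∈ Finset.univ.filter (fun j : Fin d => Mf j ≠ 0), (v j) ^ (Mf j) := by
          refine (Finset.prod_subset (Finset.filter_subset _ _) ?_).symm
          intro j _ hj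
          have : Mf j = 0 := by
            by_contra h
            exact hj (Finset.mem_filter.2 ⟨Finset.mem_univ _, h⟩)
          rw [this, pow_zero]
      _ = ∏ j : {j : Fin d // Mf j ≠ 0}, L j v := by
          rw [← Finset.prod_subtype (Finset.univ.filter fun j : Fin d => Mf j ≠ 0)
            (fun j => by simp) (fun j => (v j) ^ (Mf j))]
  have hZ : ∀ w : Fin n → (Fin d → F), fnDefect α n w = 0 := by
    intro w
    rw [hαprod]
    exact fnDefect_prod_eq_zero L hLadd hcard w
  -- the power reduction
  have hpowred : ∀ x : F, x ^ (n + (q - 1)) = x ^ n := by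
    intro x
    rcases eq_or_ne x 0 with rfl | hx
    · rw [zero_pow (by omega), zero_pow (by omega)]
    · rw [pow_add, FiniteField.pow_card_sub_one_eq_one x hx, mul_one]
  -- the monomial
  set M : (Fin d) →₀ ℕ :=
    Finsupp.onFinset Finset.univ Mf (fun _ _ => Finset.mem_univ _) with hM
  have hMapp : ∀ j, M j = Mf j := fun j => Finsupp.onFinset_apply
  set g0 : MvPolynomial (Fin d) F := monomial M 1 with hg0
  have heval0 : ∀ u, eval u g0 = α u := by
    intro u
    rw [hg0, eval_monomial, one_mul,
      Finsupp.prod_fintype _ _ (fun j => pow_zero _), hα]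
    exact Finset.prod_congr rfl fun j _ => by rw [hMapp]
  have hMsum : (M.sum fun _ e => e) = A * P + B := by
    rw [Finsupp.sum_fintype _ _ (fun _ => rfl), ← hsum]
    exact Finset.sum_congr rfl fun j _ => hMapp j
  -- item 5
  have item5 : ∀ f : MvPolynomial (Fin d) F,
      (∀ m ∈ f.support, ∀ j, m j < q) → (∀ v, eval v f = α v) → n < f.totalDegree := by
    intro f hred hev
    have hev0 : ∀ v : Fin d → F, eval v (f - g0) = 0 := by
      intro v
      rw [map_sub, hev, heval0, sub_self]
    have hmem : ∀ s ∈ (f - g0).support, ∀ i, s i ≤ Fintype.card F - 1 := by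
      intro s hs i
      have hmem2 := MvPolynomial.support_sub (Fin d) f g0 hs
      rcases Finset.mem_union.1 hmem2 with h | h
      · have := hred s h i
        omega
      · rw [hg0, MvPolynomial.support_monomial, if_neg one_ne_zero,
          Finset.mem_singleton] at h
        subst h
        rw [hMapp]
        exact hMfle i
    have hsub : f - g0 = 0 := reduced_eq_zero_of_eval_eq_zero _ hmem hev0
    have hfg : f = g0 := sub_eq_zero.1 hsub
    rw [hfg, hg0, MvPolynomial.totalDegree_monomial _ one_ne_zero, hMsum]
    omega
  refine ⟨α, ?_, ?_, ?_, ?_, item5, ?_⟩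
  · -- scaling
    intro c u
    calc α (c • u) = ∏ j : Fin d, (c * u j) ^ Mf j := by
          simp only [hα, Pi.smul_apply, smul_eq_mul]
      _ = ∏ j : Fin d, c ^ Mf j * (u j) ^ Mf j := by
          exact Finset.prod_congr rfl fun j _ => mul_pow _ _ _
      _ = (∏ j : Fin d, c ^ Mf j) * ∏ j : Fin d, (u j) ^ Mf j :=
          Finset.prod_mul_distrib
      _ = c ^ (∑ j : Fin d, Mf j) * α u := by
          rw [Finset.prod_pow_eq_pow_sum, hα]
      _ = c ^ n * α u := by rw [hsum, hBsum, hpowred]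
  · intro w σ
    rw [hZ, hZ]
  · intro w i x y
    rw [hZ, hZ, hZ, add_zero]
  · intro w i c x
    rw [hZ, hZ, mul_zero]
  · rintro ⟨g, hgh, hgev⟩
    have h1 : n < (reducePoly g).totalDegree :=
      item5 _ (reducePoly_support_lt _) (fun v => by rw [eval_reducePoly, hgev])
    have h2 : (reducePoly g).totalDegree ≤ g.totalDegree := totalDegree_reducePoly _
    have h3 : g.totalDegree ≤ n := hgh.totalDegree_le
    omega
end

section
/- Let F be a field of prime characteristic p, let V be an F-vector space, let α : V → F satisfy α(0) = 0, and let n ≥ p. Then for all u, v_1, …, v_{n−p} ∈ V, the n-th defect satisfies Δ^n α(u, …, u, v_1, …, v_{n−p}) = 0, where u is repeated p times. In other words, Δ^n α is a characteristic form. -/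
open Finset

/-- over a field of prime characteristic `p`, for any `α : V → F` with
`α(0) = 0` and any `n ≥ p`, the `n`-th defect vanishes whenever `p` of its arguments are
equal: `Δ^n α(p*u, v_1, …, v_{n−p}) = 0`. In other words, `Δ^n α` is a characteristic
form. -/
theorem defect_is_characteristic
    {F V : Type*} [Field F] [AddCommGroup V] [Module F V]
    {p : ℕ} [CharP F p] (hp : p.Prime)
    (α : V → F) (h0 : α 0 = 0) (n : ℕ) (hn : p ≤ n) :
    ∀ (u : V) (w : Fin n → V),
      (∀ i : Fin n, (i : ℕ) < p → w i = u) → fnDefect α n w = 0 := by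
  intro u w hw
  classical
  haveI : Fact p.Prime := ⟨hp⟩
  set P : Finset (Fin n) := Finset.univ.filter (fun i => (i : ℕ) < p) with hPdef
  have hPcard : P.card = p := by
    have hPi : P = Finset.image (Fin.castLE hn) Finset.univ := by
      ext i
      simp only [hPdef, mem_filter, mem_univ, true_and, mem_image]
      constructor
      · intro h; exact ⟨⟨i, h⟩, rfl⟩
      · rintro ⟨j, -, rfl⟩; exact j.isLt
    rw [hPi, Finset.card_image_of_injective _ (Fin.castLE_injective hn), card_univ,
      Fintype.card_fin]
  have hPCcard : Pᶜ.card = n - p := by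
    rw [Finset.card_compl, Fintype.card_fin, hPcard]
  have hkey : (-1 : F) ^ p + 1 = 0 := by
    rw [neg_one_pow_char F p]; ring
  have hpu : (p : ℕ) • u = 0 := by
    rw [← Nat.cast_smul_eq_nsmul F, CharP.cast_eq_zero, zero_smul]
  have hfull : fnDefect α n w =
      ∑ S ∈ (Finset.univ : Finset (Fin n)).powerset,
        (-1 : F) ^ (n - S.card) * α (∑ i ∈ S, w i) := by
    rw [fnDefect,
      ← Finset.sum_filter_add_sum_filter_not Finset.univ.powerset
        (fun S : Finset (Fin n) => S.Nonempty)]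
    have h1 : Finset.univ.powerset.filter (fun S : Finset (Fin n) => ¬ S.Nonempty) = {∅} := by
      ext S; simp [Finset.not_nonempty_iff_eq_empty]
    rw [h1]
    simp [h0]
  have hSrec : ∀ S : Finset (Fin n), (S ∩ P) ∪ (S \ P) = S := fun S => by
    rw [Finset.union_comm, Finset.sdiff_union_inter]
  rw [hfull]
  rw [show (∑ S ∈ (Finset.univ : Finset (Fin n)).powerset,
        (-1 : F) ^ (n - S.card) * α (∑ i ∈ S, w i))
      = ∑ AT ∈ P.powerset ×ˢ Pᶜ.powerset,
          (-1 : F) ^ (n - (AT.1 ∪ AT.2).card) * α (∑ i ∈ AT.1 ∪ AT.2, w i) from by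
    refine Finset.sum_nbij' (fun S => (S ∩ P, S \ P)) (fun AT => AT.1 ∪ AT.2) ?_ ?_ ?_ ?_ ?_
    · intro S _
      simp only [Finset.mem_product, Finset.mem_powerset]
      exact ⟨Finset.inter_subset_right, fun i hi => by
        simp only [Finset.mem_compl]; exact (Finset.mem_sdiff.1 hi).2⟩
    · intro AT _; simp
    · intro S _; exact hSrec S
    · intro AT hAT
      simp only [Finset.mem_product, Finset.mem_powerset] at hAT
      obtain ⟨hA, hT⟩ := hAT
      have hdisj : Disjoint AT.2 P := by
        refine Finset.disjoint_left.2 fun i hi hiP => ?_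
        exact (Finset.mem_compl.1 (hT hi)) hiP
      ext1
      · simp only
        rw [Finset.union_inter_distrib_right, Finset.inter_eq_left.2 hA,
          (Finset.disjoint_iff_inter_eq_empty.1 hdisj), Finset.union_empty]
      · simp only
        rw [Finset.union_sdiff_distrib, Finset.sdiff_eq_empty_iff_subset.2 hA,
          Finset.empty_union, Finset.sdiff_eq_self_of_disjoint hdisj]
    · intro S _
      dsimp only
      rw [hSrec S]]
  rw [Finset.sum_product]
  rw [Finset.sum_comm]
  refine Finset.sum_eq_zero fun T hT => ?_
  rw [Finset.mem_powerset] at hT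
  have hTcard : T.card ≤ n - p := hPCcard ▸ Finset.card_le_card hT
  have hTP : Disjoint T P := by
    refine Finset.disjoint_left.2 fun i hi hiP => (Finset.mem_compl.1 (hT hi)) hiP
  set s : V := ∑ i ∈ T, w i with hs
  have hinner : ∀ A ∈ P.powerset,
      (-1 : F) ^ (n - (A ∪ T).card) * α (∑ i ∈ A ∪ T, w i)
        = (-1 : F) ^ (n - (A.card + T.card)) * α (A.card • u + s) := by
    intro A hA
    rw [Finset.mem_powerset] at hA
    have hdisj : Disjoint A T := (hTP.symm.mono_left hA)
    rw [Finset.card_union_of_disjoint hdisj, Finset.sum_union hdisj]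
    congr 2
    rw [show (∑ i ∈ A, w i) = ∑ i ∈ A, u from Finset.sum_congr rfl fun i hi =>
      hw i (by have := hA hi; simpa [hPdef] using this)]
    rw [Finset.sum_const]
  rw [Finset.sum_congr rfl hinner]
  have hgroup : ∑ A ∈ P.powerset, (-1 : F) ^ (n - (A.card + T.card)) * α (A.card • u + s)
      = ∑ k ∈ Finset.range (p + 1),
          (p.choose k : ℕ) • ((-1 : F) ^ (n - (k + T.card)) * α (k • u + s)) := by
    rw [Finset.sum_powerset, hPcard]
    refine Finset.sum_congr rfl fun k _ => ?_
    rw [← hPcard, Finset.sum_powersetCard k P (fun c => (-1 : F) ^ (n - (c + T.card)) * α (c • u + s))]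
  rw [hgroup]
  rw [Finset.sum_range_succ]
  have hp1 : 1 ≤ p := hp.one_lt.le.trans' (by norm_num)
  rw [show Finset.range p = Finset.range 1 ∪ Finset.Ico 1 p from by
    rw [Finset.range_eq_Ico]
    exact (Finset.Ico_union_Ico_eq_Ico (Nat.zero_le 1) hp1).symm]
  rw [Finset.sum_union (by
    rw [Finset.range_eq_Ico]; exact Finset.Ico_disjoint_Ico_consecutive 0 1 p)]
  have hmid : ∑ k ∈ Finset.Ico 1 p,
      (p.choose k : ℕ) • ((-1 : F) ^ (n - (k + T.card)) * α (k • u + s)) = 0 := by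
    refine Finset.sum_eq_zero fun k hk => ?_
    rw [Finset.mem_Ico] at hk
    have hdvd : p ∣ p.choose k := hp.dvd_choose_self (by omega) hk.2
    rw [nsmul_eq_mul, ((CharP.cast_eq_zero_iff F p _).2 hdvd : ((p.choose k : ℕ) : F) = 0),
      zero_mul]
  rw [hmid, add_zero]
  simp only [Finset.sum_range_one, Nat.choose_zero_right, Nat.choose_self, one_smul, zero_smul,
    zero_add]
  rw [hpu, zero_add]
  have hexp : n - T.card = (n - (p + T.card)) + p := by omega
  rw [hexp, pow_add]
  rw [show (-1 : F) ^ (n - (p + T.card)) * (-1 : F) ^ p * α s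
        + (-1 : F) ^ (n - (p + T.card)) * α s
      = ((-1 : F) ^ p + 1) * ((-1 : F) ^ (n - (p + T.card)) * α s) from by ring, hkey, zero_mul]
end

section
/- Let F be a field, V an F-vector space, and let φ, ψ : V^n → F be characteristic symmetric n-additive forms such that φ(u_1,…,u_n) = ψ(u_1,…,u_n) whenever u_1, …, u_n are pairwise distinct vectors of V. Then φ = ψ. -/
open Finset Function

section Aux

variable {F V : Type*} [Field F] [AddCommGroup V] [Module F V]
    {p : ℕ} [CharP F p] {n : ℕ}

/-- If some slot of `w` is zero, a multiadditive form vanishes at `w`. -/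
lemma aux_zero (θ : (Fin n → V) → F)
    (hadd : ∀ (w : Fin n → V) (i : Fin n) (x y : V),
      θ (Function.update w i (x + y)) =
        θ (Function.update w i x) + θ (Function.update w i y))
    (w : Fin n → V) (i : Fin n) (hwi : w i = 0) : θ w = 0 := by
  have h := hadd w i 0 0
  rw [add_zero] at h
  have h0 : θ (Function.update w i 0) = 0 := left_eq_add.mp h
  rwa [← hwi, Function.update_eq_self] at h0

/-- Pulling a natural-number scalar out of one slot. -/
lemma aux_smul (θ : (Fin n → V) → F)
    (hadd : ∀ (w : Fin n → V) (i : Fin n) (x y : V),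
      θ (Function.update w i (x + y)) =
        θ (Function.update w i x) + θ (Function.update w i y))
    (w : Fin n → V) (i : Fin n) (k : ℕ) (x : V) :
    θ (Function.update w i (k • x)) = k • θ (Function.update w i x) := by
  induction k with
  | zero =>
      rw [zero_smul, zero_smul]
      exact aux_zero θ hadd _ i (Function.update_self i 0 w)
  | succ k ih =>
      rw [succ_nsmul, hadd, ih, succ_nsmul]

/-- Pulling natural-number scalars out of a set of slots. -/
lemma aux_rescale (θ : (Fin n → V) → F)
    (hadd : ∀ (w : Fin n → V) (i : Fin n) (x y : V),
      θ (Function.update w i (x + y)) =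
        θ (Function.update w i x) + θ (Function.update w i y))
    (t : Finset (Fin n)) (w : Fin n → V) (a : Fin n → ℕ) :
    θ (fun s => if s ∈ t then a s • w s else w s) =
      (∏ s ∈ t, ((a s : F))) * θ w := by
  classical
  induction t using Finset.induction_on with
  | empty => simp
  | @insert i t hi ih =>
      have hfun : (fun s => if s ∈ insert i t then a s • w s else w s) =
          Function.update (fun s => if s ∈ t then a s • w s else w s) i (a i • w i) := by
        funext s
        rw [Function.update_apply]
        by_cases hs : s = i
        · simp [hs]
        · simp [hs, Finset.mem_insert]
      have hgi : (fun s => if s ∈ t then a s • w s else w s) i = w i := by simp [hi]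
      rw [hfun, aux_smul θ hadd _ i (a i) (w i), ← hgi, Function.update_eq_self, ih,
        Finset.prod_insert hi, nsmul_eq_mul, mul_assoc]

/-- If a tuple takes the value `u` on at least `p` slots, a characteristic symmetric
form vanishes on it. -/
lemma aux_char (θ : (Fin n → V) → F)
    (hsym : ∀ (w : Fin n → V) (σ : Equiv.Perm (Fin n)), θ (w ∘ σ) = θ w)
    (hchar : p ≠ 0 → p ≤ n → ∀ (u : V) (w : Fin n → V),
      (∀ i : Fin n, (i : ℕ) < p → w i = u) → θ w = 0)
    (hp : p ≠ 0) (u : V) (w : Fin n → V) (T : Finset (Fin n))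
    (hTcard : T.card = p) (hTu : ∀ s ∈ T, w s = u) : θ w = 0 := by
  classical
  have hpn : p ≤ n := by
    have h1 : T.card ≤ (Finset.univ : Finset (Fin n)).card := Finset.card_le_univ T
    rwa [hTcard, Finset.card_univ, Fintype.card_fin] at h1
  have eA : {x : Fin n // (x : ℕ) < p} ≃ Fin p :=
    { toFun := fun x => ⟨(x.1 : ℕ), x.2⟩
      invFun := fun y => ⟨⟨(y : ℕ), lt_of_lt_of_le y.2 hpn⟩, y.2⟩
      left_inv := fun x => by ext; rfl
      right_inv := fun y => rfl }
  have eB : {x : Fin n // x ∈ T} ≃ Fin p :=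
    Fintype.equivFinOfCardEq (by rw [Fintype.card_coe, hTcard])
  let e : {x : Fin n // (x : ℕ) < p} ≃ {x : Fin n // x ∈ T} := eA.trans eB.symm
  let σ : Equiv.Perm (Fin n) := e.extendSubtype
  have hw' : ∀ i : Fin n, (i : ℕ) < p → (w ∘ σ) i = u := by
    intro i hi
    have hmem : σ i ∈ T := e.extendSubtype_mem i hi
    exact hTu _ hmem
  have := hchar hp hpn u (w ∘ σ) hw'
  rwa [hsym w σ] at this

/-- Main auxiliary result: a characteristic symmetric multiadditive form vanishing
on all injective tuples vanishes identically. -/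
lemma aux_main (θ : (Fin n → V) → F)
    (hsym : ∀ (w : Fin n → V) (σ : Equiv.Perm (Fin n)), θ (w ∘ σ) = θ w)
    (hadd : ∀ (w : Fin n → V) (i : Fin n) (x y : V),
      θ (Function.update w i (x + y)) =
        θ (Function.update w i x) + θ (Function.update w i y))
    (hchar : p ≠ 0 → p ≤ n → ∀ (u : V) (w : Fin n → V),
      (∀ i : Fin n, (i : ℕ) < p → w i = u) → θ w = 0)
    (h0 : ∀ w : Fin n → V, Function.Injective w → θ w = 0) :
    ∀ w : Fin n → V, θ w = 0 := by
  classical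
  suffices H : ∀ (m : ℕ) (w : Fin n → V),
      n - (Finset.image w Finset.univ).card ≤ m → θ w = 0 by
    intro w
    exact H n w (Nat.sub_le _ _)
  intro m
  induction m with
  | zero =>
      intro w hw
      have hle : (Finset.image w Finset.univ).card ≤ n := by
        have := Finset.card_image_le (s := (Finset.univ : Finset (Fin n))) (f := w)
        simpa using this
      have hc : (Finset.image w Finset.univ).card = (Finset.univ : Finset (Fin n)).card := by
        rw [Finset.card_univ, Fintype.card_fin]; omega
      have hinjOn : Set.InjOn w (Finset.univ : Finset (Fin n)) :=
        Finset.card_image_iff.mp hc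
      have hinj : Function.Injective w := fun a b hab =>
        hinjOn (by simp) (by simp) hab
      exact h0 w hinj
  | succ m ih =>
      intro w hw
      by_cases hinj : Function.Injective w
      · exact h0 w hinj
      rw [Function.not_injective_iff] at hinj
      obtain ⟨i, j, hij, hne⟩ := hinj
      set u : V := w i with hu
      by_cases hu0 : u = 0
      · exact aux_zero θ hadd w i hu0
      by_cases hA : ∃ k : ℕ, (k : F) ≠ 0 ∧ k • u ∉ Finset.image w Finset.univ
      · -- Case A : replace one of the repeated slots by a fresh multiple of `u`.
        obtain ⟨k, hk0, hknot⟩ := hA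
        set w' : Fin n → V := Function.update w j (k • u) with hw'def
        have hupd : Function.update w j u = w := by
          rw [hij]; exact Function.update_eq_self j w
        have hθ : θ w' = (k : F) * θ w := by
          rw [hw'def, aux_smul θ hadd w j k u, hupd, nsmul_eq_mul]
        -- the image strictly grows
        have hsub : Finset.image w Finset.univ ⊆ Finset.image w' Finset.univ := by
          intro v hv
          rw [Finset.mem_image] at hv ⊢
          obtain ⟨s, _, hs⟩ := hv
          by_cases hsj : s = j
          · refine ⟨i, Finset.mem_univ i, ?_⟩
            rw [hw'def, Function.update_of_ne hne, ← hu, hij, ← hsj]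
            exact hs
          · exact ⟨s, Finset.mem_univ s, by rw [hw'def, Function.update_of_ne hsj, hs]⟩
        have hmem : k • u ∈ Finset.image w' Finset.univ := by
          rw [Finset.mem_image]
          exact ⟨j, Finset.mem_univ j, by rw [hw'def, Function.update_self]⟩
        have hlt : (Finset.image w Finset.univ).card < (Finset.image w' Finset.univ).card :=
          Finset.card_lt_card ⟨hsub, fun hcontra => hknot (hcontra hmem)⟩
        have hw'0 : θ w' = 0 := ih w' (by omega)
        rw [hw'0] at hθ
        exact (mul_eq_zero.mp hθ.symm).resolve_left hk0
      · -- Case B : all nonzero multiples of `u` occur among the values of `w`.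
        push_neg at hA
        -- cast equality facts
        have hcast : ∀ k k' : ℕ, (k : F) = (k' : F) → k % p = k' % p := by
          intro k k' hkk
          exact (CharP.natCast_eq_natCast F p).mp hkk
        have hsmulinj : ∀ k k' : ℕ, k • u = k' • u → (k : F) = (k' : F) := by
          intro k k' hkk
          have : (k : F) • u = (k' : F) • u := by
            rw [Nat.cast_smul_eq_nsmul, Nat.cast_smul_eq_nsmul]; exact hkk
          exact smul_left_injective F hu0 this
        have hp : p ≠ 0 := by
          intro hp0
          -- in characteristic zero infinitely many distinct multiples must occur
          have hsubset : (Finset.Icc 1 (n + 1)).image (fun k : ℕ => k • u) ⊆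
              Finset.image w Finset.univ := by
            intro v hv
            rw [Finset.mem_image] at hv
            obtain ⟨k, hk, rfl⟩ := hv
            rw [Finset.mem_Icc] at hk
            refine hA k ?_
            intro hkz
            have h9 := hcast k 0 (by rw [hkz]; simp)
            rw [hp0, Nat.mod_zero, Nat.mod_zero] at h9
            omega
          have hinj2 : Set.InjOn (fun k : ℕ => k • u) (Finset.Icc 1 (n + 1)) := by
            intro k _ k' _ hkk
            have := hcast k k' (hsmulinj k k' hkk)
            rw [hp0] at this
            simpa using this
          have h1 := Finset.card_le_card hsubset
          rw [Finset.card_image_of_injOn hinj2, Nat.card_Icc] at h1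
          have h2 : (Finset.image w Finset.univ).card ≤ n := by
            have := Finset.card_image_le (s := (Finset.univ : Finset (Fin n))) (f := w)
            simpa using this
          omega
        have hp2 : 2 ≤ p := by
          rcases CharP.char_is_prime_or_zero F p with hprime | h0
          · exact hprime.two_le
          · exact absurd h0 hp
        have hdist : ∀ k k' : ℕ, 0 < k → k < p → 0 < k' → k' < p → k • u = k' • u → k = k' := by
          intro k k' hk1 hkp hk1' hkp' hkk
          have := hcast k k' (hsmulinj k k' hkk)
          rw [Nat.mod_eq_of_lt hkp, Nat.mod_eq_of_lt hkp'] at this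
          exact this
        have hkne : ∀ k : ℕ, 0 < k → k < p → (k : F) ≠ 0 := by
          intro k hk1 hkp hkz
          rw [CharP.cast_eq_zero_iff F p] at hkz
          have := Nat.le_of_dvd hk1 hkz
          omega
        -- choose, for every `k` with `0 < k < p`, a slot carrying the value `k • u`
        have hks : ∀ k : ℕ, 0 < k → k < p → ∃ s : Fin n, w s = k • u := by
          intro k hk1 hkp
          have hmem := hA k (hkne k hk1 hkp)
          rw [Finset.mem_image] at hmem
          obtain ⟨s, _, hs⟩ := hmem
          exact ⟨s, hs⟩
        let P : Fin n → Prop := fun s => ∃ k : ℕ, 0 < k ∧ k < p ∧ w s = k • u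
        let sl : ℕ → Fin n := fun k =>
          if h : 0 < k ∧ k < p then (hks k h.1 h.2).choose else i
        have hsl : ∀ k : ℕ, 0 < k → k < p → w (sl k) = k • u := by
          intro k hk1 hkp
          have h : 0 < k ∧ k < p := ⟨hk1, hkp⟩
          simp only [sl, dif_pos h]
          exact (hks k h.1 h.2).choose_spec
        -- the set of slots that will be replaced by `u`
        have hwj : w j = u := hij.symm
        have hwiu : w i = u := rfl
        have hslinj : Set.InjOn sl (Finset.Ico 2 p) := by
          intro k hk k' hk' hkk
          rw [Finset.coe_Ico, Set.mem_Ico] at hk hk'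
          have h1 := hsl k (by omega) hk.2
          have h2 := hsl k' (by omega) hk'.2
          rw [hkk, h2] at h1
          exact (hdist k' k (by omega) hk'.2 (by omega) hk.2 h1).symm
        set T : Finset (Fin n) := (Finset.Ico 2 p).image sl ∪ {i, j} with hTdef
        have hdisj : Disjoint ((Finset.Ico 2 p).image sl) ({i, j} : Finset (Fin n)) := by
          rw [Finset.disjoint_left]
          intro s hs hsij
          rw [Finset.mem_image] at hs
          obtain ⟨k, hk, rfl⟩ := hs
          rw [Finset.mem_Ico] at hk
          have hval := hsl k (by omega) hk.2
          have hvalu : w (sl k) = u := by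
            rcases Finset.mem_insert.mp hsij with h | h
            · rw [h]
            · rw [Finset.mem_singleton.mp h]; exact hwj
          have : k • u = (1 : ℕ) • u := by
            rw [← hval, hvalu, one_smul]
          have := hdist k 1 (by omega) hk.2 (by omega) (by omega) this
          omega
        have hTcard : T.card = p := by
          rw [hTdef, Finset.card_union_of_disjoint hdisj,
            Finset.card_image_of_injOn hslinj, Nat.card_Ico, Finset.card_pair hne]
          omega
        have hTP : ∀ s ∈ T, P s := by
          intro s hs
          rw [hTdef, Finset.mem_union] at hs
          rcases hs with hs | hs
          · rw [Finset.mem_image] at hs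
            obtain ⟨k, hk, rfl⟩ := hs
            rw [Finset.mem_Ico] at hk
            exact ⟨k, by omega, hk.2, hsl k (by omega) hk.2⟩
          · refine ⟨1, by omega, by omega, ?_⟩
            rw [one_smul]
            rcases Finset.mem_insert.mp hs with h | h
            · rw [h]
            · rw [Finset.mem_singleton.mp h]; exact hwj
        -- the merged tuple and the scalars
        let w₂ : Fin n → V := fun s => if P s then u else w s
        let a : Fin n → ℕ := fun s => if h : P s then h.choose else 1
        have hws : ∀ s, w s = a s • w₂ s := by
          intro s
          by_cases h : P s
          · have hc := h.choose_spec
            simp only [w₂, a, if_pos h, dif_pos h]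
            exact hc.2.2
          · simp only [w₂, a, if_neg h, dif_neg h, one_smul]
        have haz : ∀ s, (a s : F) ≠ 0 := by
          intro s
          by_cases h : P s
          · have hc := h.choose_spec
            simp only [a, dif_pos h]
            exact hkne _ hc.1 hc.2.1
          · simp only [a, dif_neg h]
            simp
        have hresc := aux_rescale θ hadd Finset.univ w₂ a
        have hfun : (fun s => if s ∈ (Finset.univ : Finset (Fin n)) then a s • w₂ s else w₂ s)
            = w := by
          funext s
          rw [if_pos (Finset.mem_univ s), ← hws]
        rw [hfun] at hresc
        have hw₂ : θ w₂ = 0 := by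
          refine aux_char θ hsym hchar hp u w₂ T hTcard ?_
          intro s hs
          simp only [w₂, if_pos (hTP s hs)]
        rw [hresc, hw₂, mul_zero]

end Aux

/-- two characteristic symmetric `n`-additive forms that agree on all
tuples of pairwise distinct vectors are equal. -/
theorem characteristic_forms_agreeing_on_distinct_tuples
    {F V : Type*} [Field F] [AddCommGroup V] [Module F V]
    {p : ℕ} [CharP F p] {n : ℕ}
    (φ ψ : (Fin n → V) → F)
    -- symmetry
    (hφsym : ∀ (w : Fin n → V) (σ : Equiv.Perm (Fin n)), φ (w ∘ σ) = φ w)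
    (hψsym : ∀ (w : Fin n → V) (σ : Equiv.Perm (Fin n)), ψ (w ∘ σ) = ψ w)
    -- `n`-additivity
    (hφadd : ∀ (w : Fin n → V) (i : Fin n) (x y : V),
      φ (Function.update w i (x + y)) =
        φ (Function.update w i x) + φ (Function.update w i y))
    (hψadd : ∀ (w : Fin n → V) (i : Fin n) (x y : V),
      ψ (Function.update w i (x + y)) =
        ψ (Function.update w i x) + ψ (Function.update w i y))
    -- both forms are characteristic
    (hφchar : p ≠ 0 → p ≤ n → ∀ (u : V) (w : Fin n → V),
      (∀ i : Fin n, (i : ℕ) < p → w i = u) → φ w = 0)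
    (hψchar : p ≠ 0 → p ≤ n → ∀ (u : V) (w : Fin n → V),
      (∀ i : Fin n, (i : ℕ) < p → w i = u) → ψ w = 0)
    -- agreement on pairwise distinct arguments
    (h : ∀ u : Fin n → V, Function.Injective u → φ u = ψ u) :
    φ = ψ := by
  have key := aux_main (F := F) (V := V) (p := p) (n := n)
    (fun w => φ w - ψ w)
    (fun w σ => by
      show φ (w ∘ σ) - ψ (w ∘ σ) = φ w - ψ w
      rw [hφsym w σ, hψsym w σ])
    (fun w i x y => by
      show φ (Function.update w i (x + y)) - ψ (Function.update w i (x + y)) =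
        (φ (Function.update w i x) - ψ (Function.update w i x)) +
          (φ (Function.update w i y) - ψ (Function.update w i y))
      rw [hφadd, hψadd]; ring)
    (fun hp hpn u w hw => by
      show φ w - ψ w = 0
      rw [hφchar hp hpn u w hw, hψchar hp hpn u w hw, sub_zero])
    (fun w hw => by
      show φ w - ψ w = 0
      rw [h w hw, sub_self])
  funext w
  have := key w
  exact sub_eq_zero.mp this
end

section
/- Let F be a field and let f ∈ F[x_1,…,x_d] be the monomial f = x^m = x_1^{m_1}⋯x_d^{m_d} with m ≠ 0. Then for every s ≥ 1, the formal s-th defect satisfies Δ^s f(x_1,…,x_s) = Σ binom(m_1, m_2)·binom(m_2, m_3)⋯binom(m_{s−1}, m_s) · x_1^{m_s}·x_2^{m_{s−1}−m_s}⋯x_s^{m_1−m_2}, where the sum ranges over all chains of multiexponents m = m_1 > m_2 > ⋯ > m_s > 0, each x_i = (x_{i,1},…,x_{i,d}) is a multivariable, x_i^t denotes x_{i,1}^{t_1}⋯x_{i,d}^{t_d}, and binom(m, n) = ∏_{j=1}^d C(m_j, n_j) viewed in F. -/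
open MvPolynomial Finset

/-- The formal `n`-th defect (derived form) of a polynomial `f ∈ F[x_1,…,x_d]`:
`Δ^n f = Σ_{∅ ≠ S ⊆ {1,…,n}} (−1)^{n−|S|} f(Σ_{i∈S} x_{i,1}, …, Σ_{i∈S} x_{i,d})`,
a polynomial in the `n*d` variables `x_{i,j}`. -/
noncomputable def polDefect {F : Type*} [Field F] {d : ℕ} (n : ℕ)
    (f : MvPolynomial (Fin d) F) : MvPolynomial (Fin n × Fin d) F :=
  ∑ S ∈ Finset.univ.powerset.filter (fun S : Finset (Fin n) => S.Nonempty),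
    (-1 : F) ^ (n - S.card) •
      MvPolynomial.aeval (fun j : Fin d => ∑ i ∈ S, MvPolynomial.X (i, j)) f

/-- For multiexponents `a, b ∈ ℕ^d`, `binom(a, b) = ∏_j C(a_j, b_j)`. -/
def multiBinom {d : ℕ} (a b : Fin d →₀ ℕ) : ℕ := ∏ j, (a j).choose (b j)


/-- Telescoping sum of differences. -/
lemma tele_sum (b : ℕ → ℕ) : ∀ s, (∀ i < s, b (i+1) ≤ b i) →
    ∑ i ∈ range s, (b i - b (i+1)) = b 0 - b s := by
  intro s
  induction s with
  | zero => simp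
  | succ t ih =>
    intro h
    rw [Finset.sum_range_succ, ih (fun i hi => h i (by omega))]
    have h1 : b (t+1) ≤ b t := h t (by omega)
    have h2 : b t ≤ b 0 := by
      clear h1 ih
      induction t with
      | zero => rfl
      | succ u ihu => exact le_trans (h u (by omega)) (ihu (fun i hi => h i (by omega)))
    omega

/-- Telescoping product of binomial coefficients. -/
lemma tele_choose : ∀ s : ℕ, ∀ b : ℕ → ℕ, (∀ i < s, b (i+1) ≤ b i) →
    (∏ i ∈ range s, (b i).choose (b (i+1))) *
      ((b s).factorial * ∏ i ∈ range s, (b i - b (i+1)).factorial) = (b 0).factorial := by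
  intro s
  induction s with
  | zero => simp
  | succ t ih =>
    intro b h
    rw [Finset.prod_range_succ', Finset.prod_range_succ']
    have := ih (fun i => b (i+1)) (fun i hi => h (i+1) (by omega))
    have hc : (b 0).choose (b 1) * ((b 0 - b 1).factorial * (b 1).factorial) = (b 0).factorial := by
      have h0 := Nat.choose_mul_factorial_mul_factorial (h 0 (by omega))
      rw [← h0]; ring
    calc (∏ i ∈ range t, (b (i+1)).choose (b (i+1+1))) * (b 0).choose (b 1) *
          ((b (t+1)).factorial * ((∏ i ∈ range t, (b (i+1) - b (i+1+1)).factorial) * (b 0 - b 1).factorial))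
        = ((∏ i ∈ range t, (b (i+1)).choose (b (i+1+1))) *
            ((b (t+1)).factorial * ∏ i ∈ range t, (b (i+1) - b (i+1+1)).factorial)) *
          ((b 0).choose (b 1) * (b 0 - b 1).factorial) := by ring
      _ = (b 1).factorial * ((b 0).choose (b 1) * (b 0 - b 1).factorial) := by rw [this]
      _ = (b 0).factorial := by rw [← hc]; ring

lemma multinomial_eq_prod_choose (s : ℕ) (b : ℕ → ℕ) (hmono : ∀ i < s, b (i+1) ≤ b i)
    (h0 : b s = 0) :
    Nat.multinomial (univ : Finset (Fin s)) (fun k => b (s-1-(k:ℕ)) - b (s-(k:ℕ))) =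
      ∏ i ∈ range s, (b i).choose (b (i+1)) := by
  set ν : Fin s → ℕ := fun k => b (s-1-(k:ℕ)) - b (s-(k:ℕ)) with hν
  have hrefl : ∀ (F : ℕ → ℕ), ∑ k : Fin s, F (s-1-(k:ℕ)) = ∑ i ∈ range s, F i := by
    intro F
    rw [Fin.sum_univ_eq_sum_range (fun k => F (s-1-k)), Finset.sum_range_reflect]
  have hreflP : ∀ (F : ℕ → ℕ), ∏ k : Fin s, F (s-1-(k:ℕ)) = ∏ i ∈ range s, F i := by
    intro F
    rw [Fin.prod_univ_eq_prod_range (fun k => F (s-1-k)), Finset.prod_range_reflect]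
  have hν' : ∀ k : Fin s, ν k = (fun i => b i - b (i+1)) (s-1-(k:ℕ)) := by
    intro ⟨k, hk⟩
    simp only [hν]
    congr 2
    omega
  have hsum : ∑ k : Fin s, ν k = b 0 := by
    rw [Finset.sum_congr rfl (fun k _ => hν' k), hrefl (fun i => b i - b (i+1)),
      tele_sum b s hmono, h0]
    omega
  have hprod : ∏ k : Fin s, (ν k).factorial = ∏ i ∈ range s, (b i - b (i+1)).factorial := by
    rw [Finset.prod_congr rfl (fun k _ => congrArg Nat.factorial (hν' k)),
      hreflP (fun i => (b i - b (i+1)).factorial)]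
  have hspec := Nat.multinomial_spec (univ : Finset (Fin s)) ν
  rw [hsum, hprod] at hspec
  have htel := tele_choose s b hmono
  rw [h0, Nat.factorial_zero, one_mul] at htel
  have hpos : 0 < ∏ i ∈ range s, (b i - b (i+1)).factorial :=
    Finset.prod_pos (fun i _ => Nat.factorial_pos _)
  have : (∏ i ∈ range s, (b i - b (i+1)).factorial) *
      Nat.multinomial (univ : Finset (Fin s)) ν =
      (∏ i ∈ range s, (b i - b (i+1)).factorial) * ∏ i ∈ range s, (b i).choose (b (i+1)) := by
    rw [hspec, ← htel]; ring
  exact Nat.eq_of_mul_eq_mul_left hpos this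

/-- The partial-sum function attached to `ν`. -/
def eFun {s : ℕ} (ν : Fin s → ℕ) (t : ℕ) : ℕ :=
  ∑ k : Fin s, if (k : ℕ) + t < s then ν k else 0

lemma eFun_zero {s : ℕ} (ν : Fin s → ℕ) : eFun ν 0 = ∑ k : Fin s, ν k := by
  unfold eFun
  exact Finset.sum_congr rfl (fun k _ => by simp [k.isLt])

lemma eFun_ge {s : ℕ} (ν : Fin s → ℕ) {t : ℕ} (ht : s ≤ t) : eFun ν t = 0 := by
  unfold eFun
  refine Finset.sum_eq_zero (fun k _ => ?_)
  rw [if_neg (by omega)]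

lemma eFun_succ {s : ℕ} (ν : Fin s → ℕ) {t : ℕ} (ht : t < s) :
    eFun ν t = eFun ν (t+1) + ν ⟨s-1-t, by omega⟩ := by
  unfold eFun
  rw [← Finset.sum_filter, ← Finset.sum_filter]
  have hsplit : (univ : Finset (Fin s)).filter (fun k : Fin s => (k:ℕ) + t < s) =
      insert ⟨s-1-t, by omega⟩ ((univ : Finset (Fin s)).filter (fun k : Fin s => (k:ℕ) + (t+1) < s)) := by
    ext ⟨k, hk⟩
    simp [Fin.ext_iff]
    omega
  rw [hsplit, Finset.sum_insert (by simp; omega)]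
  ring

lemma eFun_antitone {s : ℕ} (ν : Fin s → ℕ) (t : ℕ) : eFun ν (t+1) ≤ eFun ν t := by
  unfold eFun
  refine Finset.sum_le_sum (fun k _ => ?_)
  by_cases h : (k:ℕ) + (t+1) < s
  · rw [if_pos h, if_pos (by omega)]
  · rw [if_neg h]
    exact Nat.zero_le _

lemma eFun_le_zero {s : ℕ} (ν : Fin s → ℕ) (t : ℕ) : eFun ν t ≤ eFun ν 0 := by
  induction t with
  | zero => exact le_rfl
  | succ u ih => exact le_trans (eFun_antitone ν u) ih

lemma inv_tele {s : ℕ} (b : ℕ → ℕ) (hb : ∀ i, b (i+1) ≤ b i) (hbs : b s = 0) :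
    ∀ u t, t + u = s → eFun (fun k : Fin s => b (s-1-(k:ℕ)) - b (s-(k:ℕ))) t = b t := by
  intro u
  induction u with
  | zero =>
    intro t ht
    rw [eFun_ge _ (by omega)]
    have : t = s := by omega
    rw [this, hbs]
  | succ v ih =>
    intro t ht
    rw [eFun_succ _ (show t < s by omega), ih (t+1) (by omega)]
    have h1 : s - 1 - (s - 1 - t) = t := by omega
    have h2 : s - (s - 1 - t) = t + 1 := by omega
    simp only [h1, h2]
    have := hb t
    omega

lemma multinomial_subset_eq {α : Type*} [Fintype α] [DecidableEq α] (S : Finset α) (f : α → ℕ)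
    (hf : ∀ i ∉ S, f i = 0) :
    Nat.multinomial S f = Nat.multinomial (univ : Finset α) f := by
  have hsum : ∑ i ∈ S, f i = ∑ i : α, f i :=
    (Finset.sum_subset (Finset.subset_univ S) (fun i _ hi => hf i hi)).symm ▸ rfl
  have hprod : ∏ i ∈ S, (f i).factorial = ∏ i : α, (f i).factorial :=
    Finset.prod_subset (Finset.subset_univ S) (fun i _ hi => by rw [hf i hi]; rfl)
  have h1 := Nat.multinomial_spec S f
  have h2 := Nat.multinomial_spec (univ : Finset α) f
  rw [hsum, hprod] at h1
  rw [← h2] at h1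
  exact Nat.eq_of_mul_eq_mul_left (Finset.prod_pos (fun i _ => Nat.factorial_pos _)) h1

lemma sum_superset_neg_one {F : Type*} [Field F] {α : Type*} [Fintype α] [DecidableEq α]
    (R : Finset α) (hR : R.Nonempty) :
    ∑ S ∈ (univ : Finset α).powerset.filter (fun S => S.Nonempty ∧ R ⊆ S),
        (-1 : F) ^ (Fintype.card α - S.card) =
      if R = univ then 1 else 0 := by
  have hfe : (univ : Finset α).powerset.filter (fun S => S.Nonempty ∧ R ⊆ S) =
      (univ : Finset α).powerset.filter (fun S => R ⊆ S) := by
    ext S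
    simp only [Finset.mem_filter, Finset.mem_powerset]
    exact ⟨fun ⟨h1, _, h3⟩ => ⟨h1, h3⟩, fun ⟨h1, h3⟩ => ⟨h1, hR.mono h3, h3⟩⟩
  rw [hfe]
  have key : ∑ S ∈ (univ : Finset α).powerset.filter (fun S => R ⊆ S),
      (-1 : F) ^ (Fintype.card α - S.card) =
      ∑ T ∈ (univ \ R).powerset, (-1 : F) ^ (Fintype.card α - (T.card + R.card)) := by
    refine Finset.sum_nbij' (fun S => S \ R) (fun T => T ∪ R) ?_ ?_ ?_ ?_ ?_
    · intro S hS
      simp only [Finset.mem_filter, Finset.mem_powerset] at hS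
      rw [Finset.mem_powerset]
      exact Finset.sdiff_subset_sdiff (Finset.subset_univ S) le_rfl
    · intro T hT
      simp only [Finset.mem_powerset] at hT
      simp only [Finset.mem_filter, Finset.mem_powerset]
      exact ⟨Finset.subset_univ _, Finset.subset_union_right⟩
    · intro S hS
      simp only [Finset.mem_filter, Finset.mem_powerset] at hS
      exact Finset.sdiff_union_of_subset hS.2
    · intro T hT
      simp only [Finset.mem_powerset] at hT
      apply Finset.union_sdiff_cancel_right
      rw [Finset.disjoint_right]
      intro a haR haT
      exact (Finset.mem_sdiff.1 (hT haT)).2 haR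
    · intro S hS
      simp only [Finset.mem_filter, Finset.mem_powerset] at hS
      congr 1
      rw [Finset.card_sdiff_of_subset hS.2]
      have := Finset.card_le_card hS.2
      have := Finset.card_le_card (Finset.subset_univ S)
      rw [Finset.card_univ] at this
      omega
  rw [key]
  set u := Fintype.card α - R.card with hu
  have hcardRle : R.card ≤ Fintype.card α := by
    have := Finset.card_le_card (Finset.subset_univ R)
    rwa [Finset.card_univ] at this
  have hcu : (univ \ R).card = u := by
    rw [Finset.card_sdiff_of_subset (Finset.subset_univ R), Finset.card_univ]
  have hterm : ∀ T ∈ (univ \ R).powerset,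
      (-1 : F) ^ (Fintype.card α - (T.card + R.card)) = (-1 : F) ^ u * (-1 : F) ^ T.card := by
    intro T hT
    have hTle : T.card ≤ u := by
      rw [← hcu]; exact Finset.card_le_card (Finset.mem_powerset.1 hT)
    have h1 : u - T.card + 2 * T.card = u + T.card := by omega
    have h2 : Fintype.card α - (T.card + R.card) = u - T.card := by omega
    rw [h2, ← pow_add, ← h1, pow_add, pow_mul]
    norm_num
  rw [Finset.sum_congr rfl hterm, ← Finset.mul_sum]
  have hz : ∑ T ∈ (univ \ R).powerset, (-1 : F) ^ T.card =
      if (univ \ R : Finset α) = ∅ then 1 else 0 := by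
    have := @Finset.sum_powerset_neg_one_pow_card α _ (univ \ R)
    have hc : ((∑ T ∈ (univ \ R).powerset, (-1 : ℤ) ^ T.card : ℤ) : F) =
        ∑ T ∈ (univ \ R).powerset, (-1 : F) ^ T.card := by push_cast; rfl
    rw [← hc, this]
    split <;> simp
  rw [hz]
  by_cases h : R = univ
  · have : (univ \ R : Finset α) = ∅ := by rw [h]; simp
    rw [if_pos h, if_pos this]
    have hu0 : u = 0 := by rw [hu, h, Finset.card_univ]; omega
    rw [hu0]; simp
  · have : (univ \ R : Finset α) ≠ ∅ := by
      intro he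
      exact h (Finset.eq_univ_of_forall (fun a => by
        by_contra ha
        have : a ∈ univ \ R := Finset.mem_sdiff.2 ⟨Finset.mem_univ a, ha⟩
        rw [he] at this
        exact absurd this (Finset.notMem_empty a)))
    rw [if_neg h, if_neg this, mul_zero]

open MvPolynomial

lemma step_C {F : Type*} [Field F] {d : ℕ} (m : Fin d →₀ ℕ) (hm : m ≠ 0) (s : ℕ) :
    polDefect s (MvPolynomial.monomial m (1 : F)) =
      ∑ μ ∈ (Fintype.piFinset fun j : Fin d =>
          Finset.piAntidiag (univ : Finset (Fin s)) (m j)).filter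
          (fun μ => ∀ i : Fin s, ∃ j, μ j i ≠ 0),
        (∏ j : Fin d, (Nat.multinomial (univ : Finset (Fin s)) (μ j) : F)) •
          ∏ j : Fin d, ∏ i : Fin s,
            (MvPolynomial.X (i, j) : MvPolynomial (Fin s × Fin d) F) ^ (μ j i) := by
  classical
  unfold polDefect
  -- Step A: expand each aeval term as a sum over piFinset
  have haev : ∀ S : Finset (Fin s),
      MvPolynomial.aeval (fun j : Fin d => ∑ i ∈ S, MvPolynomial.X (i, j))
        (MvPolynomial.monomial m (1 : F)) =
      ∑ μ ∈ Fintype.piFinset (fun j : Fin d => Finset.piAntidiag S (m j)),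
        ∏ j : Fin d, ((Nat.multinomial S (μ j) : MvPolynomial (Fin s × Fin d) F) *
          ∏ i ∈ S, (MvPolynomial.X (i, j) : MvPolynomial (Fin s × Fin d) F) ^ (μ j i)) := by
    intro S
    rw [MvPolynomial.aeval_monomial, map_one, one_mul,
      Finsupp.prod_fintype _ _ (fun j => pow_zero _)]
    rw [Finset.prod_congr rfl (fun j _ =>
      Finset.sum_pow_eq_sum_piAntidiag S (fun i : Fin s => MvPolynomial.X (i, j)) (m j))]
    rw [Finset.prod_univ_sum]
  -- notation
  set Muniv := Fintype.piFinset (fun j : Fin d =>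
      Finset.piAntidiag (univ : Finset (Fin s)) (m j)) with hMuniv
  set g : (Fin d → Fin s → ℕ) → MvPolynomial (Fin s × Fin d) F := fun μ =>
    (∏ j : Fin d, (Nat.multinomial (univ : Finset (Fin s)) (μ j) : F)) •
      ∏ j : Fin d, ∏ i : Fin s,
        (MvPolynomial.X (i, j) : MvPolynomial (Fin s × Fin d) F) ^ (μ j i) with hg
  -- Step B: each S-term as a sum over Muniv with an if
  have hSterm : ∀ S ∈ Finset.univ.powerset.filter (fun S : Finset (Fin s) => S.Nonempty),
      ((-1 : F) ^ (s - S.card) •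
        MvPolynomial.aeval (fun j : Fin d => ∑ i ∈ S, MvPolynomial.X (i, j))
          (MvPolynomial.monomial m (1 : F))) =
      ∑ μ ∈ Muniv, (if (∀ j i, μ j i ≠ 0 → i ∈ S) then (-1 : F) ^ (s - S.card) • g μ else 0) := by
    intro S _
    rw [haev S]
    have hset : Fintype.piFinset (fun j : Fin d => Finset.piAntidiag S (m j)) =
        Muniv.filter (fun μ => ∀ j i, μ j i ≠ 0 → i ∈ S) := by
      ext μ
      simp only [Fintype.mem_piFinset, Finset.mem_piAntidiag, Finset.mem_filter, hMuniv]
      constructor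
      · intro h
        refine ⟨fun j => ⟨?_, fun i _ => Finset.mem_univ i⟩, fun j i hi => (h j).2 i hi⟩
        rw [← (h j).1]
        exact (Finset.sum_subset (Finset.subset_univ S)
          (fun i _ hiS => by_contra (fun hne => hiS ((h j).2 i hne)))).symm
      · intro ⟨h1, h2⟩
        refine fun j => ⟨?_, h2 j⟩
        rw [← (h1 j).1]
        exact Finset.sum_subset (Finset.subset_univ S)
          (fun i _ hiS => by_contra (fun hne => hiS (h2 j i hne)))
    have hgS : ∀ μ ∈ Muniv.filter (fun μ => ∀ j i, μ j i ≠ 0 → i ∈ S),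
        (∏ j : Fin d, ((Nat.multinomial S (μ j) : MvPolynomial (Fin s × Fin d) F) *
          ∏ i ∈ S, (MvPolynomial.X (i, j) : MvPolynomial (Fin s × Fin d) F) ^ (μ j i))) = g μ := by
      intro μ hμ
      rw [Finset.mem_filter] at hμ
      obtain ⟨hμM, hsupp⟩ := hμ
      rw [hg]
      simp only [smul_eq_C_mul]
      rw [Finset.prod_mul_distrib]
      congr 1
      · rw [map_prod]
        refine Finset.prod_congr rfl (fun j _ => ?_)
        rw [multinomial_subset_eq S (μ j)
          (fun i hiS => by_contra (fun hne => hiS (hsupp j i hne)))]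
        simp
      · refine Finset.prod_congr rfl (fun j _ => ?_)
        refine (Finset.prod_subset
          (f := fun i : Fin s => (MvPolynomial.X (i, j) : MvPolynomial (Fin s × Fin d) F) ^ (μ j i))
          (Finset.subset_univ S) (fun i _ hiS => ?_))
        have h0 : μ j i = 0 := by_contra (fun hne => hiS (hsupp j i hne))
        simp only [h0, pow_zero]
    rw [hset, Finset.smul_sum, Finset.sum_congr rfl
      (fun μ hμ => congrArg (fun p => (-1:F)^(s - S.card) • p) (hgS μ hμ)), Finset.sum_filter]
  rw [Finset.sum_congr rfl hSterm, Finset.sum_comm]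
  refine Eq.trans ?_ (Finset.sum_filter _ _).symm
  refine Finset.sum_congr rfl (fun μ hμM => ?_)
  -- Step C: inclusion-exclusion over S for fixed μ
  set R : Finset (Fin s) := univ.filter (fun i => ∃ j, μ j i ≠ 0) with hR
  have hcond : ∀ S : Finset (Fin s), (∀ j i, μ j i ≠ 0 → i ∈ S) ↔ R ⊆ S := by
    intro S
    constructor
    · intro h i hi
      rw [hR, Finset.mem_filter] at hi
      obtain ⟨_, j, hj⟩ := hi
      exact h j i hj
    · intro h j i hi
      exact h (by rw [hR, Finset.mem_filter]; exact ⟨Finset.mem_univ i, j, hi⟩)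
  have hRne : R.Nonempty := by
    obtain ⟨j0, hj0⟩ : ∃ j0, m j0 ≠ 0 := by
      by_contra h
      push_neg at h
      exact hm (Finsupp.ext h)
    have hμ0 := (Fintype.mem_piFinset.1 hμM j0)
    rw [Finset.mem_piAntidiag] at hμ0
    obtain ⟨i0, hi0⟩ : ∃ i0, μ j0 i0 ≠ 0 := by
      by_contra h
      push_neg at h
      exact hj0 (by rw [← hμ0.1]; exact Finset.sum_eq_zero (fun i _ => h i))
    exact ⟨i0, by rw [hR, Finset.mem_filter]; exact ⟨Finset.mem_univ i0, j0, hi0⟩⟩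
  have hiff : R = univ ↔ ∀ i : Fin s, ∃ j, μ j i ≠ 0 := by
    rw [hR, Finset.filter_eq_self]
    simp
  calc ∑ S ∈ Finset.univ.powerset.filter (fun S : Finset (Fin s) => S.Nonempty),
        (if (∀ j i, μ j i ≠ 0 → i ∈ S) then (-1 : F) ^ (s - S.card) • g μ else 0)
      = ∑ S ∈ Finset.univ.powerset.filter (fun S : Finset (Fin s) => S.Nonempty),
        (if R ⊆ S then (-1 : F) ^ (s - S.card) • g μ else 0) := by
        exact Finset.sum_congr rfl (fun S _ => if_congr (hcond S) rfl rfl)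
    _ = ∑ S ∈ (Finset.univ.powerset.filter (fun S : Finset (Fin s) => S.Nonempty)).filter
          (fun S => R ⊆ S), (-1 : F) ^ (s - S.card) • g μ := (Finset.sum_filter _ _).symm
    _ = (∑ S ∈ Finset.univ.powerset.filter (fun S : Finset (Fin s) => S.Nonempty ∧ R ⊆ S),
          (-1 : F) ^ (s - S.card)) • g μ := by
        rw [Finset.filter_filter, Finset.sum_smul]
    _ = (if R = univ then (1:F) else 0) • g μ := by
        rw [← sum_superset_neg_one R hRne]
        simp [Fintype.card_fin]
    _ = (if (∀ i : Fin s, ∃ j, μ j i ≠ 0) then g μ else 0) := by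
        by_cases h : R = univ
        · rw [if_pos h, if_pos (hiff.1 h), one_smul]
        · rw [if_neg h, if_neg (fun hh => h (hiff.2 hh)), zero_smul]

noncomputable def toChain {s d : ℕ} (μ : Fin d → Fin s → ℕ) : Fin (s+1) → (Fin d →₀ ℕ) :=
  fun t => Finsupp.equivFunOnFinite.symm (fun j => eFun (μ j) (t : ℕ))

def toMu {s d : ℕ} (c : Fin (s+1) → (Fin d →₀ ℕ)) : Fin d → Fin s → ℕ :=
  fun j k => c ⟨s - 1 - (k : ℕ), Nat.lt_succ_of_le (Nat.le_trans (Nat.sub_le _ _) (Nat.sub_le _ _))⟩ j -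
    c ⟨s - (k : ℕ), Nat.lt_succ_of_le (Nat.sub_le _ _)⟩ j

@[simp] lemma toChain_apply {s d : ℕ} (μ : Fin d → Fin s → ℕ) (t : Fin (s+1)) (j : Fin d) :
    toChain μ t j = eFun (μ j) (t : ℕ) := by
  simp [toChain]

lemma toMu_toChain {s d : ℕ} (μ : Fin d → Fin s → ℕ) : toMu (toChain μ) = μ := by
  funext j k
  have hk := k.isLt
  simp only [toMu, toChain_apply]
  have h1 : eFun (μ j) (s - 1 - (k:ℕ)) = eFun (μ j) (s - 1 - (k:ℕ) + 1) + μ j ⟨s-1-(s-1-(k:ℕ)), by omega⟩ :=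
    eFun_succ (μ j) (by omega)
  have h2 : s - 1 - (k:ℕ) + 1 = s - (k:ℕ) := by omega
  have h3 : (⟨s-1-(s-1-(k:ℕ)), by omega⟩ : Fin s) = k := by
    rw [Fin.ext_iff]; simp; omega
  rw [h2, h3] at h1
  omega

/-- The ℕ-indexed chain attached to `c` at coordinate `j`. -/
def bC {s d : ℕ} (c : Fin (s+1) → (Fin d →₀ ℕ)) (j : Fin d) (t : ℕ) : ℕ :=
  c ⟨min t s, by omega⟩ j

lemma bC_anti {s d : ℕ} {c : Fin (s+1) → (Fin d →₀ ℕ)}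
    (hstrict : ∀ i : Fin s, c i.succ < c i.castSucc) (j : Fin d) :
    ∀ i, bC c j (i+1) ≤ bC c j i := by
  intro i
  by_cases hi : i < s
  · have h := le_of_lt (hstrict ⟨i, hi⟩)
    have h1 : (⟨i, hi⟩ : Fin s).succ = (⟨min (i+1) s, by omega⟩ : Fin (s+1)) := by
      rw [Fin.ext_iff]; simp; omega
    have h2 : (⟨i, hi⟩ : Fin s).castSucc = (⟨min i s, by omega⟩ : Fin (s+1)) := by
      rw [Fin.ext_iff]; simp; omega
    rw [h1, h2] at h
    exact h j
  · unfold bC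
    have he : (⟨min (i+1) s, by omega⟩ : Fin (s+1)) = ⟨min i s, by omega⟩ := by
      rw [Fin.ext_iff]; simp; omega
    rw [he]

lemma bC_le_bC {s d : ℕ} {c : Fin (s+1) → (Fin d →₀ ℕ)}
    (hstrict : ∀ i : Fin s, c i.succ < c i.castSucc) (j : Fin d) (t : ℕ) :
    bC c j t ≤ bC c j 0 := by
  induction t with
  | zero => exact le_rfl
  | succ u ih => exact le_trans (bC_anti hstrict j u) ih

lemma bC_s {s d : ℕ} {c : Fin (s+1) → (Fin d →₀ ℕ)} (hlast : c (Fin.last s) = 0) (j : Fin d) :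
    bC c j s = 0 := by
  unfold bC
  have : (⟨min s s, by omega⟩ : Fin (s+1)) = Fin.last s := by rw [Fin.ext_iff]; simp
  rw [this, hlast]
  rfl

lemma toMu_eq_bC {s d : ℕ} (c : Fin (s+1) → (Fin d →₀ ℕ)) (j : Fin d) (k : Fin s) :
    toMu c j k = (fun i => bC c j i - bC c j (i+1)) (s - 1 - (k:ℕ)) := by
  have hk := k.isLt
  simp only [toMu, bC]
  have h1 : (⟨s - 1 - (k:ℕ), by omega⟩ : Fin (s+1)) = ⟨min (s-1-(k:ℕ)) s, by omega⟩ := by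
    rw [Fin.ext_iff]; simp; omega
  have h2 : (⟨s - (k:ℕ), by omega⟩ : Fin (s+1)) = ⟨min (s-1-(k:ℕ)+1) s, by omega⟩ := by
    rw [Fin.ext_iff]; simp; omega
  rw [h1, h2]

lemma toChain_toMu {s d : ℕ} (c : Fin (s+1) → (Fin d →₀ ℕ))
    (hlast : c (Fin.last s) = 0) (hstrict : ∀ i : Fin s, c i.succ < c i.castSucc) :
    toChain (toMu c) = c := by
  funext t
  ext j
  rw [toChain_apply]
  have hmu : toMu c j = fun k : Fin s => bC c j (s-1-(k:ℕ)) - bC c j (s-(k:ℕ)) := by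
    funext k
    have hk := k.isLt
    rw [toMu_eq_bC]
    simp only
    rw [show s-1-(k:ℕ)+1 = s-(k:ℕ) by omega]
  rw [hmu, inv_tele (bC c j) (bC_anti hstrict j) (bC_s hlast j) (s - (t:ℕ)) (t:ℕ) (by omega)]
  unfold bC
  have ht : (⟨min (t:ℕ) s, by omega⟩ : Fin (s+1)) = t := by
    rw [Fin.ext_iff]
    simp
    omega
  rw [ht]

/-- the `s`-th defect of the monomial `x^m` (`m ≠ 0`) equals
`Σ binom(m_1,m_2)⋯binom(m_{s−1},m_s) · x_1^{m_s} x_2^{m_{s−1}−m_s} ⋯ x_s^{m_1−m_2}`,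
the sum ranging over all chains of multiexponents `m = m_1 > m_2 > ⋯ > m_s > 0`.
Chains are encoded as functions `c : Fin (s+1) → ℕ^d` with `c 0 = m`, `c s = 0` and
`c` strictly decreasing at each step (so `c i = m_{i+1}` for `i < s`); note that the
extra factor `binom(m_s, 0) = 1` is harmless. -/
theorem polDefect_monomial_eq_sum_over_chains
    {F : Type*} [Field F] {d : ℕ} (m : Fin d →₀ ℕ) (hm : m ≠ 0)
    (s : ℕ) (hs : 1 ≤ s) :
    polDefect s (MvPolynomial.monomial m (1 : F)) =
      ∑ c ∈ (Fintype.piFinset fun _ : Fin (s + 1) => Finset.Iic m).filter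
          (fun c => c 0 = m ∧ c (Fin.last s) = 0 ∧
            ∀ i : Fin s, c i.succ < c i.castSucc),
        (((∏ i : Fin s, multiBinom (c i.castSucc) (c i.succ)) : ℕ) : F) •
          ∏ k : Fin s, ∏ j : Fin d,
            (MvPolynomial.X (k, j) : MvPolynomial (Fin s × Fin d) F) ^
              (c ⟨s - 1 - (k : ℕ), by omega⟩ j - c ⟨s - (k : ℕ), by omega⟩ j) := by
  classical
  rw [step_C m hm s]
  refine Finset.sum_nbij' toChain toMu ?_ ?_ ?_ ?_ ?_
  · -- toChain maps into the chain set
    intro μ hμ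
    rw [Finset.mem_filter] at hμ
    obtain ⟨hμpi, hfull⟩ := hμ
    have hμM : ∀ j, ∑ i : Fin s, μ j i = m j := by
      intro j
      have := Fintype.mem_piFinset.1 hμpi j
      rw [Finset.mem_piAntidiag] at this
      exact this.1
    rw [Finset.mem_filter]
    refine ⟨?_, ?_, ?_, ?_⟩
    · rw [Fintype.mem_piFinset]
      intro t
      rw [Finset.mem_Iic, Finsupp.le_def]
      intro j
      rw [toChain_apply]
      calc eFun (μ j) (t:ℕ) ≤ eFun (μ j) 0 := eFun_le_zero (μ j) (t:ℕ)
        _ = m j := by rw [eFun_zero, hμM]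
    · ext j
      rw [toChain_apply]
      show eFun (μ j) ((0 : Fin (s+1)) : ℕ) = m j
      rw [show ((0 : Fin (s+1)) : ℕ) = 0 from rfl, eFun_zero, hμM]
    · ext j
      rw [toChain_apply, Fin.val_last, eFun_ge (μ j) le_rfl]
      simp
    · intro i
      rw [lt_iff_le_and_ne]
      constructor
      · rw [Finsupp.le_def]
        intro j
        rw [toChain_apply, toChain_apply, Fin.val_succ, Fin.coe_castSucc]
        exact eFun_antitone (μ j) (i : ℕ)
      · intro heq
        obtain ⟨j0, hj0⟩ := hfull ⟨s - 1 - (i:ℕ), by omega⟩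
        have h1 : eFun (μ j0) ((i:ℕ)+1) = eFun (μ j0) (i:ℕ) := by
          have := congrArg (fun f => f j0) heq
          simpa [toChain_apply, Fin.val_succ, Fin.coe_castSucc] using this
        have h2 := eFun_succ (μ j0) i.isLt
        omega
  · -- toMu maps back
    intro c hc
    rw [Finset.mem_filter] at hc
    obtain ⟨_, hc0, hlast, hstrict⟩ := hc
    rw [Finset.mem_filter]
    constructor
    · rw [Fintype.mem_piFinset]
      intro j
      rw [Finset.mem_piAntidiag]
      refine ⟨?_, fun i _ => Finset.mem_univ i⟩
      have h1 : ∑ k : Fin s, toMu c j k =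
          ∑ k : Fin s, (fun i => bC c j i - bC c j (i+1)) (s - 1 - (k:ℕ)) :=
        Finset.sum_congr rfl (fun k _ => toMu_eq_bC c j k)
      rw [h1, Fin.sum_univ_eq_sum_range (fun k => (fun i => bC c j i - bC c j (i+1)) (s-1-k)),
        Finset.sum_range_reflect (fun i => bC c j i - bC c j (i+1)) s,
        tele_sum (bC c j) s (fun i _ => bC_anti hstrict j i),
        bC_s hlast j, Nat.sub_zero]
      show c ⟨min 0 s, by omega⟩ j = m j
      rw [show (⟨min 0 s, by omega⟩ : Fin (s+1)) = 0 by rw [Fin.ext_iff]; simp, hc0]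
    · intro k
      set i : Fin s := ⟨s - 1 - (k:ℕ), by omega⟩ with hi
      have hk := k.isLt
      have hlt := hstrict i
      have hcs : i.castSucc = (⟨s - 1 - (k:ℕ), by omega⟩ : Fin (s+1)) := by
        rw [Fin.ext_iff]; simp [hi]
      have hsc : i.succ = (⟨s - (k:ℕ), by omega⟩ : Fin (s+1)) := by
        rw [Fin.ext_iff]; simp [hi]; omega
      rw [hcs, hsc] at hlt
      obtain ⟨j0, hj0⟩ : ∃ j0, c ⟨s - (k:ℕ), by omega⟩ j0 ≠ c ⟨s - 1 - (k:ℕ), by omega⟩ j0 := by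
        by_contra h
        push_neg at h
        exact absurd (Finsupp.ext h) (ne_of_lt hlt)
      refine ⟨j0, ?_⟩
      have hle := Finsupp.le_def.1 (le_of_lt hlt) j0
      show c ⟨s - 1 - (k:ℕ), by omega⟩ j0 - c ⟨s - (k:ℕ), by omega⟩ j0 ≠ 0
      omega
  · intro μ _
    exact toMu_toChain μ
  · intro c hc
    rw [Finset.mem_filter] at hc
    exact toChain_toMu c hc.2.2.1 hc.2.2.2
  · -- term equality
    intro μ hμ
    have hfe : ∀ (j : Fin d) (k : Fin s),
        eFun (μ j) (s - 1 - (k:ℕ)) - eFun (μ j) (s - (k:ℕ)) = μ j k := by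
      intro j k
      have := congr_fun (congr_fun (toMu_toChain μ) j) k
      simpa [toMu, toChain_apply] using this
    congr 1
    · -- coefficients
      have hnat : (∏ i : Fin s, multiBinom ((toChain μ) i.castSucc) ((toChain μ) i.succ)) =
          ∏ j : Fin d, Nat.multinomial (univ : Finset (Fin s)) (μ j) := by
        unfold multiBinom
        calc ∏ i : Fin s, ∏ j : Fin d,
              (((toChain μ) i.castSucc) j).choose (((toChain μ) i.succ) j)
            = ∏ j : Fin d, ∏ i : Fin s,
              (eFun (μ j) (i:ℕ)).choose (eFun (μ j) ((i:ℕ)+1)) := by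
              rw [Finset.prod_comm]
              exact Finset.prod_congr rfl (fun j _ => Finset.prod_congr rfl (fun i _ => by
                rw [toChain_apply, toChain_apply, Fin.coe_castSucc, Fin.val_succ]))
          _ = ∏ j : Fin d, Nat.multinomial (univ : Finset (Fin s)) (μ j) := by
              refine Finset.prod_congr rfl (fun j _ => ?_)
              rw [Fin.prod_univ_eq_prod_range (fun i => (eFun (μ j) i).choose (eFun (μ j) (i+1)))]
              rw [← multinomial_eq_prod_choose s (eFun (μ j))
                (fun i _ => eFun_antitone (μ j) i) (eFun_ge (μ j) le_rfl)]
              congr 1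
              funext k
              exact hfe j k
      rw [hnat, Nat.cast_prod]
    · -- monomials
      rw [Finset.prod_comm]
      refine Finset.prod_congr rfl (fun k _ => Finset.prod_congr rfl (fun j _ => ?_))
      congr 1
      show μ j k = (toChain μ) ⟨s - 1 - (k:ℕ), by omega⟩ j - (toChain μ) ⟨s - (k:ℕ), by omega⟩ j
      rw [toChain_apply, toChain_apply]
      exact (hfe j k).symm
end

section
/- Let p be a prime and n a positive integer. Then the maximal length s of a chain of positive integers n = m_1 > m_2 > ⋯ > m_s > 0 such that the binomial coefficient C(m_i, m_{i+1}) is not divisible by p for every 1 ≤ i < s equals ω_p(n), the p-weight of n. -/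
open Finset

section aux
variable {p : ℕ} [hp : Fact p.Prime]

lemma omega_pos {x : ℕ} (hx : 0 < x) : 0 < (Nat.digits p x).sum := by
  induction x using Nat.strong_induction_on with
  | _ x ih =>
    rw [Nat.digits_def' hp.out.one_lt hx, List.sum_cons]
    rcases Nat.eq_zero_or_pos (x % p) with h | h
    · have hdvd : p ∣ x := Nat.dvd_of_mod_eq_zero h
      have hq : 0 < x / p := Nat.div_pos (Nat.le_of_dvd hx hdvd) hp.out.pos
      have := ih (x / p) (Nat.div_lt_self hx hp.out.one_lt) hq
      omega
    · omega

lemma omega_step {a b : ℕ} (hba : b < a) (hnd : ¬ p ∣ a.choose b) :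
    (Nat.digits p b).sum + 1 ≤ (Nat.digits p a).sum := by
  have hv : padicValNat p (a.choose b) = 0 :=
    padicValNat.eq_zero_of_not_dvd hnd
  have hk := sub_one_mul_padicValNat_choose_eq_sub_sum_digits (p := p) hba.le
  rw [hv, mul_zero] at hk
  have h1 : 0 < (Nat.digits p (a - b)).sum := omega_pos (by omega)
  omega

lemma omega_drop {n : ℕ} (hn : 0 < n) :
    ∃ k < n, (Nat.digits p k).sum + 1 = (Nat.digits p n).sum ∧ ¬ p ∣ n.choose k := by
  obtain ⟨v, m, hpm, hmn⟩ : ∃ v m, ¬p ∣ m ∧ p ^ v * m = n :=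
    ⟨_, _, Nat.not_dvd_ordCompl hp.out hn.ne', Nat.ordProj_mul_ordCompl_eq_self n p⟩
  have hb : 1 < p := hp.out.one_lt
  have hm0 : 0 < m := by
    rcases Nat.eq_zero_or_pos m with h | h
    · subst h; simp at hmn; omega
    · exact h
  have hpv : 0 < p ^ v := Nat.pow_pos (by omega)
  have hsum1 : (Nat.digits p 1).sum = 1 := by
    rw [Nat.digits_def' hb one_pos]
    simp [Nat.mod_eq_of_lt hb, Nat.div_eq_of_lt hb]
  have hsub : n - p ^ v * (m - 1) = p ^ v := by
    have h1 : p ^ v * (m - 1) + p ^ v = n := by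
      rw [← hmn, ← Nat.mul_succ]
      congr 1
      omega
    omega
  have hkle : p ^ v * (m - 1) ≤ n := by omega
  have hklt : p ^ v * (m - 1) < n := by omega
  have hdrop : (Nat.digits p (p ^ v * (m - 1))).sum + 1 = (Nat.digits p n).sum := by
    have hsum_n : (Nat.digits p n).sum = (Nat.digits p m).sum := by
      rw [← hmn, Nat.digits_base_pow_mul hb hm0]
      simp
    have hr : 1 ≤ m % p := by
      rcases Nat.eq_zero_or_pos (m % p) with h | h
      · exact absurd (Nat.dvd_of_mod_eq_zero h) hpm
      · omega
    rcases Nat.eq_or_lt_of_le hm0 with h1 | h1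
    · have hm1 : m = 1 := by omega
      subst hm1
      simp [hsum_n, hsum1]
    · have hm1 : 0 < m - 1 := by omega
      have hplt : m % p < p := Nat.mod_lt _ (by omega)
      have hmd := Nat.div_add_mod m p
      have he : m - 1 = p * (m / p) + (m % p - 1) := by omega
      have hlt2 : m % p - 1 < p := by omega
      have hz1 : (m % p - 1) % p = m % p - 1 := Nat.mod_eq_of_lt hlt2
      have hz2 : (m % p - 1) / p = 0 := Nat.div_eq_of_lt hlt2
      have hmod : (m - 1) % p = m % p - 1 := by
        rw [he, Nat.mul_add_mod, hz1]
      have hdiv : (m - 1) / p = m / p := by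
        rw [he, Nat.mul_add_div (by omega), hz2]; omega
      have hsum_k : (Nat.digits p (p ^ v * (m - 1))).sum = (Nat.digits p (m - 1)).sum := by
        rw [Nat.digits_base_pow_mul hb hm1]; simp
      rw [hsum_k, hsum_n, Nat.digits_def' hb hm0, Nat.digits_def' hb hm1,
        List.sum_cons, List.sum_cons, hmod, hdiv]
      omega
  refine ⟨p ^ v * (m - 1), hklt, hdrop, ?_⟩
  intro hdvd
  have hk := sub_one_mul_padicValNat_choose_eq_sub_sum_digits (p := p) hkle
  have hsumpv : (Nat.digits p (p ^ v)).sum = 1 := by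
    rw [show p ^ v = p ^ v * 1 by ring, Nat.digits_base_pow_mul hb one_pos]
    simp [hsum1]
  rw [hsub, hsumpv] at hk
  have hne : n.choose (p ^ v * (m - 1)) ≠ 0 := (Nat.choose_pos hkle).ne'
  have hv1 : 1 ≤ padicValNat p (n.choose (p ^ v * (m - 1))) :=
    one_le_padicValNat_of_dvd hne hdvd
  rw [hdrop, Nat.sub_self] at hk
  rcases Nat.mul_eq_zero.mp hk with h | h <;> omega

include hp in
lemma chain_exists : ∀ t n : ℕ, (Nat.digits p n).sum = t →
    ∃ c : Fin (t + 1) → ℕ, c 0 = n ∧ c (Fin.last t) = 0 ∧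
      (∀ i : Fin t, c i.succ < c i.castSucc) ∧
      (∀ i : Fin t, ¬ p ∣ (c i.castSucc).choose (c i.succ)) := by
  intro t
  induction t with
  | zero =>
    intro n hn
    have hn0 : n = 0 := by
      by_contra h
      have := omega_pos (p := p) (Nat.pos_of_ne_zero h)
      omega
    exact ⟨fun _ => 0, by simp [hn0], by simp, fun i => i.elim0, fun i => i.elim0⟩
  | succ t ih =>
    intro n hn
    have hn0 : 0 < n := by
      by_contra h
      have : n = 0 := by omega
      simp [this] at hn
    obtain ⟨k, hk, hsum, hnd⟩ := omega_drop (p := p) hn0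
    obtain ⟨c', hc0, hclast, hdec, hndvd⟩ := ih k (by omega)
    refine ⟨Fin.cons n c', by simp, ?_, ?_, ?_⟩
    · rw [show (Fin.last (t + 1)) = (Fin.last t).succ from rfl, Fin.cons_succ]
      exact hclast
    · intro i
      induction i using Fin.cases with
      | zero => simpa [hc0] using hk
      | succ j =>
        rw [show (Fin.succ j).castSucc = (j.castSucc).succ from rfl,
          Fin.cons_succ, Fin.cons_succ]
        exact hdec j
    · intro i
      induction i using Fin.cases with
      | zero => simpa [hc0] using hnd
      | succ j =>
        rw [show (Fin.succ j).castSucc = (j.castSucc).succ from rfl,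
          Fin.cons_succ, Fin.cons_succ]
        exact hndvd j

include hp in
lemma chain_bound {s : ℕ} (c : Fin (s + 1) → ℕ) (hlast : c (Fin.last s) = 0)
    (hdec : ∀ i : Fin s, c i.succ < c i.castSucc)
    (hndvd : ∀ i : Fin s, ¬ p ∣ (c i.castSucc).choose (c i.succ)) :
    s ≤ (Nat.digits p (c 0)).sum := by
  have key : ∀ j : ℕ, j ≤ s →
      j ≤ (Nat.digits p (c ⟨s - j, Nat.lt_succ_of_le (Nat.sub_le s j)⟩)).sum := by
    intro j
    induction j with
    | zero => intro _; omega
    | succ j ihj =>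
      intro h
      have hj := ihj (by omega)
      have hh : s - (j + 1) < s := by omega
      have hstep := omega_step (p := p) (hdec ⟨s - (j + 1), hh⟩) (hndvd ⟨s - (j + 1), hh⟩)
      have e1 : (⟨s - (j + 1), hh⟩ : Fin s).succ
          = (⟨s - j, Nat.lt_succ_of_le (Nat.sub_le s j)⟩ : Fin (s + 1)) := by
        apply Fin.ext
        simp [Fin.val_succ]
        omega
      have e2 : (⟨s - (j + 1), hh⟩ : Fin s).castSucc
          = (⟨s - (j + 1), Nat.lt_succ_of_le (Nat.sub_le s (j + 1))⟩ : Fin (s + 1)) := rfl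
      rw [e1, e2] at hstep
      omega
  have h0 := key s le_rfl
  have e0 : (⟨s - s, Nat.lt_succ_of_le (Nat.sub_le s s)⟩ : Fin (s + 1)) = 0 := by
    apply Fin.ext; simp
  rwa [e0] at h0
end aux

/-- for a prime `p` and a positive integer `n`, the maximal length `s` of a
chain of positive integers `n = m_1 > m_2 > ⋯ > m_s > 0` with `p ∤ C(m_i, m_{i+1})` for
all `1 ≤ i < s` equals the `p`-weight `ω_p(n)`, the sum of the base-`p` digits of `n`.
Chains are encoded as functions `c : Fin (s+1) → ℕ` with `c 0 = n` and `c s = 0`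
(the extra binomial `C(m_s, 0) = 1` is never divisible by `p`, so it is harmless). -/
theorem max_pRegular_chain_length_eq_pWeight
    (p : ℕ) (hp : p.Prime) (n : ℕ) (hn : 0 < n) :
    IsGreatest
      {s : ℕ | ∃ c : Fin (s + 1) → ℕ, c 0 = n ∧ c (Fin.last s) = 0 ∧
        (∀ i : Fin s, c i.succ < c i.castSucc) ∧
        (∀ i : Fin s, ¬ p ∣ (c i.castSucc).choose (c i.succ))}
      ((Nat.digits p n).sum) := by
  haveI : Fact p.Prime := ⟨hp⟩
  constructor
  · exact chain_exists _ n rfl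
  · rintro s ⟨c, hc0, hclast, hdec, hndvd⟩
    have := chain_bound c hclast hdec hndvd
    rwa [hc0] at this
end
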